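/- arXiv:2510.01949 — 3 statements merged into one kernel-verified Lean document; each statement's English description precedes it below -/
import Mathlib

section
/- Given any 2-configuration, there exists a properly partial red matching M (i.e., a red matching that is not a perfect matching of the vertex set) such that in the reduced configuration of M the two matchings are identical. -/
open scoped Classical

namespace Kotzig

variable {V : Type}

/-- The set of vertices covered by a set of edges. -/
def covered (M : Set (Sym2 V)) : Set V := {v | ∃ e ∈ M, v ∈ e}

/-- A set of unordered pairs of vertices is a matching: its elements are non-loops and
pairwise vertex-disjoint. -/
def IsMatchingE (M : Set (Sym2 V)) : Prop :=
  (∀ e ∈ M, ¬ e.IsDiag) ∧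
    ∀ e ∈ M, ∀ f ∈ M, e ≠ f → ∀ v : V, v ∈ e → v ∉ f

/-- A perfect matching on the vertex set `V`. -/
def IsPerfectMatchingE (M : Set (Sym2 V)) : Prop :=
  IsMatchingE M ∧ ∀ v : V, v ∈ covered M

/-- `M ∪ M'` forms a Hamilton cycle. -/
def UnionHam [Fintype V] (M M' : Set (Sym2 V)) : Prop :=
  (SimpleGraph.fromEdgeSet (M ∪ M')).IsHamiltonian

/-- A `k`-configuration: `k` perfect matchings (colours) on a common vertex set. -/
def IsConfig {k : ℕ} (Mc : Fin k → Set (Sym2 V)) : Prop :=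
  ∀ i, IsPerfectMatchingE (Mc i)

/-- A pair of vertices forms an available edge if it is an edge of none of the matchings. -/
def Available {k : ℕ} (Mc : Fin k → Set (Sym2 V)) (e : Sym2 V) : Prop :=
  ¬ e.IsDiag ∧ ∀ i, e ∉ Mc i

/-- A (partial) red matching of a configuration: a matching of available edges whose union
with each colour contains no cycle. -/
def IsRedMatching {k : ℕ} (Mc : Fin k → Set (Sym2 V)) (M : Set (Sym2 V)) : Prop :=
  IsMatchingE M ∧ (∀ e ∈ M, Available Mc e) ∧
    ∀ i, (SimpleGraph.fromEdgeSet (M ∪ Mc i)).IsAcyclic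

/-- A red perfect matching: a perfect matching forming a Hamilton cycle with each colour. -/
def IsRedPerfectMatching [Fintype V] {k : ℕ} (Mc : Fin k → Set (Sym2 V))
    (M : Set (Sym2 V)) : Prop :=
  IsPerfectMatchingE M ∧ ∀ i, UnionHam M (Mc i)

/-- The colour-`i` matching of the reduced configuration of the red matching `M`, where `Mi`
is the colour-`i` matching: two distinct vertices uncovered by `M` are joined precisely when
the maximal path alternating between `Mi` and `M` starting at one ends at the other,
equivalently (as `M ∪ Mi` is an acyclic union of a matching and a perfect matching)
when they lie in the same connected component of `Mi ∪ M`. -/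
def reducedColour (Mi M : Set (Sym2 V)) : Set (Sym2 V) :=
  {e | ∃ u v : V, e = s(u, v) ∧ u ≠ v ∧ u ∉ covered M ∧ v ∉ covered M ∧
    (SimpleGraph.fromEdgeSet (Mi ∪ M)).Reachable u v}

/-- The total overlap of a configuration: `Σ_{i ≠ j} |M_i ∩ M_j|` over ordered pairs. -/
noncomputable def totalOverlap {k : ℕ} (Mc : Fin k → Set (Sym2 V)) : ℕ :=
  ∑ i : Fin k, ∑ j : Fin k, if i ≠ j then (Mc i ∩ Mc j).ncard else 0

/-- The total overlap of the reduced configuration of the red matching `M`. -/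
noncomputable def reducedOverlap {k : ℕ} (Mc : Fin k → Set (Sym2 V)) (M : Set (Sym2 V)) : ℕ :=
  totalOverlap (fun i => reducedColour (Mc i) M)



section Aux
open SimpleGraph

variable {H : SimpleGraph V}

lemma first_hit {S : Set V} : ∀ {a b : V} (q : H.Walk a b), a ∉ S → b ∈ S →
    ∃ x m, H.Adj x m ∧ x ∉ S ∧ m ∈ S := by
  intro a b q
  induction q with
  | nil => intro h1 h2; exact absurd h2 h1
  | @cons a c b h' q ih =>
    intro h1 h2
    by_cases hc : c ∈ S
    · exact ⟨a, c, h', h1, hc⟩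
    · exact ih hc h2

lemma end_nbr {v w : V} (p : H.Walk v w) (h : v ≠ w) : ∃ c, H.Adj v c ∧ c ∈ p.support := by
  cases p with
  | nil => exact absurd rfl h
  | cons h' q => exact ⟨_, h', by simp [Walk.start_mem_support]⟩

lemma interior_two {v w m : V} (p : H.Walk v w) (hp : p.IsPath) (hm : m ∈ p.support)
    (hmv : m ≠ v) (hmw : m ≠ w) :
    ∃ a b, H.Adj m a ∧ H.Adj m b ∧ a ≠ b ∧ a ∈ p.support ∧ b ∈ p.support := by
  set t := p.takeUntil m hm with ht
  set r := p.dropUntil m hm with hr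
  obtain ⟨b, hbadj, hbmem⟩ := end_nbr r hmw
  obtain ⟨a, haadj, hamem'⟩ := end_nbr t.reverse hmv
  have hamem : a ∈ t.support := by rwa [Walk.support_reverse, List.mem_reverse] at hamem'
  have hspec : t.append r = p := Walk.take_spec p hm
  have hnodup : (t.append r).support.Nodup := by rw [hspec]; exact hp.support_nodup
  rw [Walk.support_append] at hnodup
  have hdisj := List.disjoint_of_nodup_append hnodup
  have hab : a ≠ b := by
    intro hEq
    subst hEq
    apply hdisj hamem
    have hcons : r.support = m :: r.support.tail := r.support_eq_cons
    rw [hcons] at hbmem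
    rcases List.mem_cons.mp hbmem with h1 | h1
    · exact absurd h1.symm haadj.ne
    · exact h1
  exact ⟨a, b, haadj, hbadj, hab,
    Walk.support_takeUntil_subset p hm hamem,
    Walk.support_dropUntil_subset p hm hbmem⟩


lemma chord_decomp (hA : H.IsAcyclic) {v b : V} (p : H.Walk v b) (hp : p.IsPath)
    {z : V} (hz : z ∈ p.support) (az : H.Adj b z) :
    ∃ t : H.Walk v z, p.reverse = Walk.cons az t.reverse := by
  set r := p.dropUntil z hz with hrdef
  have hrp : r.IsPath := hp.dropUntil hz
  have hsingle : (⟨r, hrp⟩ : H.Path z b) = Path.singleton az.symm := hA.path_unique _ _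
  have hr : r = Walk.cons az.symm Walk.nil := congrArg Subtype.val hsingle
  refine ⟨p.takeUntil z hz, ?_⟩
  conv_lhs => rw [← Walk.take_spec p hz]
  rw [Walk.reverse_append, ← hrdef, hr]
  simp

lemma chord_unique (hA : H.IsAcyclic) {v b : V} (p : H.Walk v b) (hp : p.IsPath)
    {z1 z2 : V} (h1 : z1 ∈ p.support) (h2 : z2 ∈ p.support)
    (a1 : H.Adj b z1) (a2 : H.Adj b z2) : z1 = z2 := by
  obtain ⟨t1, e1⟩ := chord_decomp hA p hp h1 a1
  obtain ⟨t2, e2⟩ := chord_decomp hA p hp h2 a2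
  have he : Walk.cons a1 t1.reverse = Walk.cons a2 t2.reverse := e1.symm.trans e2
  have hsup := congrArg Walk.support he
  rw [Walk.support_cons, Walk.support_cons] at hsup
  have hsup2 : t1.reverse.support = t2.reverse.support := by
    injection hsup
  rw [t1.reverse.support_eq_cons, t2.reverse.support_eq_cons] at hsup2
  injection hsup2

lemma no_two_reg [Fintype V] (hA : H.IsAcyclic) (f g : V → V)
    (hf : ∀ x, H.Adj x (f x)) (hg : ∀ x, H.Adj x (g x)) (hfg : ∀ x, f x ≠ g x)
    (v0 : V) : False := by
  have claim : ∀ n, ∃ (b : V) (p : H.Walk v0 b), p.IsPath ∧ p.length = n := by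
    intro n
    induction n with
    | zero => exact ⟨v0, Walk.nil, by simp, rfl⟩
    | succ n ih =>
      obtain ⟨b, p, hp, hl⟩ := ih
      have ext : ∀ z, H.Adj b z → z ∉ p.support →
          ∃ (b' : V) (p' : H.Walk v0 b'), p'.IsPath ∧ p'.length = n + 1 := by
        intro z hz hzs
        refine ⟨z, (Walk.cons hz.symm p.reverse).reverse, ?_, ?_⟩
        · rw [Walk.isPath_reverse_iff, Walk.cons_isPath_iff]
          exact ⟨hp.reverse, by rwa [Walk.support_reverse, List.mem_reverse]⟩
        · simp [hl]
      by_cases hfb : f b ∈ p.support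
      · by_cases hgb : g b ∈ p.support
        · exact absurd (chord_unique hA p hp hfb hgb (hf b) (hg b)) (hfg b)
        · exact ext (g b) (hg b) hgb
      · exact ext (f b) (hf b) hfb
  obtain ⟨b, p, hp, hl⟩ := claim (Fintype.card V)
  have := hp.length_lt
  omega


lemma partner_unique {N : Set (Sym2 V)} (hN : IsMatchingE N) {x y z : V}
    (h1 : s(x,y) ∈ N) (h2 : s(x,z) ∈ N) : y = z := by
  by_cases he : (s(x,y) : Sym2 V) = s(x,z)
  · exact Sym2.congr_right.mp he
  · exact absurd (Sym2.mem_mk_left x z) (hN.2 _ h1 _ h2 he x (Sym2.mem_mk_left x y))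

lemma mem_partner {N : Set (Sym2 V)} (hN : IsMatchingE N) {x : V}
    (hx : x ∈ covered N) : ∃ y, s(x,y) ∈ N ∧ y ≠ x := by
  obtain ⟨e, heN, hxe⟩ := hx
  induction e with
  | _ a b =>
    rcases Sym2.mem_iff.mp hxe with rfl | rfl
    · exact ⟨b, heN, fun h => hN.1 _ heN (by simp [h, Sym2.mk_isDiag_iff])⟩
    · exact ⟨a, by rwa [Sym2.eq_swap], fun h => hN.1 _ heN (by simp [h, Sym2.mk_isDiag_iff])⟩

lemma even_ncard_invol {α : Type} (f : α → α) :
    ∀ (n : ℕ) (S : Set α), S.Finite → S.ncard = n → (∀ x ∈ S, f x ∈ S) →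
      (∀ x ∈ S, f (f x) = x) → (∀ x ∈ S, f x ≠ x) → Even n := by
  intro n
  induction n using Nat.strong_induction_on with
  | _ n ih =>
    intro S hS hcard hf hff hne
    rcases Nat.eq_zero_or_pos n with rfl | hpos
    · exact Even.zero
    · have hSne : S.Nonempty := Set.nonempty_of_ncard_ne_zero (by omega)
      obtain ⟨x, hx⟩ := hSne
      have hfx := hf x hx
      have hxfx : f x ≠ x := hne x hx
      have hsub : {x, f x} ⊆ S := by
        intro y hy; rcases hy with rfl | hy
        · exact hx
        · simp only [Set.mem_singleton_iff] at hy; exact hy ▸ hfx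
      have hpair : ({x, f x} : Set α).ncard = 2 := Set.ncard_pair (Ne.symm hxfx)
      have h2n : 2 ≤ n := by
        rw [← hcard, ← hpair]; exact Set.ncard_le_ncard hsub hS
      set T := S \ {x, f x} with hT
      have hTsub : T ⊆ S := Set.diff_subset
      have hTfin : T.Finite := hS.subset hTsub
      have hTcard : T.ncard = n - 2 := by
        rw [hT, Set.ncard_diff hsub (Set.toFinite _), hcard, hpair]
      have hmemT : ∀ y ∈ T, f y ∈ T := by
        rintro y ⟨hyS, hy2⟩
        refine ⟨hf y hyS, ?_⟩
        simp only [Set.mem_insert_iff, Set.mem_singleton_iff] at hy2 ⊢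
        push_neg at hy2 ⊢
        constructor
        · intro h; exact hy2.2 (by rw [← hff y hyS, h])
        · intro h
          have := congrArg f h
          rw [hff y hyS, hff x hx] at this
          exact hy2.1 this
      have : Even (n-2) := ih (n-2) (by omega) T hTfin hTcard hmemT
        (fun y hy => hff y (hTsub hy)) (fun y hy => hne y (hTsub hy))
      obtain ⟨r, hr⟩ := this
      exact ⟨r + 1, by omega⟩


section TwoColours

variable {B M : Set (Sym2 V)}

lemma matching_acyclic {N : Set (Sym2 V)} (hN : IsMatchingE N) :
    (fromEdgeSet N).IsAcyclic := by
  rw [isAcyclic_iff_forall_adj_isBridge]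
  intro v w hadj
  rw [isBridge_iff]
  rintro ⟨p⟩
  obtain ⟨hvw, hne⟩ := (fromEdgeSet_adj _).mp hadj
  cases p with
  | nil => exact hne rfl
  | cons h' q =>
    rename_i c
    obtain ⟨h1, h2⟩ := h'
    obtain ⟨hz, hzne⟩ := (fromEdgeSet_adj _).mp h1
    have : c = w := partner_unique hN hz hvw
    subst this
    exact h2 ((fromEdgeSet_adj _).mpr ⟨rfl, hzne⟩)

lemma acyclic_sup_edge (G : SimpleGraph V) (hG : G.IsAcyclic) {u x : V} (hux : u ≠ x)
    (hr : ¬ G.Reachable u x) : (G ⊔ edge u x).IsAcyclic := by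
  intro a c hc
  by_cases he : s(u,x) ∈ c.edges
  · apply hr
    have h1 := adj_and_reachable_delete_edges_iff_exists_cycle.mpr ⟨a, c, hc, he⟩
    refine h1.2.mono ?_
    intro a b hab
    rw [deleteEdges_adj] at hab
    obtain ⟨hab1, hab2⟩ := hab
    rcases hab1 with h | h
    · exact h
    · exfalso
      apply hab2
      refine (?_ : _ ∧ a ≠ b).1
      obtain ⟨h3, h4⟩ := (edge_adj u x a b).mp h
      refine ⟨?_, h4⟩
      rcases h3 with ⟨rfl, rfl⟩ | ⟨rfl, rfl⟩
      · rfl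
      · exact Sym2.eq_swap
  · refine hG (c.transfer G ?_) (hc.transfer _)
    intro e' he'
    have hmem := c.edges_subset_edgeSet he'
    rw [edgeSet_sup, edge_edgeSet_of_ne hux] at hmem
    rcases hmem with h | h
    · exact h
    · exact absurd (Set.mem_singleton_iff.mp h ▸ he') he  -- e' = s(u,x)


lemma fromEdgeSet_insert_eq (S : Set (Sym2 V)) (a b : V) :
    fromEdgeSet (insert s(a,b) S) = fromEdgeSet S ⊔ edge a b := by
  ext c d
  rw [fromEdgeSet_adj, sup_adj, fromEdgeSet_adj, edge_adj]
  constructor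
  · rintro ⟨h1, h2⟩
    rcases h1 with h1 | h1
    · exact Or.inr ⟨Sym2.eq_iff.mp h1, h2⟩
    · exact Or.inl ⟨h1, h2⟩
  · rintro (⟨h1, h2⟩ | ⟨h1, h2⟩)
    · exact ⟨Or.inr h1, h2⟩
    · exact ⟨Or.inl (Sym2.eq_iff.mpr h1), h2⟩


/-- three distinct neighbours in `M ∪ B` are impossible -/
lemma three_nbrs (hB : IsMatchingE B) (hM : IsMatchingE M) {m x a b : V}
    (hx : (fromEdgeSet (M ∪ B)).Adj m x) (ha : (fromEdgeSet (M ∪ B)).Adj m a)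
    (hb : (fromEdgeSet (M ∪ B)).Adj m b)
    (hxa : x ≠ a) (hxb : x ≠ b) (hab : a ≠ b) : False := by
  obtain ⟨h1, -⟩ := (fromEdgeSet_adj _).mp hx
  obtain ⟨h2, -⟩ := (fromEdgeSet_adj _).mp ha
  obtain ⟨h3, -⟩ := (fromEdgeSet_adj _).mp hb
  rcases h1 with h1 | h1 <;> rcases h2 with h2 | h2 <;> rcases h3 with h3 | h3 <;>
    first
      | exact hxa (partner_unique hM h1 h2)
      | exact hxb (partner_unique hM h1 h3)
      | exact hab (partner_unique hM h2 h3)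
      | exact hxa (partner_unique hB h1 h2)
      | exact hxb (partner_unique hB h1 h3)
      | exact hab (partner_unique hB h2 h3)

/-- a vertex uncovered by `M` has at most one neighbour in `M ∪ B` -/
lemma leaf_unique (hB : IsMatchingE B) {u y z : V} (hu : u ∉ covered M)
    (h1 : (fromEdgeSet (M ∪ B)).Adj u y) (h2 : (fromEdgeSet (M ∪ B)).Adj u z) : y = z := by
  obtain ⟨hy, -⟩ := (fromEdgeSet_adj _).mp h1
  obtain ⟨hz, -⟩ := (fromEdgeSet_adj _).mp h2
  rcases hy with hy | hy
  · exact absurd ⟨_, hy, Sym2.mem_mk_left u y⟩ hu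
  rcases hz with hz | hz
  · exact absurd ⟨_, hz, Sym2.mem_mk_left u z⟩ hu
  exact partner_unique hB hy hz


variable [Fintype V]

/-- every uncovered vertex has an uncovered reachable partner -/
lemma exists_partnerU (hB : IsPerfectMatchingE B) (hM : IsMatchingE M) {u : V}
    (hu : u ∉ covered M) :
    ∃ w, w ∉ covered M ∧ w ≠ u ∧ (fromEdgeSet (M ∪ B)).Reachable u w := by
  by_contra hcon
  push_neg at hcon
  choose f hf1 hf2 using fun x : V => mem_partner hB.1 (hB.2 x)
  have hg : ∀ x : V, ∃ y, x ∈ covered M → s(x,y) ∈ M ∧ y ≠ x := by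
    intro x
    by_cases hx : x ∈ covered M
    · obtain ⟨y, hy⟩ := mem_partner hM hx
      exact ⟨y, fun _ => hy⟩
    · exact ⟨x, fun h => absurd h hx⟩
  choose g hgspec using hg
  set S : Set V := {x | (fromEdgeSet (M ∪ B)).Reachable u x} with hS
  have hadjf : ∀ x, (fromEdgeSet (M ∪ B)).Adj x (f x) :=
    fun x => (fromEdgeSet_adj _).mpr ⟨Or.inr (hf1 x), (hf2 x).symm⟩
  have hfS : ∀ x ∈ S, f x ∈ S := fun x hx => hx.trans (hadjf x).reachable
  have hfinv : ∀ x ∈ S, f (f x) = x := by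
    intro x _
    exact partner_unique hB.1 (hf1 (f x)) (Sym2.eq_swap ▸ hf1 x)
  have hEven1 : Even S.ncard :=
    even_ncard_invol f S.ncard S (Set.toFinite _) rfl hfS hfinv (fun x _ => hf2 x)
  have hcov : ∀ x ∈ S, x ≠ u → x ∈ covered M := by
    intro x hx hxu
    by_contra hxc
    exact hcon x hxc hxu hx
  set S' : Set V := S \ {u} with hS'
  have hgmem : ∀ x ∈ S', g x ∈ S' := by
    rintro x ⟨hxS, hxu⟩
    obtain ⟨hgx1, hgx2⟩ := hgspec x (hcov x hxS hxu)
    have hadj : (fromEdgeSet (M ∪ B)).Adj x (g x) :=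
      (fromEdgeSet_adj _).mpr ⟨Or.inl hgx1, hgx2.symm⟩
    refine ⟨hxS.trans hadj.reachable, ?_⟩
    intro hgu
    apply hu
    rw [Set.mem_singleton_iff] at hgu
    rw [← hgu]
    exact ⟨_, hgx1, Sym2.mem_mk_right x (g x)⟩
  have hginv : ∀ x ∈ S', g (g x) = x := by
    rintro x ⟨hxS, hxu⟩
    obtain ⟨hgx1, hgx2⟩ := hgspec x (hcov x hxS hxu)
    have hgcov : g x ∈ covered M := ⟨_, hgx1, Sym2.mem_mk_right x (g x)⟩
    obtain ⟨hggx1, -⟩ := hgspec (g x) hgcov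
    exact partner_unique hM hggx1 (Sym2.eq_swap ▸ hgx1)
  have hgne : ∀ x ∈ S', g x ≠ x := by
    rintro x ⟨hxS, hxu⟩
    exact (hgspec x (hcov x hxS hxu)).2
  have hEven2 : Even S'.ncard :=
    even_ncard_invol g S'.ncard S' (Set.toFinite _) rfl hgmem hginv hgne
  have huS : u ∈ S := Reachable.refl u
  have hcard : S'.ncard = S.ncard - 1 := Set.ncard_diff_singleton_of_mem huS
  have hpos : 0 < S.ncard := (Set.ncard_pos (Set.toFinite _)).mpr ⟨u, huS⟩
  obtain ⟨r1, h1⟩ := hEven1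
  obtain ⟨r2, h2⟩ := hEven2
  omega


/-- the uncovered reachable partner is unique (acyclicity) -/
lemma uniq_partnerU (hB : IsPerfectMatchingE B) (hM : IsMatchingE M)
    (hA : (fromEdgeSet (M ∪ B)).IsAcyclic) {u v w : V}
    (hu : u ∉ covered M) (hv : v ∉ covered M) (hw : w ∉ covered M)
    (hvu : v ≠ u) (hwu : w ≠ u)
    (Ruv : (fromEdgeSet (M ∪ B)).Reachable u v)
    (Ruw : (fromEdgeSet (M ∪ B)).Reachable u w) : v = w := by
  by_contra hvw
  obtain ⟨q0⟩ := Ruv.symm.trans Ruw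
  set pp : (fromEdgeSet (M ∪ B)).Walk v w := q0.toPath.val with hppdef
  have hp : pp.IsPath := q0.toPath.property
  have hup : u ∉ pp.support := by
    intro hmem
    obtain ⟨a, b, ha, hb, hab, -, -⟩ := interior_two pp hp hmem hvu.symm hwu.symm
    exact hab (leaf_unique hB.1 hu ha hb)
  obtain ⟨q1⟩ := Ruv
  obtain ⟨x, m, hadj, hx, hm⟩ :=
    first_hit (S := {y | y ∈ pp.support}) q1 hup pp.start_mem_support
  by_cases hmv : m = v
  · subst hmv
    obtain ⟨c, hc, hcs⟩ := end_nbr pp hvw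
    exact hx ((leaf_unique hB.1 hv hadj.symm hc) ▸ hcs)
  by_cases hmw : m = w
  · subst hmw
    obtain ⟨c, hc, hcs⟩ := end_nbr pp.reverse (Ne.symm hvw)
    rw [Walk.support_reverse, List.mem_reverse] at hcs
    exact hx ((leaf_unique hB.1 hw hadj.symm hc) ▸ hcs)
  · obtain ⟨a, b, ha, hb, hab, hams, hbms⟩ := interior_two pp hp hm hmv hmw
    exact three_nbrs hB.1 hM hadj.symm ha hb
      (fun h => hx (h ▸ hams)) (fun h => hx (h ▸ hbms)) hab

/-- the key step: with a maximal red matching, blue reachability between uncovered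
vertices implies green reachability. -/
lemma key_step {G : Set (Sym2 V)} (hB : IsPerfectMatchingE B) (hG : IsPerfectMatchingE G)
    (hM : IsMatchingE M)
    (hAB : (fromEdgeSet (M ∪ B)).IsAcyclic)
    (hmax : ∀ a b : V, a ∉ covered M → b ∉ covered M → a ≠ b →
      (fromEdgeSet (M ∪ B)).Reachable a b ∨ (fromEdgeSet (M ∪ G)).Reachable a b)
    {u v : V} (hu : u ∉ covered M) (hv : v ∉ covered M) (huv : u ≠ v)
    (hR : (fromEdgeSet (M ∪ B)).Reachable u v) :
    (fromEdgeSet (M ∪ G)).Reachable u v := by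
  by_contra hng
  obtain ⟨w, hwU, hwu, hRGuw⟩ := exists_partnerU hG hM hu
  have hwv : w ≠ v := by rintro rfl; exact hng hRGuw
  obtain ⟨y, hyU, hyv, hRGvy⟩ := exists_partnerU hG hM hv
  by_cases hyu : y = u
  · subst hyu; exact hng hRGvy.symm
  by_cases hyw : y = w
  · subst hyw; exact hng (hRGuw.trans hRGvy.symm)
  · rcases hmax u y hu hyU (Ne.symm hyu) with hBuy | hGuy
    · exact hyv (uniq_partnerU hB hM hAB hu hyU hv hyu (Ne.symm huv) hBuy hR)
    · exact hng (hGuy.trans hRGvy.symm)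

end TwoColours
end Aux

/-- Given any `2`-configuration, there is a properly partial red matching
whose reduced configuration has identical blue and green matchings. -/
theorem two_colours_equalizing (V : Type) [Fintype V] [Nonempty V]
    (Mc : Fin 2 → Set (Sym2 V)) (hMc : IsConfig Mc) :
    ∃ M : Set (Sym2 V), IsRedMatching Mc M ∧ (∃ v : V, v ∉ covered M) ∧
      reducedColour (Mc 0) M = reducedColour (Mc 1) M := by
  classical
  have hRedEmpty : IsRedMatching Mc (∅ : Set (Sym2 V)) := by
    refine ⟨⟨by simp, by simp⟩, by simp, fun i => ?_⟩
    rw [Set.empty_union]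
    exact matching_acyclic (hMc i).1
  obtain ⟨M, hMRed, hMmax⟩ :=
    Set.Finite.exists_maximalFor Set.ncard {N : Set (Sym2 V) | IsRedMatching Mc N}
      (Set.toFinite _) ⟨∅, hRedEmpty⟩
  obtain ⟨hM, hAvail, hAcy⟩ := hMRed
  have hdisj : ∀ i, ∀ e ∈ M, e ∉ Mc i := fun i e he => (hAvail e he).2 i
  -- maximality: any two uncovered vertices are joined in one of the two unions
  have hmax : ∀ a b : V, a ∉ covered M → b ∉ covered M → a ≠ b →
      (SimpleGraph.fromEdgeSet (M ∪ Mc 0)).Reachable a b ∨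
        (SimpleGraph.fromEdgeSet (M ∪ Mc 1)).Reachable a b := by
    intro a b ha hb hab
    by_contra hcon
    push_neg at hcon
    obtain ⟨h0, h1⟩ := hcon
    have hnotM : s(a,b) ∉ M := fun h => ha ⟨_, h, Sym2.mem_mk_left a b⟩
    have hnotc : ∀ i, s(a,b) ∉ Mc i := by
      intro i h
      have hadj : (SimpleGraph.fromEdgeSet (M ∪ Mc i)).Adj a b :=
        (SimpleGraph.fromEdgeSet_adj _).mpr ⟨Or.inr h, hab⟩
      fin_cases i
      · exact h0 hadj.reachable
      · exact h1 hadj.reachable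
    have hred' : IsRedMatching Mc (insert s(a,b) M) := by
      refine ⟨⟨?_, ?_⟩, ?_, ?_⟩
      · intro e he
        rcases Set.mem_insert_iff.mp he with rfl | he
        · rw [Sym2.mk_isDiag_iff]; exact hab
        · exact hM.1 e he
      · intro e he f hf hef v hve hvf
        rcases Set.mem_insert_iff.mp he with rfl | heM
        · rcases Set.mem_insert_iff.mp hf with rfl | hfM
          · exact hef rfl
          · rcases Sym2.mem_iff.mp hve with rfl | rfl
            · exact ha ⟨f, hfM, hvf⟩
            · exact hb ⟨f, hfM, hvf⟩
        · rcases Set.mem_insert_iff.mp hf with rfl | hfM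
          · rcases Sym2.mem_iff.mp hvf with rfl | rfl
            · exact ha ⟨e, heM, hve⟩
            · exact hb ⟨e, heM, hve⟩
          · exact hM.2 e heM f hfM hef v hve hvf
      · intro e he
        rcases Set.mem_insert_iff.mp he with rfl | he
        · exact ⟨by rw [Sym2.mk_isDiag_iff]; exact hab, hnotc⟩
        · exact hAvail e he
      · intro i
        rw [show insert s(a,b) M ∪ Mc i = insert s(a,b) (M ∪ Mc i) from
          Set.insert_union, fromEdgeSet_insert_eq]
        apply acyclic_sup_edge _ (hAcy i) hab
        fin_cases i
        · exact h0
        · exact h1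
    have hcard : M.ncard < (insert s(a,b) M).ncard := by
      rw [Set.ncard_insert_of_notMem hnotM (Set.toFinite M)]
      omega
    have heq := hMmax hred' (le_of_lt hcard)
    omega
  -- there is an uncovered vertex
  have hUne : ∃ v : V, v ∉ covered M := by
    by_contra hcon
    push_neg at hcon
    choose g hg1 hg2 using fun x : V => mem_partner hM (hcon x)
    choose f hf1 hf2 using fun x : V => mem_partner (hMc 0).1 ((hMc 0).2 x)
    refine no_two_reg (H := SimpleGraph.fromEdgeSet (M ∪ Mc 0)) (hAcy 0) g f
      (fun x => (SimpleGraph.fromEdgeSet_adj _).mpr ⟨Or.inl (hg1 x), (hg2 x).symm⟩)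
      (fun x => (SimpleGraph.fromEdgeSet_adj _).mpr ⟨Or.inr (hf1 x), (hf2 x).symm⟩)
      (fun x h => hdisj 0 _ (hg1 x) (by rw [h]; exact hf1 x)) (Classical.arbitrary V)
  -- reachability between uncovered vertices agrees in the two colours
  have hiff : ∀ u v : V, u ∉ covered M → v ∉ covered M → u ≠ v →
      ((SimpleGraph.fromEdgeSet (M ∪ Mc 0)).Reachable u v ↔
        (SimpleGraph.fromEdgeSet (M ∪ Mc 1)).Reachable u v) := by
    intro u v hu hv huv
    constructor
    · exact key_step (hMc 0) (hMc 1) hM (hAcy 0) hmax hu hv huv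
    · exact key_step (hMc 1) (hMc 0) hM (hAcy 1)
        (fun a b ha hb hab => (hmax a b ha hb hab).symm) hu hv huv
  refine ⟨M, ⟨hM, hAvail, hAcy⟩, hUne, ?_⟩
  ext e
  simp only [reducedColour, Set.mem_setOf_eq]
  constructor
  · rintro ⟨u, v, he, hne, hu, hv, hr⟩
    rw [Set.union_comm] at hr ⊢
    exact ⟨u, v, he, hne, hu, hv, (hiff u v hu hv hne).mp hr⟩
  · rintro ⟨u, v, he, hne, hu, hv, hr⟩
    rw [Set.union_comm] at hr ⊢
    exact ⟨u, v, he, hne, hu, hv, (hiff u v hu hv hne).mpr hr⟩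


end Kotzig
end

section
/- Let M be a k-configuration on a vertex set V with a distinguished colour blue, and let Z ⊆ V. Suppose that there are at least (|Z|+2)·k + 1 edges with both endpoints in V \ Z that are exclusively blue (i.e., edges of the blue matching belonging to no other colour's matching). Let x, y ∈ Z be such that the blue neighbour of x and the blue neighbour of y both belong to V \ Z. Then there exists a red matching M of size 2 whose edges have all endpoints in V \ Z such that in the reduced configuration of M: the only edge with both endpoints in Z that is not an edge of the original configuration is xy, and it has colour blue; and every edge of the original configuration with both endpoints in Z remains an edge of the reduced configuration with the same colours. -/
open scoped Classical

namespace Kotzig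

variable {V : Type}

lemma mem_swap {N : Set (Sym2 V)} {u v : V} (h : s(u,v) ∈ N) : s(v,u) ∈ N := by
  rwa [Sym2.eq_swap] at h

lemma matching_unique {N : Set (Sym2 V)} (hN : IsMatchingE N) {u v w : V}
    (h1 : s(u,v) ∈ N) (h2 : s(u,w) ∈ N) : v = w := by
  by_cases he : s(u,v) = s(u,w)
  · rw [Sym2.eq_iff] at he
    rcases he with ⟨-, h⟩ | ⟨rfl, rfl⟩ <;> [exact h; rfl]
  · exact absurd (Sym2.mem_mk_left u w) (hN.2 _ h1 _ h2 he u (Sym2.mem_mk_left u v))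

lemma pm_nbr {N : Set (Sym2 V)} (hN : IsPerfectMatchingE N) (v : V) :
    ∃ w, s(v,w) ∈ N ∧ v ≠ w := by
  obtain ⟨e, he, hv⟩ := hN.2 v
  obtain ⟨w, rfl⟩ := Sym2.mem_iff_exists.1 hv
  exact ⟨w, he, fun h => hN.1.1 _ he (by simp [← h])⟩

lemma reach_closed {G : SimpleGraph V} {S : Set V} (h : ∀ a ∈ S, ∀ b, G.Adj a b → b ∈ S)
    {u v : V} (hu : u ∈ S) (hr : G.Reachable u v) : v ∈ S := by
  obtain ⟨w⟩ := hr
  induction w with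
  | nil => exact hu
  | cons ha _ ih => exact ih (h _ hu _ ha)

lemma exists_good_edge [Fintype V] {k : ℕ} (Mc : Fin k → Set (Sym2 V)) (hMc : IsConfig Mc)
    (blue : Fin k) (Z : Set V) (x' y' : V)
    (hcard : (Z.ncard + 2) * k + 1 ≤
      {e ∈ Mc blue | (∀ j : Fin k, j ≠ blue → e ∉ Mc j) ∧ ∀ v ∈ e, v ∉ Z}.ncard) :
    ∃ a b : V, a ≠ b ∧ s(a,b) ∈ Mc blue ∧ (∀ j, j ≠ blue → s(a,b) ∉ Mc j) ∧ a ∉ Z ∧ b ∉ Z ∧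
      (∀ i (w : V), s(a,w) ∈ Mc i → w ∉ Z ∧ w ≠ x' ∧ w ≠ y') ∧
      (∀ i (w : V), s(b,w) ∈ Mc i → w ∉ Z ∧ w ≠ x' ∧ w ≠ y') := by
  classical
  haveI : Nonempty (Fin k) := ⟨blue⟩
  haveI : Nonempty V := ⟨x'⟩
  set W : Finset V := Z.toFinset ∪ {x', y'} with hWdef
  have hW : W.card ≤ Z.ncard + 2 := by
    calc W.card ≤ Z.toFinset.card + ({x', y'} : Finset V).card := Finset.card_union_le _ _
    _ ≤ Z.ncard + 2 := by
        gcongr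
        · rw [Set.ncard_eq_toFinset_card']
        · exact Finset.card_le_two
  set BadF : Finset V := Finset.univ.filter (fun v => ∃ i, ∃ w ∈ W, s(v,w) ∈ Mc i) with hBdef
  have hBad : BadF.card ≤ (Z.ncard + 2) * k := by
    have hsub : BadF ⊆ W.biUnion (fun w => Finset.univ.filter (fun v => ∃ i, s(v,w) ∈ Mc i)) := by
      intro v hv
      rw [hBdef, Finset.mem_filter] at hv
      obtain ⟨-, i, w, hw, hvw⟩ := hv
      exact Finset.mem_biUnion.2 ⟨w, hw, Finset.mem_filter.2 ⟨Finset.mem_univ _, i, hvw⟩⟩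
    calc BadF.card ≤ ∑ w ∈ W, (Finset.univ.filter (fun v => ∃ i, s(v,w) ∈ Mc i)).card :=
          le_trans (Finset.card_le_card hsub) (Finset.card_biUnion_le)
    _ ≤ ∑ _w ∈ W, k := by
        apply Finset.sum_le_sum
        intro w _
        have : (Finset.univ.filter (fun v => ∃ i, s(v,w) ∈ Mc i)).card ≤ (Finset.univ : Finset (Fin k)).card := by
          apply Finset.card_le_card_of_injOn (fun v => if h : ∃ i, s(v,w) ∈ Mc i then h.choose else Classical.arbitrary _)
          · intro v hv; exact Finset.mem_univ _
          · intro v1 h1 v2 h2 heq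
            rw [Finset.mem_coe, Finset.mem_filter] at h1 h2
            obtain ⟨-, h1⟩ := h1; obtain ⟨-, h2⟩ := h2
            simp only [dif_pos h1, dif_pos h2] at heq
            have e1 := h1.choose_spec
            have e2 := h2.choose_spec
            rw [heq] at e1
            exact matching_unique (hMc h2.choose).1 (mem_swap e1) (mem_swap e2)
        simpa using this
    _ = W.card * k := by rw [Finset.sum_const, smul_eq_mul]
    _ ≤ (Z.ncard + 2) * k := by gcongr
  -- exclusive blue edges
  set Eset := {e ∈ Mc blue | (∀ j : Fin k, j ≠ blue → e ∉ Mc j) ∧ ∀ v ∈ e, v ∉ Z} with hEdef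
  set Efin : Finset (Sym2 V) := Eset.toFinset with hEfdef
  have hEcard : (Z.ncard + 2) * k + 1 ≤ Efin.card := by
    rwa [hEfdef, ← Set.ncard_eq_toFinset_card']
  set badE : Finset (Sym2 V) := Efin.filter (fun e => ∃ v ∈ e, v ∈ BadF) with hbEdef
  have hbadE : badE.card ≤ BadF.card := by
    apply Finset.card_le_card_of_injOn
      (fun e => if h : ∃ v ∈ e, v ∈ BadF then h.choose else Classical.arbitrary _)
    · intro e he
      rw [hbEdef, Finset.mem_coe, Finset.mem_filter] at he
      simp only [dif_pos he.2]
      exact he.2.choose_spec.2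
    · intro e1 h1 e2 h2 heq
      rw [Finset.mem_coe, hbEdef, Finset.mem_filter] at h1 h2
      obtain ⟨he1, hx1⟩ := h1; obtain ⟨he2, hx2⟩ := h2
      simp only [dif_pos hx1, dif_pos hx2] at heq
      by_contra hne
      have m1 : e1 ∈ Mc blue := by
        rw [hEfdef, Set.mem_toFinset] at he1; exact he1.1
      have m2 : e2 ∈ Mc blue := by
        rw [hEfdef, Set.mem_toFinset] at he2; exact he2.1
      exact (hMc blue).1.2 e1 m1 e2 m2 hne _ hx1.choose_spec.1 (heq ▸ hx2.choose_spec.1)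
  have hgood : (Efin \ badE).Nonempty := by
    rw [← Finset.card_pos, Finset.card_sdiff_of_subset (by rw [hbEdef]; exact Finset.filter_subset _ _)]
    omega
  obtain ⟨e0, he0⟩ := hgood
  rw [Finset.mem_sdiff] at he0
  obtain ⟨he0E, he0b⟩ := he0
  rw [hEfdef, Set.mem_toFinset] at he0E
  obtain ⟨hblue0, hexcl0, hZ0⟩ := he0E
  obtain ⟨a, b, rfl⟩ : ∃ a b, e0 = s(a,b) := by
    obtain ⟨⟨a, b⟩, h⟩ := Quot.exists_rep e0
    exact ⟨a, b, h.symm⟩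
  have hnb : ∀ v ∈ s(a,b), v ∉ BadF := by
    intro v hv hvB
    refine he0b ?_
    rw [hbEdef, Finset.mem_filter]
    refine ⟨?_, v, hv, hvB⟩
    rw [hEfdef, Set.mem_toFinset]
    exact ⟨hblue0, hexcl0, hZ0⟩
  have hgoodvert : ∀ v ∈ s(a,b), ∀ i (w : V), s(v,w) ∈ Mc i → w ∉ Z ∧ w ≠ x' ∧ w ≠ y' := by
    intro v hv i w hw
    have : w ∉ W := by
      intro hwW
      exact hnb v hv (by rw [hBdef, Finset.mem_filter]; exact ⟨Finset.mem_univ _, i, w, hwW, hw⟩)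
    rw [hWdef, Finset.mem_union, Finset.mem_insert, Finset.mem_singleton, Set.mem_toFinset] at this
    push_neg at this
    exact ⟨this.1, this.2⟩
  refine ⟨a, b, ?_, hblue0, hexcl0, hZ0 a (Sym2.mem_mk_left a b), hZ0 b (Sym2.mem_mk_right a b),
    hgoodvert a (Sym2.mem_mk_left a b), hgoodvert b (Sym2.mem_mk_right a b)⟩
  intro h
  exact (hMc blue).1.1 _ hblue0 (by simp [h])

set_option maxHeartbeats 1000000 in
lemma colourA {N : Set (Sym2 V)} (hN : IsPerfectMatchingE N)
    {Z : Set V} {x' a y' b : V}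
    (hx'a : x' ≠ a) (hy'b : y' ≠ b) (hx'y' : x' ≠ y') (hx'b : x' ≠ b) (hay' : a ≠ y')
    (hab : a ≠ b)
    (hx'Z : x' ∉ Z) (haZ : a ∉ Z) (hy'Z : y' ∉ Z) (hbZ : b ∉ Z)
    (hgA : ∀ w, s(a,w) ∈ N → w ∉ Z ∧ w ≠ x' ∧ w ≠ y')
    (hgB : ∀ w, s(b,w) ∈ N → w ∉ Z ∧ w ≠ x' ∧ w ≠ y')
    (hnab : s(a,b) ∉ N) :
    (SimpleGraph.fromEdgeSet (N ∪ {s(x',a), s(y',b)})).IsAcyclic ∧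
    ∀ u v : V, u ∈ Z → v ∈ Z → u ≠ v →
      (SimpleGraph.fromEdgeSet (N ∪ {s(x',a), s(y',b)})).Reachable u v → s(u,v) ∈ N := by
  classical
  set G := SimpleGraph.fromEdgeSet (N ∪ {s(x',a), s(y',b)}) with hGdef
  -- neighbours
  obtain ⟨qa, haqa, haqane⟩ := pm_nbr hN a
  obtain ⟨qb, hbqb, hbqbne⟩ := pm_nbr hN b
  obtain ⟨p, hx'p, hx'pne⟩ := pm_nbr hN x'
  obtain ⟨r, hy'r, hy'rne⟩ := pm_nbr hN y'
  obtain ⟨hqaZ, hqax', hqay'⟩ := hgA qa haqa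
  obtain ⟨hqbZ, hqbx', hqby'⟩ := hgB qb hbqb
  have hqab : qa ≠ b := fun h => hnab (h ▸ haqa)
  have hqba : qb ≠ a := fun h => hnab (mem_swap (h ▸ hbqb))
  have hpa : p ≠ a := fun h => ((hgA x' (mem_swap (h ▸ hx'p))).2.1 rfl)
  have hpb : p ≠ b := fun h => ((hgB x' (mem_swap (h ▸ hx'p))).2.1 rfl)
  have hra : r ≠ a := fun h => ((hgA y' (mem_swap (h ▸ hy'r))).2.2 rfl)
  have hrb : r ≠ b := fun h => ((hgB y' (mem_swap (h ▸ hy'r))).2.2 rfl)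
  have hqaqb : qa ≠ qb := fun h =>
    hab (matching_unique hN.1 (mem_swap haqa) (mem_swap (h ▸ hbqb)))
  -- symmetric versions of distinctness facts, to help `tauto`
  have hax' : a ≠ x' := hx'a.symm
  have hby' : b ≠ y' := hy'b.symm
  have hy'x' : y' ≠ x' := hx'y'.symm
  have hbx' : b ≠ x' := hx'b.symm
  have hy'a : y' ≠ a := hay'.symm
  have hba : b ≠ a := hab.symm
  have hqaa : qa ≠ a := haqane.symm
  have hqbb : qb ≠ b := hbqbne.symm
  have hpx' : p ≠ x' := hx'pne.symm
  have hry' : r ≠ y' := hy'rne.symm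
  have hbqa : b ≠ qa := hqab.symm
  have haqb : a ≠ qb := hqba.symm
  have hqbqa : qb ≠ qa := hqaqb.symm
  have hx'qa : x' ≠ qa := hqax'.symm
  have hy'qa : y' ≠ qa := hqay'.symm
  have hx'qb : x' ≠ qb := hqbx'.symm
  have hy'qb : y' ≠ qb := hqby'.symm
  have hap : a ≠ p := hpa.symm
  have hbp : b ≠ p := hpb.symm
  have har : a ≠ r := hra.symm
  have hbr' : b ≠ r := hrb.symm
  -- adjacency step lemmas
  have hstep : ∀ z t, G.Adj z t → ∀ w0, s(z,w0) ∈ N →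
      (t = w0 ∨ (z = x' ∧ t = a) ∨ (z = a ∧ t = x') ∨ (z = y' ∧ t = b) ∨ (z = b ∧ t = y')) := by
    intro z t hadj w0 hw0
    rw [hGdef, SimpleGraph.fromEdgeSet_adj] at hadj
    rcases hadj.1 with h | h
    · exact Or.inl (matching_unique hN.1 h hw0)
    · simp only [Set.mem_insert_iff, Set.mem_singleton_iff] at h
      rcases h with h | h
      · rcases Sym2.eq_iff.1 h with ⟨rfl, rfl⟩ | ⟨rfl, rfl⟩
        · exact Or.inr (Or.inl ⟨rfl, rfl⟩)
        · exact Or.inr (Or.inr (Or.inl ⟨rfl, rfl⟩))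
      · rcases Sym2.eq_iff.1 h with ⟨rfl, rfl⟩ | ⟨rfl, rfl⟩
        · exact Or.inr (Or.inr (Or.inr (Or.inl ⟨rfl, rfl⟩)))
        · exact Or.inr (Or.inr (Or.inr (Or.inr ⟨rfl, rfl⟩)))
  have hstep' : ∀ (e : Sym2 V) (z t : V), (G \ SimpleGraph.fromEdgeSet {e}).Adj z t →
      ∀ w0, s(z,w0) ∈ N → s(z,t) ≠ e ∧
      (t = w0 ∨ (z = x' ∧ t = a) ∨ (z = a ∧ t = x') ∨ (z = y' ∧ t = b) ∨ (z = b ∧ t = y')) := by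
    intro e z t hadj w0 hw0
    rw [SimpleGraph.sdiff_adj] at hadj
    obtain ⟨hG, hnot⟩ := hadj
    refine ⟨fun h => hnot ((SimpleGraph.fromEdgeSet_adj _).2 ⟨by simp [h], hG.ne⟩), hstep z t hG w0 hw0⟩
  -- bridge for N-edges
  have hbrN : ∀ v w : V, s(v,w) ∈ N → v ≠ w →
      ¬ (G \ SimpleGraph.fromEdgeSet {s(v,w)}).Reachable v w := by
    intro v w hE hvwne hreach
    by_cases hvx' : v = x'
    · obtain rfl := hvx'.symm
      obtain rfl : p = w := (matching_unique hN.1 hE hx'p).symm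
      have hcl : ∀ z ∈ ({x', a, qa} : Set V), ∀ t,
          (G \ SimpleGraph.fromEdgeSet {s(x',p)}).Adj z t → t ∈ ({x', a, qa} : Set V) := by
        intro z hz t hadj
        simp only [Set.mem_insert_iff, Set.mem_singleton_iff] at hz ⊢
        rcases hz with rfl | rfl | rfl
        · obtain ⟨hne, hc⟩ := hstep' _ _ _ hadj p hx'p
          rcases hc with rfl | ⟨h1, rfl⟩ | ⟨h1, rfl⟩ | ⟨h1, rfl⟩ | ⟨h1, rfl⟩ <;>
            first | contradiction | simp
        · obtain ⟨hne, hc⟩ := hstep' _ _ _ hadj qa haqa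
          rcases hc with rfl | ⟨h1, rfl⟩ | ⟨h1, rfl⟩ | ⟨h1, rfl⟩ | ⟨h1, rfl⟩ <;>
            first | contradiction | simp
        · obtain ⟨hne, hc⟩ := hstep' _ _ _ hadj a (mem_swap haqa)
          rcases hc with rfl | ⟨h1, rfl⟩ | ⟨h1, rfl⟩ | ⟨h1, rfl⟩ | ⟨h1, rfl⟩ <;>
            first | contradiction | simp
      have hmem := reach_closed hcl (by simp) hreach
      simp only [Set.mem_insert_iff, Set.mem_singleton_iff] at hmem
      rcases hmem with h | h | h
      · exact hpx' h
      · exact hpa h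
      · have hsw : s(qa, x') ∈ N := by rw [← h]; exact mem_swap hx'p
        exact hax' (matching_unique hN.1 (mem_swap haqa) hsw)
    · by_cases hva : v = a
      · obtain rfl := hva.symm
        obtain rfl : qa = w := (matching_unique hN.1 hE haqa).symm
        by_cases hpy' : p = y'
        · have hx'y'N : s(x',y') ∈ N := by rw [← hpy']; exact hx'p
          have hcl : ∀ z ∈ ({a, x', y', b, qb} : Set V), ∀ t,
              (G \ SimpleGraph.fromEdgeSet {s(a,qa)}).Adj z t →
              t ∈ ({a, x', y', b, qb} : Set V) := by
            intro z hz t hadj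
            simp only [Set.mem_insert_iff, Set.mem_singleton_iff] at hz ⊢
            rcases hz with rfl | rfl | rfl | rfl | rfl
            · obtain ⟨hne, hc⟩ := hstep' _ _ _ hadj qa haqa
              rcases hc with rfl | ⟨h1, rfl⟩ | ⟨h1, rfl⟩ | ⟨h1, rfl⟩ | ⟨h1, rfl⟩ <;>
                first | contradiction | simp
            · obtain ⟨hne, hc⟩ := hstep' _ _ _ hadj y' hx'y'N
              rcases hc with rfl | ⟨h1, rfl⟩ | ⟨h1, rfl⟩ | ⟨h1, rfl⟩ | ⟨h1, rfl⟩ <;>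
                first | contradiction | simp
            · obtain ⟨hne, hc⟩ := hstep' _ _ _ hadj x' (mem_swap hx'y'N)
              rcases hc with rfl | ⟨h1, rfl⟩ | ⟨h1, rfl⟩ | ⟨h1, rfl⟩ | ⟨h1, rfl⟩ <;>
                first | contradiction | simp
            · obtain ⟨hne, hc⟩ := hstep' _ _ _ hadj qb hbqb
              rcases hc with rfl | ⟨h1, rfl⟩ | ⟨h1, rfl⟩ | ⟨h1, rfl⟩ | ⟨h1, rfl⟩ <;>
                first | contradiction | simp
            · obtain ⟨hne, hc⟩ := hstep' _ _ _ hadj b (mem_swap hbqb)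
              rcases hc with rfl | ⟨h1, rfl⟩ | ⟨h1, rfl⟩ | ⟨h1, rfl⟩ | ⟨h1, rfl⟩ <;>
                first | contradiction | simp
          have hmem := reach_closed hcl (by simp) hreach
          simp only [Set.mem_insert_iff, Set.mem_singleton_iff] at hmem
          rcases hmem with h | h | h | h | h
          · exact hqaa h
          · exact hqax' h
          · exact hqay' h
          · exact hqab h
          · exact hqaqb h
        · have hcl : ∀ z ∈ ({a, x', p} : Set V), ∀ t,
              (G \ SimpleGraph.fromEdgeSet {s(a,qa)}).Adj z t → t ∈ ({a, x', p} : Set V) := by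
            intro z hz t hadj
            simp only [Set.mem_insert_iff, Set.mem_singleton_iff] at hz ⊢
            rcases hz with rfl | rfl | rfl
            · obtain ⟨hne, hc⟩ := hstep' _ _ _ hadj qa haqa
              rcases hc with rfl | ⟨h1, rfl⟩ | ⟨h1, rfl⟩ | ⟨h1, rfl⟩ | ⟨h1, rfl⟩ <;>
                first | contradiction | simp
            · obtain ⟨hne, hc⟩ := hstep' _ _ _ hadj p hx'p
              rcases hc with rfl | ⟨h1, rfl⟩ | ⟨h1, rfl⟩ | ⟨h1, rfl⟩ | ⟨h1, rfl⟩ <;>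
                first | contradiction | simp
            · obtain ⟨hne, hc⟩ := hstep' _ _ _ hadj x' (mem_swap hx'p)
              rcases hc with rfl | ⟨h1, rfl⟩ | ⟨h1, rfl⟩ | ⟨h1, rfl⟩ | ⟨h1, rfl⟩ <;>
                first | contradiction | simp
          have hmem := reach_closed hcl (by simp) hreach
          simp only [Set.mem_insert_iff, Set.mem_singleton_iff] at hmem
          rcases hmem with h | h | h
          · exact hqaa h
          · exact hqax' h
          · have hsw : s(qa, x') ∈ N := by rw [h]; exact mem_swap hx'p
            exact hax' (matching_unique hN.1 (mem_swap haqa) hsw)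
      · by_cases hvy' : v = y'
        · obtain rfl := hvy'.symm
          obtain rfl : r = w := (matching_unique hN.1 hE hy'r).symm
          have hcl : ∀ z ∈ ({y', b, qb} : Set V), ∀ t,
              (G \ SimpleGraph.fromEdgeSet {s(y',r)}).Adj z t → t ∈ ({y', b, qb} : Set V) := by
            intro z hz t hadj
            simp only [Set.mem_insert_iff, Set.mem_singleton_iff] at hz ⊢
            rcases hz with rfl | rfl | rfl
            · obtain ⟨hne, hc⟩ := hstep' _ _ _ hadj r hy'r
              rcases hc with rfl | ⟨h1, rfl⟩ | ⟨h1, rfl⟩ | ⟨h1, rfl⟩ | ⟨h1, rfl⟩ <;>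
                first | contradiction | simp
            · obtain ⟨hne, hc⟩ := hstep' _ _ _ hadj qb hbqb
              rcases hc with rfl | ⟨h1, rfl⟩ | ⟨h1, rfl⟩ | ⟨h1, rfl⟩ | ⟨h1, rfl⟩ <;>
                first | contradiction | simp
            · obtain ⟨hne, hc⟩ := hstep' _ _ _ hadj b (mem_swap hbqb)
              rcases hc with rfl | ⟨h1, rfl⟩ | ⟨h1, rfl⟩ | ⟨h1, rfl⟩ | ⟨h1, rfl⟩ <;>
                first | contradiction | simp
          have hmem := reach_closed hcl (by simp) hreach
          simp only [Set.mem_insert_iff, Set.mem_singleton_iff] at hmem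
          rcases hmem with h | h | h
          · exact hry' h
          · exact hrb h
          · have hsw : s(r, b) ∈ N := by rw [h]; exact mem_swap hbqb
            exact hy'b (matching_unique hN.1 (mem_swap hy'r) hsw)
        · by_cases hvb : v = b
          · obtain rfl := hvb.symm
            obtain rfl : qb = w := (matching_unique hN.1 hE hbqb).symm
            by_cases hrx' : r = x'
            · have hy'x'N : s(y',x') ∈ N := by rw [← hrx']; exact hy'r
              have hcl : ∀ z ∈ ({b, y', x', a, qa} : Set V), ∀ t,
                  (G \ SimpleGraph.fromEdgeSet {s(b,qb)}).Adj z t →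
                  t ∈ ({b, y', x', a, qa} : Set V) := by
                intro z hz t hadj
                simp only [Set.mem_insert_iff, Set.mem_singleton_iff] at hz ⊢
                rcases hz with rfl | rfl | rfl | rfl | rfl
                · obtain ⟨hne, hc⟩ := hstep' _ _ _ hadj qb hbqb
                  rcases hc with rfl | ⟨h1, rfl⟩ | ⟨h1, rfl⟩ | ⟨h1, rfl⟩ | ⟨h1, rfl⟩ <;>
                    first | contradiction | simp
                · obtain ⟨hne, hc⟩ := hstep' _ _ _ hadj x' hy'x'N
                  rcases hc with rfl | ⟨h1, rfl⟩ | ⟨h1, rfl⟩ | ⟨h1, rfl⟩ | ⟨h1, rfl⟩ <;>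
                    first | contradiction | simp
                · obtain ⟨hne, hc⟩ := hstep' _ _ _ hadj y' (mem_swap hy'x'N)
                  rcases hc with rfl | ⟨h1, rfl⟩ | ⟨h1, rfl⟩ | ⟨h1, rfl⟩ | ⟨h1, rfl⟩ <;>
                    first | contradiction | simp
                · obtain ⟨hne, hc⟩ := hstep' _ _ _ hadj qa haqa
                  rcases hc with rfl | ⟨h1, rfl⟩ | ⟨h1, rfl⟩ | ⟨h1, rfl⟩ | ⟨h1, rfl⟩ <;>
                    first | contradiction | simp
                · obtain ⟨hne, hc⟩ := hstep' _ _ _ hadj a (mem_swap haqa)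
                  rcases hc with rfl | ⟨h1, rfl⟩ | ⟨h1, rfl⟩ | ⟨h1, rfl⟩ | ⟨h1, rfl⟩ <;>
                    first | contradiction | simp
              have hmem := reach_closed hcl (by simp) hreach
              simp only [Set.mem_insert_iff, Set.mem_singleton_iff] at hmem
              rcases hmem with h | h | h | h | h
              · exact hqbb h
              · exact hqby' h
              · exact hqbx' h
              · exact hqba h
              · exact hqbqa h
            · have hcl : ∀ z ∈ ({b, y', r} : Set V), ∀ t,
                  (G \ SimpleGraph.fromEdgeSet {s(b,qb)}).Adj z t → t ∈ ({b, y', r} : Set V) := by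
                intro z hz t hadj
                simp only [Set.mem_insert_iff, Set.mem_singleton_iff] at hz ⊢
                rcases hz with rfl | rfl | rfl
                · obtain ⟨hne, hc⟩ := hstep' _ _ _ hadj qb hbqb
                  rcases hc with rfl | ⟨h1, rfl⟩ | ⟨h1, rfl⟩ | ⟨h1, rfl⟩ | ⟨h1, rfl⟩ <;>
                    first | contradiction | simp
                · obtain ⟨hne, hc⟩ := hstep' _ _ _ hadj r hy'r
                  rcases hc with rfl | ⟨h1, rfl⟩ | ⟨h1, rfl⟩ | ⟨h1, rfl⟩ | ⟨h1, rfl⟩ <;>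
                    first | contradiction | simp
                · obtain ⟨hne, hc⟩ := hstep' _ _ _ hadj y' (mem_swap hy'r)
                  rcases hc with rfl | ⟨h1, rfl⟩ | ⟨h1, rfl⟩ | ⟨h1, rfl⟩ | ⟨h1, rfl⟩ <;>
                    first | contradiction | simp
              have hmem := reach_closed hcl (by simp) hreach
              simp only [Set.mem_insert_iff, Set.mem_singleton_iff] at hmem
              rcases hmem with h | h | h
              · exact hqbb h
              · exact hqby' h
              · have hsw : s(qb, y') ∈ N := by rw [h]; exact mem_swap hy'r
                exact hby' (matching_unique hN.1 (mem_swap hbqb) hsw)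
          · -- generic vertex
            have hcl : ∀ z ∈ ({v} : Set V), ∀ t,
                (G \ SimpleGraph.fromEdgeSet {s(v,w)}).Adj z t → t ∈ ({v} : Set V) := by
              intro z hz t hadj
              simp only [Set.mem_singleton_iff] at hz ⊢
              subst hz
              obtain ⟨hne, hc⟩ := hstep' _ _ _ hadj w hE
              rcases hc with rfl | ⟨h1, rfl⟩ | ⟨h1, rfl⟩ | ⟨h1, rfl⟩ | ⟨h1, rfl⟩ <;>
                first | contradiction | simp
            have hmem := reach_closed hcl (by simp) hreach
            simp only [Set.mem_singleton_iff] at hmem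
            exact hvwne hmem.symm
  -- bridge for the red edges
  have hbr1 : ¬ (G \ SimpleGraph.fromEdgeSet {s(x',a)}).Reachable x' a := by
    intro hreach
    by_cases hpy' : p = y'
    · have hx'y'N : s(x',y') ∈ N := by rw [← hpy']; exact hx'p
      have hrx' : r = x' := matching_unique hN.1 hy'r (mem_swap hx'y'N)
      have hcl : ∀ z ∈ ({x', y', b, qb} : Set V), ∀ t,
          (G \ SimpleGraph.fromEdgeSet {s(x',a)}).Adj z t → t ∈ ({x', y', b, qb} : Set V) := by
        intro z hz t hadj
        simp only [Set.mem_insert_iff, Set.mem_singleton_iff] at hz ⊢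
        rcases hz with rfl | rfl | rfl | rfl
        · obtain ⟨hne, hc⟩ := hstep' _ _ _ hadj y' hx'y'N
          rcases hc with rfl | ⟨h1, rfl⟩ | ⟨h1, rfl⟩ | ⟨h1, rfl⟩ | ⟨h1, rfl⟩ <;>
            first | contradiction | simp
        · obtain ⟨hne, hc⟩ := hstep' _ _ _ hadj x' (mem_swap hx'y'N)
          rcases hc with rfl | ⟨h1, rfl⟩ | ⟨h1, rfl⟩ | ⟨h1, rfl⟩ | ⟨h1, rfl⟩ <;>
            first | contradiction | simp
        · obtain ⟨hne, hc⟩ := hstep' _ _ _ hadj qb hbqb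
          rcases hc with rfl | ⟨h1, rfl⟩ | ⟨h1, rfl⟩ | ⟨h1, rfl⟩ | ⟨h1, rfl⟩ <;>
            first | contradiction | simp
        · obtain ⟨hne, hc⟩ := hstep' _ _ _ hadj b (mem_swap hbqb)
          rcases hc with rfl | ⟨h1, rfl⟩ | ⟨h1, rfl⟩ | ⟨h1, rfl⟩ | ⟨h1, rfl⟩ <;>
            first | contradiction | simp
      have hmem := reach_closed hcl (by simp) hreach
      simp only [Set.mem_insert_iff, Set.mem_singleton_iff] at hmem
      rcases hmem with h | h | h | h
      · exact hax' h
      · exact hay' h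
      · exact hab h
      · exact haqb h
    · have hcl : ∀ z ∈ ({x', p} : Set V), ∀ t,
          (G \ SimpleGraph.fromEdgeSet {s(x',a)}).Adj z t → t ∈ ({x', p} : Set V) := by
        intro z hz t hadj
        simp only [Set.mem_insert_iff, Set.mem_singleton_iff] at hz ⊢
        rcases hz with rfl | rfl
        · obtain ⟨hne, hc⟩ := hstep' _ _ _ hadj p hx'p
          rcases hc with rfl | ⟨h1, rfl⟩ | ⟨h1, rfl⟩ | ⟨h1, rfl⟩ | ⟨h1, rfl⟩ <;>
            first | contradiction | simp
        · obtain ⟨hne, hc⟩ := hstep' _ _ _ hadj x' (mem_swap hx'p)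
          rcases hc with rfl | ⟨h1, rfl⟩ | ⟨h1, rfl⟩ | ⟨h1, rfl⟩ | ⟨h1, rfl⟩ <;>
            first | contradiction | simp
      have hmem := reach_closed hcl (by simp) hreach
      simp only [Set.mem_insert_iff, Set.mem_singleton_iff] at hmem
      rcases hmem with h | h
      · exact hax' h
      · exact hap h
  have hbr2 : ¬ (G \ SimpleGraph.fromEdgeSet {s(y',b)}).Reachable y' b := by
    intro hreach
    by_cases hrx' : r = x'
    · have hy'x'N : s(y',x') ∈ N := by rw [← hrx']; exact hy'r
      have hpy' : p = y' := matching_unique hN.1 hx'p (mem_swap hy'x'N)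
      have hcl : ∀ z ∈ ({y', x', a, qa} : Set V), ∀ t,
          (G \ SimpleGraph.fromEdgeSet {s(y',b)}).Adj z t → t ∈ ({y', x', a, qa} : Set V) := by
        intro z hz t hadj
        simp only [Set.mem_insert_iff, Set.mem_singleton_iff] at hz ⊢
        rcases hz with rfl | rfl | rfl | rfl
        · obtain ⟨hne, hc⟩ := hstep' _ _ _ hadj x' hy'x'N
          rcases hc with rfl | ⟨h1, rfl⟩ | ⟨h1, rfl⟩ | ⟨h1, rfl⟩ | ⟨h1, rfl⟩ <;>
            first | contradiction | simp
        · obtain ⟨hne, hc⟩ := hstep' _ _ _ hadj y' (mem_swap hy'x'N)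
          rcases hc with rfl | ⟨h1, rfl⟩ | ⟨h1, rfl⟩ | ⟨h1, rfl⟩ | ⟨h1, rfl⟩ <;>
            first | contradiction | simp
        · obtain ⟨hne, hc⟩ := hstep' _ _ _ hadj qa haqa
          rcases hc with rfl | ⟨h1, rfl⟩ | ⟨h1, rfl⟩ | ⟨h1, rfl⟩ | ⟨h1, rfl⟩ <;>
            first | contradiction | simp
        · obtain ⟨hne, hc⟩ := hstep' _ _ _ hadj a (mem_swap haqa)
          rcases hc with rfl | ⟨h1, rfl⟩ | ⟨h1, rfl⟩ | ⟨h1, rfl⟩ | ⟨h1, rfl⟩ <;>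
            first | contradiction | simp
      have hmem := reach_closed hcl (by simp) hreach
      simp only [Set.mem_insert_iff, Set.mem_singleton_iff] at hmem
      rcases hmem with h | h | h | h
      · exact hby' h
      · exact hbx' h
      · exact hba h
      · exact hbqa h
    · have hcl : ∀ z ∈ ({y', r} : Set V), ∀ t,
          (G \ SimpleGraph.fromEdgeSet {s(y',b)}).Adj z t → t ∈ ({y', r} : Set V) := by
        intro z hz t hadj
        simp only [Set.mem_insert_iff, Set.mem_singleton_iff] at hz ⊢
        rcases hz with rfl | rfl
        · obtain ⟨hne, hc⟩ := hstep' _ _ _ hadj r hy'r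
          rcases hc with rfl | ⟨h1, rfl⟩ | ⟨h1, rfl⟩ | ⟨h1, rfl⟩ | ⟨h1, rfl⟩ <;>
            first | contradiction | simp
        · obtain ⟨hne, hc⟩ := hstep' _ _ _ hadj y' (mem_swap hy'r)
          rcases hc with rfl | ⟨h1, rfl⟩ | ⟨h1, rfl⟩ | ⟨h1, rfl⟩ | ⟨h1, rfl⟩ <;>
            first | contradiction | simp
      have hmem := reach_closed hcl (by simp) hreach
      simp only [Set.mem_insert_iff, Set.mem_singleton_iff] at hmem
      rcases hmem with h | h
      · exact hby' h
      · exact hbr' h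
  constructor
  · -- acyclicity
    rw [SimpleGraph.isAcyclic_iff_forall_adj_isBridge]
    intro v w hvw
    rw [SimpleGraph.isBridge_iff]
    intro hreach
    have hedge : s(v,w) ∈ N ∪ ({s(x',a), s(y',b)} : Set (Sym2 V)) :=
      ((SimpleGraph.fromEdgeSet_adj _).1 (hGdef ▸ hvw)).1
    rcases hedge with hE | hE
    · exact hbrN v w hE hvw.ne hreach
    · simp only [Set.mem_insert_iff, Set.mem_singleton_iff] at hE
      rcases hE with hE | hE <;> rcases Sym2.eq_iff.1 hE with ⟨rfl, rfl⟩ | ⟨rfl, rfl⟩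
      · exact hbr1 hreach
      · rw [show s(v,w) = s(w,v) from Sym2.eq_swap] at hreach
        exact hbr1 hreach.symm
      · exact hbr2 hreach
      · rw [show s(v,w) = s(w,v) from Sym2.eq_swap] at hreach
        exact hbr2 hreach.symm
  · -- reachability classification
    intro u v huZ hvZ huv hreach
    have hux' : u ≠ x' := fun h => hx'Z (h ▸ huZ)
    have hua : u ≠ a := fun h => haZ (h ▸ huZ)
    have huy' : u ≠ y' := fun h => hy'Z (h ▸ huZ)
    have hub : u ≠ b := fun h => hbZ (h ▸ huZ)
    have hvx' : v ≠ x' := fun h => hx'Z (h ▸ hvZ)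
    have hva : v ≠ a := fun h => haZ (h ▸ hvZ)
    have hvy' : v ≠ y' := fun h => hy'Z (h ▸ hvZ)
    have hvb : v ≠ b := fun h => hbZ (h ▸ hvZ)
    obtain ⟨w, huw, huwne⟩ := pm_nbr hN u
    have hwa : w ≠ a := fun h =>
      (hgA u (mem_swap (by rw [← h]; exact huw))).1 huZ
    have hwb : w ≠ b := fun h =>
      (hgB u (mem_swap (by rw [← h]; exact huw))).1 huZ
    by_cases hwx' : w = x'
    · obtain rfl := hwx'.symm
      exfalso
      have hcl : ∀ z ∈ ({u, x', a, qa} : Set V), ∀ t,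
          G.Adj z t → t ∈ ({u, x', a, qa} : Set V) := by
        intro z hz t hadj
        simp only [Set.mem_insert_iff, Set.mem_singleton_iff] at hz ⊢
        rcases hz with rfl | rfl | rfl | rfl
        · rcases hstep _ _ hadj x' huw with rfl | ⟨h1, rfl⟩ | ⟨h1, rfl⟩ | ⟨h1, rfl⟩ | ⟨h1, rfl⟩ <;>
            first | contradiction | simp
        · rcases hstep _ _ hadj u (mem_swap huw) with rfl | ⟨h1, rfl⟩ | ⟨h1, rfl⟩ | ⟨h1, rfl⟩ | ⟨h1, rfl⟩ <;>
            first | contradiction | simp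
        · rcases hstep _ _ hadj qa haqa with rfl | ⟨h1, rfl⟩ | ⟨h1, rfl⟩ | ⟨h1, rfl⟩ | ⟨h1, rfl⟩ <;>
            first | contradiction | simp
        · rcases hstep _ _ hadj a (mem_swap haqa) with rfl | ⟨h1, rfl⟩ | ⟨h1, rfl⟩ | ⟨h1, rfl⟩ | ⟨h1, rfl⟩ <;>
            first | contradiction | simp
      have hmem := reach_closed hcl (by simp) hreach
      simp only [Set.mem_insert_iff, Set.mem_singleton_iff] at hmem
      rcases hmem with h | h | h | h
      · exact huv h.symm
      · exact hvx' h
      · exact hva h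
      · exact hqaZ (h ▸ hvZ)
    · by_cases hwy' : w = y'
      · obtain rfl := hwy'.symm
        exfalso
        have hcl : ∀ z ∈ ({u, y', b, qb} : Set V), ∀ t,
            G.Adj z t → t ∈ ({u, y', b, qb} : Set V) := by
          intro z hz t hadj
          simp only [Set.mem_insert_iff, Set.mem_singleton_iff] at hz ⊢
          rcases hz with rfl | rfl | rfl | rfl
          · rcases hstep _ _ hadj y' huw with rfl | ⟨h1, rfl⟩ | ⟨h1, rfl⟩ | ⟨h1, rfl⟩ | ⟨h1, rfl⟩ <;>
              first | contradiction | simp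
          · rcases hstep _ _ hadj u (mem_swap huw) with rfl | ⟨h1, rfl⟩ | ⟨h1, rfl⟩ | ⟨h1, rfl⟩ | ⟨h1, rfl⟩ <;>
              first | contradiction | simp
          · rcases hstep _ _ hadj qb hbqb with rfl | ⟨h1, rfl⟩ | ⟨h1, rfl⟩ | ⟨h1, rfl⟩ | ⟨h1, rfl⟩ <;>
              first | contradiction | simp
          · rcases hstep _ _ hadj b (mem_swap hbqb) with rfl | ⟨h1, rfl⟩ | ⟨h1, rfl⟩ | ⟨h1, rfl⟩ | ⟨h1, rfl⟩ <;>
              first | contradiction | simp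
        have hmem := reach_closed hcl (by simp) hreach
        simp only [Set.mem_insert_iff, Set.mem_singleton_iff] at hmem
        rcases hmem with h | h | h | h
        · exact huv h.symm
        · exact hvy' h
        · exact hvb h
        · exact hqbZ (h ▸ hvZ)
      · have hcl : ∀ z ∈ ({u, w} : Set V), ∀ t,
            G.Adj z t → t ∈ ({u, w} : Set V) := by
          intro z hz t hadj
          simp only [Set.mem_insert_iff, Set.mem_singleton_iff] at hz ⊢
          rcases hz with rfl | rfl
          · rcases hstep _ _ hadj w huw with rfl | ⟨h1, rfl⟩ | ⟨h1, rfl⟩ | ⟨h1, rfl⟩ | ⟨h1, rfl⟩ <;>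
              first | contradiction | simp
          · rcases hstep _ _ hadj u (mem_swap huw) with rfl | ⟨h1, rfl⟩ | ⟨h1, rfl⟩ | ⟨h1, rfl⟩ | ⟨h1, rfl⟩ <;>
              first | contradiction | simp
        have hmem := reach_closed hcl (by simp) hreach
        simp only [Set.mem_insert_iff, Set.mem_singleton_iff] at hmem
        rcases hmem with h | h
        · exact absurd h.symm huv
        · rw [h]; exact huw

set_option maxHeartbeats 1000000 in
lemma colourB {N : Set (Sym2 V)} (hN : IsPerfectMatchingE N)
    {Z : Set V} {x y x' a y' b : V}
    (hxx'N : s(x,x') ∈ N) (hyy'N : s(y,y') ∈ N) (habN : s(a,b) ∈ N)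
    (hxZ : x ∈ Z) (hyZ : y ∈ Z) (hxy : x ≠ y)
    (hx'a : x' ≠ a) (hy'b : y' ≠ b) (hx'y' : x' ≠ y') (hx'b : x' ≠ b) (hay' : a ≠ y')
    (hab : a ≠ b)
    (hx'Z : x' ∉ Z) (haZ : a ∉ Z) (hy'Z : y' ∉ Z) (hbZ : b ∉ Z) :
    (SimpleGraph.fromEdgeSet (N ∪ {s(x',a), s(y',b)})).IsAcyclic ∧
    (SimpleGraph.fromEdgeSet (N ∪ {s(x',a), s(y',b)})).Reachable x y ∧
    ∀ u v : V, u ∈ Z → v ∈ Z → u ≠ v →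
      (SimpleGraph.fromEdgeSet (N ∪ {s(x',a), s(y',b)})).Reachable u v →
      s(u,v) ∈ N ∨ (u = x ∧ v = y) ∨ (u = y ∧ v = x) := by
  classical
  set G := SimpleGraph.fromEdgeSet (N ∪ {s(x',a), s(y',b)}) with hGdef
  have hxx' : x ≠ x' := fun h => hN.1.1 _ hxx'N (by rw [← h]; exact Sym2.mk_isDiag_iff.mpr rfl)
  have hyy' : y ≠ y' := fun h => hN.1.1 _ hyy'N (by rw [← h]; exact Sym2.mk_isDiag_iff.mpr rfl)
  have hxa : x ≠ a := fun h => haZ (h ▸ hxZ)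
  have hxb : x ≠ b := fun h => hbZ (h ▸ hxZ)
  have hxy' : x ≠ y' := fun h => hy'Z (h ▸ hxZ)
  have hya : y ≠ a := fun h => haZ (h ▸ hyZ)
  have hyb : y ≠ b := fun h => hbZ (h ▸ hyZ)
  have hyx' : y ≠ x' := fun h => hx'Z (h ▸ hyZ)
  -- symmetric versions
  have hax' : a ≠ x' := hx'a.symm
  have hby' : b ≠ y' := hy'b.symm
  have hy'x' : y' ≠ x' := hx'y'.symm
  have hbx' : b ≠ x' := hx'b.symm
  have hy'a : y' ≠ a := hay'.symm
  have hba : b ≠ a := hab.symm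
  have hx'x : x' ≠ x := hxx'.symm
  have hy'y : y' ≠ y := hyy'.symm
  have hax : a ≠ x := hxa.symm
  have hbx : b ≠ x := hxb.symm
  have hy'x2 : y' ≠ x := hxy'.symm
  have hay : a ≠ y := hya.symm
  have hby : b ≠ y := hyb.symm
  have hx'y : x' ≠ y := hyx'.symm
  have hyx : y ≠ x := hxy.symm
  have hstep : ∀ z t, G.Adj z t → ∀ w0, s(z,w0) ∈ N →
      (t = w0 ∨ (z = x' ∧ t = a) ∨ (z = a ∧ t = x') ∨ (z = y' ∧ t = b) ∨ (z = b ∧ t = y')) := by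
    intro z t hadj w0 hw0
    rw [hGdef, SimpleGraph.fromEdgeSet_adj] at hadj
    rcases hadj.1 with h | h
    · exact Or.inl (matching_unique hN.1 h hw0)
    · simp only [Set.mem_insert_iff, Set.mem_singleton_iff] at h
      rcases h with h | h
      · rcases Sym2.eq_iff.1 h with ⟨rfl, rfl⟩ | ⟨rfl, rfl⟩
        · exact Or.inr (Or.inl ⟨rfl, rfl⟩)
        · exact Or.inr (Or.inr (Or.inl ⟨rfl, rfl⟩))
      · rcases Sym2.eq_iff.1 h with ⟨rfl, rfl⟩ | ⟨rfl, rfl⟩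
        · exact Or.inr (Or.inr (Or.inr (Or.inl ⟨rfl, rfl⟩)))
        · exact Or.inr (Or.inr (Or.inr (Or.inr ⟨rfl, rfl⟩)))
  have hstep' : ∀ (e : Sym2 V) (z t : V), (G \ SimpleGraph.fromEdgeSet {e}).Adj z t →
      ∀ w0, s(z,w0) ∈ N → s(z,t) ≠ e ∧
      (t = w0 ∨ (z = x' ∧ t = a) ∨ (z = a ∧ t = x') ∨ (z = y' ∧ t = b) ∨ (z = b ∧ t = y')) := by
    intro e z t hadj w0 hw0
    rw [SimpleGraph.sdiff_adj] at hadj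
    obtain ⟨hG, hnot⟩ := hadj
    refine ⟨fun h => hnot ((SimpleGraph.fromEdgeSet_adj _).2 ⟨by simp [h], hG.ne⟩), hstep z t hG w0 hw0⟩
  have hbrN : ∀ v w : V, s(v,w) ∈ N → v ≠ w →
      ¬ (G \ SimpleGraph.fromEdgeSet {s(v,w)}).Reachable v w := by
    intro v w hE hvwne hreach
    by_cases hvx' : v = x'
    · obtain rfl := hvx'.symm
      obtain rfl : x = w := (matching_unique hN.1 hE (mem_swap hxx'N)).symm
      have hcl : ∀ z ∈ ({x', a, b, y', y} : Set V), ∀ t,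
          (G \ SimpleGraph.fromEdgeSet {s(x',x)}).Adj z t → t ∈ ({x', a, b, y', y} : Set V) := by
        intro z hz t hadj
        simp only [Set.mem_insert_iff, Set.mem_singleton_iff] at hz ⊢
        rcases hz with rfl | rfl | rfl | rfl | rfl
        · obtain ⟨hne, hc⟩ := hstep' _ _ _ hadj x (mem_swap hxx'N)
          rcases hc with rfl | ⟨h1, rfl⟩ | ⟨h1, rfl⟩ | ⟨h1, rfl⟩ | ⟨h1, rfl⟩ <;>
            first | contradiction | simp
        · obtain ⟨hne, hc⟩ := hstep' _ _ _ hadj b habN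
          rcases hc with rfl | ⟨h1, rfl⟩ | ⟨h1, rfl⟩ | ⟨h1, rfl⟩ | ⟨h1, rfl⟩ <;>
            first | contradiction | simp
        · obtain ⟨hne, hc⟩ := hstep' _ _ _ hadj a (mem_swap habN)
          rcases hc with rfl | ⟨h1, rfl⟩ | ⟨h1, rfl⟩ | ⟨h1, rfl⟩ | ⟨h1, rfl⟩ <;>
            first | contradiction | simp
        · obtain ⟨hne, hc⟩ := hstep' _ _ _ hadj y (mem_swap hyy'N)
          rcases hc with rfl | ⟨h1, rfl⟩ | ⟨h1, rfl⟩ | ⟨h1, rfl⟩ | ⟨h1, rfl⟩ <;>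
            first | contradiction | simp
        · obtain ⟨hne, hc⟩ := hstep' _ _ _ hadj y' hyy'N
          rcases hc with rfl | ⟨h1, rfl⟩ | ⟨h1, rfl⟩ | ⟨h1, rfl⟩ | ⟨h1, rfl⟩ <;>
            first | contradiction | simp
      have hmem := reach_closed hcl (by simp) hreach
      simp only [Set.mem_insert_iff, Set.mem_singleton_iff] at hmem
      rcases hmem with h | h | h | h | h
      · exact hxx' h
      · exact hxa h
      · exact hxb h
      · exact hxy' h
      · exact hxy h
    · by_cases hva : v = a
      · obtain rfl := hva.symm
        obtain rfl : b = w := (matching_unique hN.1 hE habN).symm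
        have hcl : ∀ z ∈ ({a, x', x} : Set V), ∀ t,
            (G \ SimpleGraph.fromEdgeSet {s(a,b)}).Adj z t → t ∈ ({a, x', x} : Set V) := by
          intro z hz t hadj
          simp only [Set.mem_insert_iff, Set.mem_singleton_iff] at hz ⊢
          rcases hz with rfl | rfl | rfl
          · obtain ⟨hne, hc⟩ := hstep' _ _ _ hadj b habN
            rcases hc with rfl | ⟨h1, rfl⟩ | ⟨h1, rfl⟩ | ⟨h1, rfl⟩ | ⟨h1, rfl⟩ <;>
              first | contradiction | simp
          · obtain ⟨hne, hc⟩ := hstep' _ _ _ hadj x (mem_swap hxx'N)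
            rcases hc with rfl | ⟨h1, rfl⟩ | ⟨h1, rfl⟩ | ⟨h1, rfl⟩ | ⟨h1, rfl⟩ <;>
              first | contradiction | simp
          · obtain ⟨hne, hc⟩ := hstep' _ _ _ hadj x' hxx'N
            rcases hc with rfl | ⟨h1, rfl⟩ | ⟨h1, rfl⟩ | ⟨h1, rfl⟩ | ⟨h1, rfl⟩ <;>
              first | contradiction | simp
        have hmem := reach_closed hcl (by simp) hreach
        simp only [Set.mem_insert_iff, Set.mem_singleton_iff] at hmem
        rcases hmem with h | h | h
        · exact hba h
        · exact hbx' h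
        · exact hbx h
      · by_cases hvy' : v = y'
        · obtain rfl := hvy'.symm
          obtain rfl : y = w := (matching_unique hN.1 hE (mem_swap hyy'N)).symm
          have hcl : ∀ z ∈ ({y', b, a, x', x} : Set V), ∀ t,
              (G \ SimpleGraph.fromEdgeSet {s(y',y)}).Adj z t →
              t ∈ ({y', b, a, x', x} : Set V) := by
            intro z hz t hadj
            simp only [Set.mem_insert_iff, Set.mem_singleton_iff] at hz ⊢
            rcases hz with rfl | rfl | rfl | rfl | rfl
            · obtain ⟨hne, hc⟩ := hstep' _ _ _ hadj y (mem_swap hyy'N)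
              rcases hc with rfl | ⟨h1, rfl⟩ | ⟨h1, rfl⟩ | ⟨h1, rfl⟩ | ⟨h1, rfl⟩ <;>
                first | contradiction | simp
            · obtain ⟨hne, hc⟩ := hstep' _ _ _ hadj a (mem_swap habN)
              rcases hc with rfl | ⟨h1, rfl⟩ | ⟨h1, rfl⟩ | ⟨h1, rfl⟩ | ⟨h1, rfl⟩ <;>
                first | contradiction | simp
            · obtain ⟨hne, hc⟩ := hstep' _ _ _ hadj b habN
              rcases hc with rfl | ⟨h1, rfl⟩ | ⟨h1, rfl⟩ | ⟨h1, rfl⟩ | ⟨h1, rfl⟩ <;>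
                first | contradiction | simp
            · obtain ⟨hne, hc⟩ := hstep' _ _ _ hadj x (mem_swap hxx'N)
              rcases hc with rfl | ⟨h1, rfl⟩ | ⟨h1, rfl⟩ | ⟨h1, rfl⟩ | ⟨h1, rfl⟩ <;>
                first | contradiction | simp
            · obtain ⟨hne, hc⟩ := hstep' _ _ _ hadj x' hxx'N
              rcases hc with rfl | ⟨h1, rfl⟩ | ⟨h1, rfl⟩ | ⟨h1, rfl⟩ | ⟨h1, rfl⟩ <;>
                first | contradiction | simp
          have hmem := reach_closed hcl (by simp) hreach
          simp only [Set.mem_insert_iff, Set.mem_singleton_iff] at hmem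
          rcases hmem with h | h | h | h | h
          · exact hyy' h
          · exact hyb h
          · exact hya h
          · exact hyx' h
          · exact hyx h
        · by_cases hvb : v = b
          · obtain rfl := hvb.symm
            obtain rfl : a = w := (matching_unique hN.1 hE (mem_swap habN)).symm
            have hcl : ∀ z ∈ ({b, y', y} : Set V), ∀ t,
                (G \ SimpleGraph.fromEdgeSet {s(b,a)}).Adj z t → t ∈ ({b, y', y} : Set V) := by
              intro z hz t hadj
              simp only [Set.mem_insert_iff, Set.mem_singleton_iff] at hz ⊢
              rcases hz with rfl | rfl | rfl
              · obtain ⟨hne, hc⟩ := hstep' _ _ _ hadj a (mem_swap habN)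
                rcases hc with rfl | ⟨h1, rfl⟩ | ⟨h1, rfl⟩ | ⟨h1, rfl⟩ | ⟨h1, rfl⟩ <;>
                  first | contradiction | simp
              · obtain ⟨hne, hc⟩ := hstep' _ _ _ hadj y (mem_swap hyy'N)
                rcases hc with rfl | ⟨h1, rfl⟩ | ⟨h1, rfl⟩ | ⟨h1, rfl⟩ | ⟨h1, rfl⟩ <;>
                  first | contradiction | simp
              · obtain ⟨hne, hc⟩ := hstep' _ _ _ hadj y' hyy'N
                rcases hc with rfl | ⟨h1, rfl⟩ | ⟨h1, rfl⟩ | ⟨h1, rfl⟩ | ⟨h1, rfl⟩ <;>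
                  first | contradiction | simp
            have hmem := reach_closed hcl (by simp) hreach
            simp only [Set.mem_insert_iff, Set.mem_singleton_iff] at hmem
            rcases hmem with h | h | h
            · exact hab h
            · exact hay' h
            · exact hay h
          · have hcl : ∀ z ∈ ({v} : Set V), ∀ t,
                (G \ SimpleGraph.fromEdgeSet {s(v,w)}).Adj z t → t ∈ ({v} : Set V) := by
              intro z hz t hadj
              simp only [Set.mem_singleton_iff] at hz ⊢
              subst hz
              obtain ⟨hne, hc⟩ := hstep' _ _ _ hadj w hE
              rcases hc with rfl | ⟨h1, rfl⟩ | ⟨h1, rfl⟩ | ⟨h1, rfl⟩ | ⟨h1, rfl⟩ <;>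
                first | contradiction | simp
            have hmem := reach_closed hcl (by simp) hreach
            simp only [Set.mem_singleton_iff] at hmem
            exact hvwne hmem.symm
  have hbr1 : ¬ (G \ SimpleGraph.fromEdgeSet {s(x',a)}).Reachable x' a := by
    intro hreach
    have hcl : ∀ z ∈ ({x', x} : Set V), ∀ t,
        (G \ SimpleGraph.fromEdgeSet {s(x',a)}).Adj z t → t ∈ ({x', x} : Set V) := by
      intro z hz t hadj
      simp only [Set.mem_insert_iff, Set.mem_singleton_iff] at hz ⊢
      rcases hz with rfl | rfl
      · obtain ⟨hne, hc⟩ := hstep' _ _ _ hadj x (mem_swap hxx'N)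
        rcases hc with rfl | ⟨h1, rfl⟩ | ⟨h1, rfl⟩ | ⟨h1, rfl⟩ | ⟨h1, rfl⟩ <;>
          first | contradiction | simp
      · obtain ⟨hne, hc⟩ := hstep' _ _ _ hadj x' hxx'N
        rcases hc with rfl | ⟨h1, rfl⟩ | ⟨h1, rfl⟩ | ⟨h1, rfl⟩ | ⟨h1, rfl⟩ <;>
          first | contradiction | simp
    have hmem := reach_closed hcl (by simp) hreach
    simp only [Set.mem_insert_iff, Set.mem_singleton_iff] at hmem
    rcases hmem with h | h
    · exact hax' h
    · exact hax h
  have hbr2 : ¬ (G \ SimpleGraph.fromEdgeSet {s(y',b)}).Reachable y' b := by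
    intro hreach
    have hcl : ∀ z ∈ ({y', y} : Set V), ∀ t,
        (G \ SimpleGraph.fromEdgeSet {s(y',b)}).Adj z t → t ∈ ({y', y} : Set V) := by
      intro z hz t hadj
      simp only [Set.mem_insert_iff, Set.mem_singleton_iff] at hz ⊢
      rcases hz with rfl | rfl
      · obtain ⟨hne, hc⟩ := hstep' _ _ _ hadj y (mem_swap hyy'N)
        rcases hc with rfl | ⟨h1, rfl⟩ | ⟨h1, rfl⟩ | ⟨h1, rfl⟩ | ⟨h1, rfl⟩ <;>
          first | contradiction | simp
      · obtain ⟨hne, hc⟩ := hstep' _ _ _ hadj y' hyy'N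
        rcases hc with rfl | ⟨h1, rfl⟩ | ⟨h1, rfl⟩ | ⟨h1, rfl⟩ | ⟨h1, rfl⟩ <;>
          first | contradiction | simp
    have hmem := reach_closed hcl (by simp) hreach
    simp only [Set.mem_insert_iff, Set.mem_singleton_iff] at hmem
    rcases hmem with h | h
    · exact hby' h
    · exact hby h
  refine ⟨?_, ?_, ?_⟩
  · rw [SimpleGraph.isAcyclic_iff_forall_adj_isBridge]
    intro v w hvw
    rw [SimpleGraph.isBridge_iff]
    intro hreach
    have hedge : s(v,w) ∈ N ∪ ({s(x',a), s(y',b)} : Set (Sym2 V)) :=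
      ((SimpleGraph.fromEdgeSet_adj _).1 (hGdef ▸ hvw)).1
    rcases hedge with hE | hE
    · exact hbrN v w hE hvw.ne hreach
    · simp only [Set.mem_insert_iff, Set.mem_singleton_iff] at hE
      rcases hE with hE | hE <;> rcases Sym2.eq_iff.1 hE with ⟨rfl, rfl⟩ | ⟨rfl, rfl⟩
      · exact hbr1 hreach
      · rw [show s(v,w) = s(w,v) from Sym2.eq_swap] at hreach
        exact hbr1 hreach.symm
      · exact hbr2 hreach
      · rw [show s(v,w) = s(w,v) from Sym2.eq_swap] at hreach
        exact hbr2 hreach.symm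
  · -- Reachable x y
    have a1 : G.Adj x x' := by
      rw [hGdef, SimpleGraph.fromEdgeSet_adj]
      exact ⟨Or.inl hxx'N, hxx'⟩
    have a2 : G.Adj x' a := by
      rw [hGdef, SimpleGraph.fromEdgeSet_adj]
      exact ⟨Or.inr (Set.mem_insert _ _), hx'a⟩
    have a3 : G.Adj a b := by
      rw [hGdef, SimpleGraph.fromEdgeSet_adj]
      exact ⟨Or.inl habN, hab⟩
    have a4 : G.Adj b y' := by
      rw [hGdef, SimpleGraph.fromEdgeSet_adj]
      refine ⟨Or.inr ?_, hby'⟩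
      rw [show s(b,y') = s(y',b) from Sym2.eq_swap]
      exact Set.mem_insert_of_mem _ rfl
    have a5 : G.Adj y' y := by
      rw [hGdef, SimpleGraph.fromEdgeSet_adj]
      exact ⟨Or.inl (mem_swap hyy'N), hy'y⟩
    exact a1.reachable.trans (a2.reachable.trans (a3.reachable.trans
      (a4.reachable.trans a5.reachable)))
  · -- classification
    intro u v huZ hvZ huv hreach
    have hux' : u ≠ x' := fun h => hx'Z (h ▸ huZ)
    have hua : u ≠ a := fun h => haZ (h ▸ huZ)
    have huy' : u ≠ y' := fun h => hy'Z (h ▸ huZ)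
    have hub : u ≠ b := fun h => hbZ (h ▸ huZ)
    have hvx' : v ≠ x' := fun h => hx'Z (h ▸ hvZ)
    have hva : v ≠ a := fun h => haZ (h ▸ hvZ)
    have hvy' : v ≠ y' := fun h => hy'Z (h ▸ hvZ)
    have hvb : v ≠ b := fun h => hbZ (h ▸ hvZ)
    obtain ⟨w, huw, huwne⟩ := pm_nbr hN u
    have hwa : w ≠ a := fun h =>
      hub (matching_unique hN.1 (mem_swap (by rw [← h]; exact huw)) habN)
    have hwb : w ≠ b := fun h =>
      hua (matching_unique hN.1 (mem_swap (by rw [← h]; exact huw)) (mem_swap habN))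
    by_cases hwx' : w = x'
    · have hu : u = x := by
        apply matching_unique hN.1 (mem_swap (by rw [← hwx']; exact huw)) (mem_swap hxx'N)
      have hcl : ∀ z ∈ ({u, x', a, b, y', y} : Set V), ∀ t,
          G.Adj z t → t ∈ ({u, x', a, b, y', y} : Set V) := by
        intro z hz t hadj
        simp only [Set.mem_insert_iff, Set.mem_singleton_iff] at hz ⊢
        rcases hz with rfl | rfl | rfl | rfl | rfl | rfl
        · rcases hstep _ _ hadj x' (by rw [← hwx']; exact huw) with
            rfl | ⟨h1, rfl⟩ | ⟨h1, rfl⟩ | ⟨h1, rfl⟩ | ⟨h1, rfl⟩ <;>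
            first | contradiction | simp
        · rcases hstep _ _ hadj u (mem_swap (by rw [← hwx']; exact huw)) with
            rfl | ⟨h1, rfl⟩ | ⟨h1, rfl⟩ | ⟨h1, rfl⟩ | ⟨h1, rfl⟩ <;>
            first | contradiction | simp
        · rcases hstep _ _ hadj b habN with
            rfl | ⟨h1, rfl⟩ | ⟨h1, rfl⟩ | ⟨h1, rfl⟩ | ⟨h1, rfl⟩ <;>
            first | contradiction | simp
        · rcases hstep _ _ hadj a (mem_swap habN) with
            rfl | ⟨h1, rfl⟩ | ⟨h1, rfl⟩ | ⟨h1, rfl⟩ | ⟨h1, rfl⟩ <;>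
            first | contradiction | simp
        · rcases hstep _ _ hadj y (mem_swap hyy'N) with
            rfl | ⟨h1, rfl⟩ | ⟨h1, rfl⟩ | ⟨h1, rfl⟩ | ⟨h1, rfl⟩ <;>
            first | contradiction | simp
        · rcases hstep _ _ hadj y' hyy'N with
            rfl | ⟨h1, rfl⟩ | ⟨h1, rfl⟩ | ⟨h1, rfl⟩ | ⟨h1, rfl⟩ <;>
            first | contradiction | simp
      have hmem := reach_closed hcl (by simp) hreach
      simp only [Set.mem_insert_iff, Set.mem_singleton_iff] at hmem
      rcases hmem with h | h | h | h | h | h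
      · exact absurd h.symm huv
      · exact absurd h hvx'
      · exact absurd h hva
      · exact absurd h hvb
      · exact absurd h hvy'
      · exact Or.inr (Or.inl ⟨hu, h⟩)
    · by_cases hwy' : w = y'
      · have hu : u = y := by
          apply matching_unique hN.1 (mem_swap (by rw [← hwy']; exact huw)) (mem_swap hyy'N)
        have hcl : ∀ z ∈ ({u, y', b, a, x', x} : Set V), ∀ t,
            G.Adj z t → t ∈ ({u, y', b, a, x', x} : Set V) := by
          intro z hz t hadj
          simp only [Set.mem_insert_iff, Set.mem_singleton_iff] at hz ⊢
          rcases hz with rfl | rfl | rfl | rfl | rfl | rfl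
          · rcases hstep _ _ hadj y' (by rw [← hwy']; exact huw) with
              rfl | ⟨h1, rfl⟩ | ⟨h1, rfl⟩ | ⟨h1, rfl⟩ | ⟨h1, rfl⟩ <;>
              first | contradiction | simp
          · rcases hstep _ _ hadj u (mem_swap (by rw [← hwy']; exact huw)) with
              rfl | ⟨h1, rfl⟩ | ⟨h1, rfl⟩ | ⟨h1, rfl⟩ | ⟨h1, rfl⟩ <;>
              first | contradiction | simp
          · rcases hstep _ _ hadj a (mem_swap habN) with
              rfl | ⟨h1, rfl⟩ | ⟨h1, rfl⟩ | ⟨h1, rfl⟩ | ⟨h1, rfl⟩ <;>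
              first | contradiction | simp
          · rcases hstep _ _ hadj b habN with
              rfl | ⟨h1, rfl⟩ | ⟨h1, rfl⟩ | ⟨h1, rfl⟩ | ⟨h1, rfl⟩ <;>
              first | contradiction | simp
          · rcases hstep _ _ hadj x (mem_swap hxx'N) with
              rfl | ⟨h1, rfl⟩ | ⟨h1, rfl⟩ | ⟨h1, rfl⟩ | ⟨h1, rfl⟩ <;>
              first | contradiction | simp
          · rcases hstep _ _ hadj x' hxx'N with
              rfl | ⟨h1, rfl⟩ | ⟨h1, rfl⟩ | ⟨h1, rfl⟩ | ⟨h1, rfl⟩ <;>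
              first | contradiction | simp
        have hmem := reach_closed hcl (by simp) hreach
        simp only [Set.mem_insert_iff, Set.mem_singleton_iff] at hmem
        rcases hmem with h | h | h | h | h | h
        · exact absurd h.symm huv
        · exact absurd h hvy'
        · exact absurd h hvb
        · exact absurd h hva
        · exact absurd h hvx'
        · exact Or.inr (Or.inr ⟨hu, h⟩)
      · have hcl : ∀ z ∈ ({u, w} : Set V), ∀ t,
            G.Adj z t → t ∈ ({u, w} : Set V) := by
          intro z hz t hadj
          simp only [Set.mem_insert_iff, Set.mem_singleton_iff] at hz ⊢
          rcases hz with rfl | rfl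
          · rcases hstep _ _ hadj w huw with
              rfl | ⟨h1, rfl⟩ | ⟨h1, rfl⟩ | ⟨h1, rfl⟩ | ⟨h1, rfl⟩ <;>
              first | contradiction | simp
          · rcases hstep _ _ hadj u (mem_swap huw) with
              rfl | ⟨h1, rfl⟩ | ⟨h1, rfl⟩ | ⟨h1, rfl⟩ | ⟨h1, rfl⟩ <;>
              first | contradiction | simp
        have hmem := reach_closed hcl (by simp) hreach
        simp only [Set.mem_insert_iff, Set.mem_singleton_iff] at hmem
        rcases hmem with h | h
        · exact absurd h.symm huv
        · left; rw [h]; exact huw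

set_option maxHeartbeats 1000000 in
/-- If a `k`-configuration has at least `(|Z|+2)k + 1` exclusively blue edges
lying outside `Z`, and `x, y ∈ Z` have their blue neighbours outside `Z`, then there is a red
matching of size `2` with all endpoints outside `Z` whose reduced configuration, restricted to
pairs inside `Z`, consists exactly of the original edges (with the same colours) plus the new
blue edge `xy`. -/
theorem embed_edge (k : ℕ) (V : Type) [Fintype V]
    (Mc : Fin k → Set (Sym2 V)) (hMc : IsConfig Mc) (blue : Fin k)
    (Z : Set V) (x y : V) (hx : x ∈ Z) (hy : y ∈ Z) (hxy : x ≠ y)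
    (hexcl : (Z.ncard + 2) * k + 1 ≤
      {e ∈ Mc blue | (∀ j : Fin k, j ≠ blue → e ∉ Mc j) ∧ ∀ v ∈ e, v ∉ Z}.ncard)
    (hxblue : ∀ x' : V, s(x, x') ∈ Mc blue → x' ∉ Z)
    (hyblue : ∀ y' : V, s(y, y') ∈ Mc blue → y' ∉ Z) :
    ∃ M : Set (Sym2 V), IsRedMatching Mc M ∧ M.ncard = 2 ∧
      (∀ e ∈ M, ∀ v ∈ e, v ∉ Z) ∧
      ∀ (i : Fin k) (f : Sym2 V), (∀ v ∈ f, v ∈ Z) →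
        (f ∈ reducedColour (Mc i) M ↔ (f ∈ Mc i ∨ (f = s(x, y) ∧ i = blue))) := by
  classical
  obtain ⟨x', hxx'N, hxx'ne⟩ := pm_nbr (hMc blue) x
  obtain ⟨y', hyy'N, hyy'ne⟩ := pm_nbr (hMc blue) y
  have hx'Z : x' ∉ Z := hxblue x' hxx'N
  have hy'Z : y' ∉ Z := hyblue y' hyy'N
  have hx'y' : x' ≠ y' := by
    intro h
    have h2 : s(y, x') ∈ Mc blue := by rw [h]; exact hyy'N
    exact hxy (matching_unique (hMc blue).1 (mem_swap hxx'N) (mem_swap h2))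
  obtain ⟨a, b, hab, habN, hexab, haZ, hbZ, hgA, hgB⟩ :=
    exists_good_edge Mc hMc blue Z x' y' hexcl
  have hax' : a ≠ x' := fun h => (hgA blue x (by rw [h]; exact mem_swap hxx'N)).1 hx
  have hay' : a ≠ y' := fun h => (hgA blue y (by rw [h]; exact mem_swap hyy'N)).1 hy
  have hbx' : b ≠ x' := fun h => (hgB blue x (by rw [h]; exact mem_swap hxx'N)).1 hx
  have hby' : b ≠ y' := fun h => (hgB blue y (by rw [h]; exact mem_swap hyy'N)).1 hy
  have hx'a : x' ≠ a := hax'.symm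
  have hy'b : y' ≠ b := hby'.symm
  have hx'b : x' ≠ b := hbx'.symm
  have hay'2 : a ≠ y' := hay'
  -- availability
  have havail1 : ∀ i, s(x',a) ∉ Mc i := fun i h => (hgA i x' (mem_swap h)).2.1 rfl
  have havail2 : ∀ i, s(y',b) ∉ Mc i := fun i h => (hgB i y' (mem_swap h)).2.2 rfl
  -- the red matching
  have hedgene : s(x',a) ≠ s(y',b) := by
    intro h
    rcases Sym2.eq_iff.1 h with ⟨h1, h2⟩ | ⟨h1, h2⟩
    · exact hx'y' h1
    · exact hx'b h1
  have hcovmem : ∀ v : V, v ∈ covered ({s(x',a), s(y',b)} : Set (Sym2 V)) →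
      v = x' ∨ v = a ∨ v = y' ∨ v = b := by
    rintro v ⟨e, he, hv⟩
    rcases he with rfl | he
    · rcases Sym2.mem_iff.1 hv with rfl | rfl
      · exact Or.inl rfl
      · exact Or.inr (Or.inl rfl)
    · rw [Set.mem_singleton_iff] at he
      subst he
      rcases Sym2.mem_iff.1 hv with rfl | rfl
      · exact Or.inr (Or.inr (Or.inl rfl))
      · exact Or.inr (Or.inr (Or.inr rfl))
  have hcovZ : ∀ v ∈ Z, v ∉ covered ({s(x',a), s(y',b)} : Set (Sym2 V)) := by
    intro v hv hc
    rcases hcovmem v hc with rfl | rfl | rfl | rfl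
    · exact hx'Z hv
    · exact haZ hv
    · exact hy'Z hv
    · exact hbZ hv
  -- per-colour analysis
  have keyB := colourB (hMc blue) hxx'N hyy'N habN hx hy hxy hx'a hy'b hx'y' hx'b hay' hab
    hx'Z haZ hy'Z hbZ
  have keyA : ∀ i : Fin k, i ≠ blue →
      (SimpleGraph.fromEdgeSet (Mc i ∪ {s(x',a), s(y',b)})).IsAcyclic ∧
      ∀ u v : V, u ∈ Z → v ∈ Z → u ≠ v →
        (SimpleGraph.fromEdgeSet (Mc i ∪ {s(x',a), s(y',b)})).Reachable u v →
        s(u,v) ∈ Mc i := by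
    intro i hne
    exact colourA (hMc i) hx'a hy'b hx'y' hx'b hay' hab hx'Z haZ hy'Z hbZ
      (fun w hw => hgA i w hw) (fun w hw => hgB i w hw) (hexab i hne)
  refine ⟨{s(x',a), s(y',b)}, ⟨?_, ?_, ?_⟩, ?_, ?_, ?_⟩
  · -- IsMatchingE
    constructor
    · rintro e (rfl | he)
      · exact fun h => hx'a (Sym2.mk_isDiag_iff.1 h)
      · rw [Set.mem_singleton_iff] at he
        subst he
        exact fun h => hy'b (Sym2.mk_isDiag_iff.1 h)
    · rintro e he f hf hef v hve hvf
      rcases he with rfl | he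
      · rcases hf with hf | hf
        · exact hef hf.symm
        · rw [Set.mem_singleton_iff] at hf
          subst hf
          rcases Sym2.mem_iff.1 hve with rfl | rfl <;> rcases Sym2.mem_iff.1 hvf with h | h
          · exact hx'y' h
          · exact hx'b h
          · exact hay' h
          · exact hab h
      · rw [Set.mem_singleton_iff] at he
        subst he
        rcases hf with rfl | hf
        · rcases Sym2.mem_iff.1 hve with rfl | rfl <;> rcases Sym2.mem_iff.1 hvf with h | h
          · exact hx'y' h.symm
          · exact hay' h.symm
          · exact hx'b h.symm
          · exact hab h.symm
        · rw [Set.mem_singleton_iff] at hf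
          subst hf
          exact hef rfl
  · -- available
    rintro e (rfl | he)
    · exact ⟨fun h => hx'a (Sym2.mk_isDiag_iff.1 h), havail1⟩
    · rw [Set.mem_singleton_iff] at he
      subst he
      exact ⟨fun h => hy'b (Sym2.mk_isDiag_iff.1 h), havail2⟩
  · -- acyclic
    intro i
    rw [Set.union_comm]
    by_cases hib : i = blue
    · subst hib
      exact keyB.1
    · exact (keyA i hib).1
  · -- ncard
    exact Set.ncard_pair hedgene
  · -- endpoints outside Z
    rintro e (rfl | he) v hv
    · rcases Sym2.mem_iff.1 hv with rfl | rfl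
      · exact hx'Z
      · exact haZ
    · rw [Set.mem_singleton_iff] at he
      subst he
      rcases Sym2.mem_iff.1 hv with rfl | rfl
      · exact hy'Z
      · exact hbZ
  · -- the reduced-colour characterisation
    intro i f hfZ
    constructor
    · rintro ⟨u, v, rfl, huv, hucov, hvcov, hreach⟩
      have huZ : u ∈ Z := hfZ u (Sym2.mem_mk_left _ _)
      have hvZ : v ∈ Z := hfZ v (Sym2.mem_mk_right _ _)
      by_cases hib : i = blue
      · subst hib
        rcases keyB.2.2 u v huZ hvZ huv hreach with h | ⟨rfl, rfl⟩ | ⟨rfl, rfl⟩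
        · exact Or.inl h
        · exact Or.inr ⟨rfl, rfl⟩
        · exact Or.inr ⟨Sym2.eq_swap, rfl⟩
      · exact Or.inl ((keyA i hib).2 u v huZ hvZ huv hreach)
    · rintro (hf | ⟨rfl, rfl⟩)
      · obtain ⟨u, v, rfl⟩ : ∃ u v, f = s(u,v) := by
          obtain ⟨⟨u, v⟩, h⟩ := Quot.exists_rep f
          exact ⟨u, v, h.symm⟩
        have huv : u ≠ v := fun h => (hMc i).1.1 _ hf (by rw [← h] at hf ⊢; exact Sym2.mk_isDiag_iff.mpr rfl)
        have huZ : u ∈ Z := hfZ u (Sym2.mem_mk_left _ _)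
        have hvZ : v ∈ Z := hfZ v (Sym2.mem_mk_right _ _)
        refine ⟨u, v, rfl, huv, hcovZ u huZ, hcovZ v hvZ, ?_⟩
        exact (SimpleGraph.Adj.reachable ((SimpleGraph.fromEdgeSet_adj _).2 ⟨Or.inl hf, huv⟩))
      · exact ⟨x, y, rfl, hxy, hcovZ x hx, hcovZ y hy, keyB.2.1⟩

end Kotzig
end

section
/- For all integers k, m ≥ 2 there exists a constant C = C(k, m) such that the following holds for every k-configuration A of order m. If M is a k-configuration such that, for each of the k colours i, at least C edges of M have colour i and no other colour, then there exists a red matching M* of M whose reduced configuration contains A as a subconfiguration, i.e., there is an injection φ from the vertex set of A into the vertex set of the reduced configuration such that for every edge uv of A of colour i, φ(u)φ(v) is an edge of colour i of the reduced configuration. -/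
set_option linter.unusedSectionVars false


open scoped Classical

namespace Kotzig

variable {V : Type}

open SimpleGraph

/-- key partner existence -/
lemma exists_partner {Mi : Set (Sym2 V)} (h : IsPerfectMatchingE Mi) (v : V) :
    ∃ w, s(v, w) ∈ Mi ∧ w ≠ v ∧ ∀ z, s(v, z) ∈ Mi → z = w := by
  obtain ⟨e, heM, hve⟩ := h.2 v
  induction e with
  | _ a b =>
    have hcases : v = a ∨ v = b := by
      simpa [Sym2.mem_iff] using hve
    have key : ∀ w, s(v, w) ∈ Mi → ∀ z, s(v, z) ∈ Mi → z = w := by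
      intro w hw z hz
      by_cases hzw : s(v, z) = s(v, w)
      · rcases (Sym2.eq_iff.1 hzw) with ⟨-, h2⟩ | ⟨h1, h2⟩
        · exact h2
        · subst h1; exact h2.symm ▸ rfl
      · exact absurd (h.1.2 _ hz _ hw hzw v (Sym2.mem_mk_left _ _)) (by simp)
    rcases hcases with rfl | rfl
    · refine ⟨b, heM, ?_, key b heM⟩
      intro hbv; exact h.1.1 _ heM (by simp [hbv.symm, Sym2.mk_isDiag_iff])
    · have : s(v, a) ∈ Mi := by rwa [Sym2.eq_swap]
      refine ⟨a, this, ?_, key a this⟩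
      intro hav; exact h.1.1 _ heM (by simp [hav.symm, Sym2.mk_isDiag_iff])

noncomputable def pmPartner {Mi : Set (Sym2 V)} (h : IsPerfectMatchingE Mi) (v : V) : V :=
  (exists_partner h v).choose

lemma pmPartner_mem {Mi : Set (Sym2 V)} (h : IsPerfectMatchingE Mi) (v : V) :
    s(v, pmPartner h v) ∈ Mi := (exists_partner h v).choose_spec.1

lemma pmPartner_ne {Mi : Set (Sym2 V)} (h : IsPerfectMatchingE Mi) (v : V) :
    pmPartner h v ≠ v := (exists_partner h v).choose_spec.2.1

lemma pmPartner_eq {Mi : Set (Sym2 V)} (h : IsPerfectMatchingE Mi) {v z : V}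
    (hz : s(v, z) ∈ Mi) : z = pmPartner h v := (exists_partner h v).choose_spec.2.2 z hz

lemma pmPartner_invol {Mi : Set (Sym2 V)} (h : IsPerfectMatchingE Mi) (v : V) :
    pmPartner h (pmPartner h v) = v :=
  (pmPartner_eq h (by rw [Sym2.eq_swap]; exact pmPartner_mem h v)).symm

/-- reachability confinement -/
lemma reach_confined {G : SimpleGraph V} {T : Set V}
    (hT : ∀ a ∈ T, ∀ b, G.Adj a b → b ∈ T) {x u : V} (hx : x ∈ T)
    (h : G.Reachable x u) : u ∈ T := by
  obtain ⟨p⟩ := h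
  induction p with
  | nil => exact hx
  | cons h p ih => exact ih (hT _ hx _ h)


/-- a matching graph is acyclic -/
lemma matching_acyclic_s11 {E : Set (Sym2 V)}
    (h : ∀ e ∈ E, ∀ f ∈ E, e ≠ f → ∀ v : V, v ∈ e → v ∉ f) :
    (fromEdgeSet E).IsAcyclic := by
  rw [isAcyclic_iff_forall_adj_isBridge]
  intro a b hab
  rw [isBridge_iff]
  intro hreach
  have hconf : ∀ u, (fromEdgeSet E \ fromEdgeSet {s(a, b)}).Reachable a u →
      u ∈ ({a} : Set V) := by
    intro u hu
    refine reach_confined ?_ rfl hu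
    intro c hc d hcd
    have hca : c = a := hc
    subst hca
    obtain ⟨hadj, hnadj⟩ := hcd
    exfalso
    rw [fromEdgeSet_adj] at hadj
    by_cases heq : s(c, d) = s(c, b)
    · exact hnadj (by rw [fromEdgeSet_adj]; exact ⟨by simp [heq], hadj.2⟩)
    · exact h _ hadj.1 _ ((fromEdgeSet_adj E).1 hab).1 heq c (Sym2.mem_mk_left _ _)
        (Sym2.mem_mk_left _ _)
  have := hconf b hreach
  simp only [Set.mem_singleton_iff] at this
  exact (fromEdgeSet_adj E).1 hab |>.2 this.symm

/-- walks in a graph with one extra edge -/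
lemma walk_insert_cases {E : Set (Sym2 V)} {u v : V} :
    ∀ {x y : V}, (fromEdgeSet (insert s(u,v) E)).Walk x y →
      (fromEdgeSet E).Reachable x y ∨
      ((fromEdgeSet E).Reachable x u ∧ (fromEdgeSet E).Reachable v y) ∨
      ((fromEdgeSet E).Reachable x v ∧ (fromEdgeSet E).Reachable u y) := by
  intro x y p
  induction p with
  | nil => exact Or.inl (Reachable.refl _)
  | @cons a c y h p ih =>
    rw [fromEdgeSet_adj, Set.mem_insert_iff] at h
    obtain ⟨h1 | h1, hne⟩ := h
    · rcases Sym2.eq_iff.1 h1 with ⟨rfl, rfl⟩ | ⟨rfl, rfl⟩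
      · -- a = u, c = v
        rcases ih with h2 | ⟨h2, h3⟩ | ⟨h2, h3⟩
        · exact Or.inr (Or.inl ⟨Reachable.refl _, h2⟩)
        · exact Or.inl (h2.symm.trans h3)
        · exact Or.inl h3
      · -- a = v, c = u
        rcases ih with h2 | ⟨h2, h3⟩ | ⟨h2, h3⟩
        · exact Or.inr (Or.inr ⟨Reachable.refl _, h2⟩)
        · exact Or.inl h3
        · exact Or.inl (h2.symm.trans h3)
    · have hac : (fromEdgeSet E).Reachable a c :=
        Adj.reachable (by rw [fromEdgeSet_adj]; exact ⟨h1, hne⟩)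
      rcases ih with h2 | ⟨h2, h3⟩ | ⟨h2, h3⟩
      · exact Or.inl (hac.trans h2)
      · exact Or.inr (Or.inl ⟨hac.trans h2, h3⟩)
      · exact Or.inr (Or.inr ⟨hac.trans h2, h3⟩)

/-- adding an edge between vertices in different components keeps acyclicity -/
lemma acyclic_insert {E : Set (Sym2 V)} {u v : V}
    (hacy : (fromEdgeSet E).IsAcyclic) (hne : u ≠ v)
    (hreach : ¬ (fromEdgeSet E).Reachable u v) :
    (fromEdgeSet (insert s(u,v) E)).IsAcyclic := by
  rw [isAcyclic_iff_forall_adj_isBridge]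
  intro a b hab
  rw [isBridge_iff]
  intro hr
  have hab' := (fromEdgeSet_adj _).1 hab
  by_cases heq : s(a, b) = s(u, v)
  · -- the new edge: a path avoiding it lives in fromEdgeSet E
    have hmono : (fromEdgeSet (insert s(u,v) E) \ fromEdgeSet {s(a,b)}) ≤ fromEdgeSet E := by
      intro x y hxy
      obtain ⟨hxy1, hxy2⟩ := hxy
      rw [fromEdgeSet_adj] at hxy1 ⊢
      rcases Set.mem_insert_iff.1 hxy1.1 with h | h
      · exact absurd (by rw [fromEdgeSet_adj]; exact ⟨by rw [heq]; simp [h], hxy1.2⟩) hxy2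
      · exact ⟨h, hxy1.2⟩
    have : (fromEdgeSet E).Reachable a b := hr.mono hmono
    rcases Sym2.eq_iff.1 heq with ⟨rfl, rfl⟩ | ⟨rfl, rfl⟩
    · exact hreach this
    · exact hreach this.symm
  · -- an old edge
    have habE : s(a, b) ∈ E := by
      rcases Set.mem_insert_iff.1 hab'.1 with h | h
      · exact absurd h heq
      · exact h
    have hmono : (fromEdgeSet (insert s(u,v) E) \ fromEdgeSet {s(a,b)}) ≤
        fromEdgeSet (insert s(u,v) (E \ {s(a,b)})) := by
      intro x y hxy
      obtain ⟨hxy1, hxy2⟩ := hxy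
      rw [fromEdgeSet_adj] at hxy1 ⊢
      have hne2 : s(x, y) ≠ s(a, b) := by
        intro hcon
        exact hxy2 (by rw [fromEdgeSet_adj]; exact ⟨by simp [hcon], hxy1.2⟩)
      rcases Set.mem_insert_iff.1 hxy1.1 with h | h
      · exact ⟨Set.mem_insert_iff.2 (Or.inl h), hxy1.2⟩
      · exact ⟨Set.mem_insert_iff.2 (Or.inr ⟨h, hne2⟩), hxy1.2⟩
    obtain ⟨p⟩ := hr.mono hmono
    have hEsub : fromEdgeSet (E \ {s(a,b)}) ≤ fromEdgeSet E :=
      fromEdgeSet_mono Set.diff_subset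
    have habbr : (fromEdgeSet E).IsBridge s(a,b) :=
      isAcyclic_iff_forall_adj_isBridge.1 hacy (by rw [fromEdgeSet_adj]; exact ⟨habE, hab'.2⟩)
    have hnr : ¬ (fromEdgeSet (E \ {s(a,b)})).Reachable a b := by
      intro hcon
      rw [isBridge_iff] at habbr
      refine habbr (hcon.mono ?_)
      intro x y hxy
      rw [fromEdgeSet_adj] at hxy
      obtain ⟨hmemd, hxyne⟩ := hxy
      obtain ⟨hmem, hne'⟩ := (Set.mem_diff _).1 hmemd
      exact ⟨(by rw [fromEdgeSet_adj]; exact ⟨hmem, hxyne⟩), by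
        intro hcon2
        rw [fromEdgeSet_adj] at hcon2
        exact hne' (by simpa using hcon2.1)⟩
    rcases walk_insert_cases p with h2 | ⟨h2, h3⟩ | ⟨h2, h3⟩
    · exact hnr h2
    · -- a ~ u, v ~ b in E \ {ab}; then u ~ v in E via edge ab
      refine hreach ?_
      have hadjE : (fromEdgeSet E).Adj a b := by rw [fromEdgeSet_adj]; exact ⟨habE, hab'.2⟩
      exact ((h2.mono hEsub).symm.trans hadjE.reachable).trans (h3.mono hEsub).symm
    · refine hreach ?_
      have hadjE : (fromEdgeSet E).Adj a b := by rw [fromEdgeSet_adj]; exact ⟨habE, hab'.2⟩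
      exact ((h3.mono hEsub).trans hadjE.reachable.symm).trans (h2.mono hEsub)

variable {k : ℕ} {Mc : Fin k → Set (Sym2 V)}

lemma exists_fresh [Fintype V] (hMc : IsConfig Mc) (i : Fin k) {C : ℕ}
    (hC : C ≤ {e ∈ Mc i | ∀ j : Fin k, j ≠ i → e ∉ Mc j}.ncard)
    (S : Finset V) (hS : (k+1) * S.card < C) :
    ∃ x y : V, s(x, y) ∈ Mc i ∧ (∀ j, j ≠ i → s(x,y) ∉ Mc j) ∧
      x ∉ S ∧ y ∉ S ∧ (∀ j, pmPartner (hMc j) x ∉ S) ∧ (∀ j, pmPartner (hMc j) y ∉ S) := by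
  classical
  set E : Set (Sym2 V) := {e ∈ Mc i | ∀ j : Fin k, j ≠ i → e ∉ Mc j} with hE
  have hEne : E.Nonempty := by
    apply Set.nonempty_of_ncard_ne_zero
    omega
  have hVne : Nonempty V := by
    obtain ⟨e0, -⟩ := hEne
    induction e0 with
    | _ x y => exact ⟨x⟩
  set F : Finset V := S ∪ Finset.image (fun p : Fin k × V => pmPartner (hMc p.1) p.2)
      (Finset.univ ×ˢ S) with hF
  have hFcard : F.card ≤ (k+1) * S.card := by
    calc F.card ≤ S.card + (Finset.image (fun p : Fin k × V => pmPartner (hMc p.1) p.2)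
        (Finset.univ ×ˢ S)).card := Finset.card_union_le _ _
      _ ≤ S.card + (Finset.univ ×ˢ S).card :=
          Nat.add_le_add_left Finset.card_image_le _
      _ = S.card + k * S.card := by
          rw [Finset.card_product, Finset.card_univ, Fintype.card_fin]
      _ = (k+1) * S.card := by ring
  have hnpF : ∀ (j : Fin k) (z : V), pmPartner (hMc j) z ∈ S → z ∈ F := by
    intro j z hz
    refine Finset.mem_union_right _ (Finset.mem_image.2 ⟨(j, pmPartner (hMc j) z), ?_, ?_⟩)
    · exact Finset.mem_product.2 ⟨Finset.mem_univ _, hz⟩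
    · simpa using pmPartner_invol (hMc j) z
  set B : Set (Sym2 V) := {e ∈ E | ∃ z, z ∈ (F : Set V) ∧ z ∈ e} with hB
  set f : Sym2 V → V := fun e =>
    if h : ∃ z, z ∈ (F : Set V) ∧ z ∈ e then h.choose else Classical.arbitrary V with hf
  have hfB : ∀ e, (h : ∃ z, z ∈ (F : Set V) ∧ z ∈ e) → f e ∈ (F : Set V) ∧ f e ∈ e := by
    intro e h
    rw [hf]
    dsimp only
    rw [dif_pos h]
    exact h.choose_spec
  have hBcard : B.ncard ≤ F.card := by
    have h2 : B.ncard ≤ (F : Set V).ncard := by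
      refine Set.ncard_le_ncard_of_injOn f ?_ ?_ (Set.toFinite _)
      · rintro e ⟨heE, hz⟩
        exact (hfB e hz).1
      · rintro e1 ⟨he1E, hz1⟩ e2 ⟨he2E, hz2⟩ heq
        by_contra hne
        have hc1 := (hfB e1 hz1).2
        have hc2 := (hfB e2 hz2).2
        rw [heq] at hc1
        exact (hMc i).1.2 e1 he1E.1 e2 he2E.1 hne _ hc1 hc2
    simpa [Set.ncard_coe_finset] using h2
  have hnotsub : ¬ E ⊆ B := by
    intro hsub
    have h1 : E.ncard ≤ B.ncard := Set.ncard_le_ncard hsub (Set.toFinite _)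
    omega
  obtain ⟨e, heE, heB⟩ := Set.not_subset.1 hnotsub
  induction e with
  | _ x y =>
    refine ⟨x, y, heE.1, heE.2, ?_, ?_, ?_, ?_⟩
    · intro hxS
      exact heB ⟨heE, x, by simp [hF, hxS], Sym2.mem_mk_left _ _⟩
    · intro hyS
      exact heB ⟨heE, y, by simp [hF, hyS], Sym2.mem_mk_right _ _⟩
    · intro j hj
      exact heB ⟨heE, x, by simpa using hnpF j x hj, Sym2.mem_mk_left _ _⟩
    · intro j hj
      exact heB ⟨heE, y, by simpa using hnpF j y hj, Sym2.mem_mk_right _ _⟩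

/- ===================== the construction state ===================== -/

structure St (k : ℕ) (W V : Type) where
  P : Finset W
  S : Finset V
  M : Finset (Sym2 V)
  root : W → V
  endv : W → Fin k → V
  T : W → Fin k → Finset V
  L : Finset (W × Fin k)

variable {k : ℕ} {W V : Type}

noncomputable def block (st : St k W V) (w : W) (i : Fin k) : Finset (Fin k) :=
  Finset.univ.filter (fun j => st.endv w j = st.endv w i)

noncomputable def meas (st : St k W V) : ℕ := ∑ p ∈ st.L, (block st p.1 p.2).card

noncomputable def pot [Fintype W] (st : St k W V) : ℕ :=
  (k*k + 2*k + 1) * (Fintype.card W - st.P.card) + meas st + 2 * st.L.card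

def SB (k m : ℕ) : ℕ := (k+2) * ((k*k+2*k+1) * m + 1)

variable [Fintype V] [Fintype W]

structure Inv (Mc : Fin k → Set (Sym2 V)) (A : Fin k → Set (Sym2 W))
    (hMc : IsConfig Mc) (hA : IsConfig A) (st : St k W V) : Prop where
  hM : IsMatchingE (↑st.M : Set (Sym2 V))
  hAvail : ∀ e ∈ (↑st.M : Set (Sym2 V)), Available Mc e
  hAcy : ∀ l, (fromEdgeSet (↑st.M ∪ Mc l)).IsAcyclic
  hCov : covered (↑st.M : Set (Sym2 V)) ⊆ ↑st.S
  hRootCov : ∀ w ∈ st.P, st.root w ∉ covered (↑st.M : Set (Sym2 V))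
  hRootS : ∀ w ∈ st.P, st.root w ∈ st.S
  hRootInj : ∀ w ∈ st.P, ∀ w' ∈ st.P, st.root w = st.root w' → w = w'
  hLP : ∀ p ∈ st.L, p.1 ∈ st.P
  hEndS : ∀ p ∈ st.L, st.endv p.1 p.2 ∈ st.S
  hEndCov : ∀ p ∈ st.L, st.endv p.1 p.2 ∉ covered (↑st.M : Set (Sym2 V))
  hD : ∀ p ∈ st.L, ∀ q ∈ st.L, p.1 ≠ q.1 → st.endv p.1 p.2 ≠ st.endv q.1 q.2
  hD2 : ∀ p ∈ st.L, ∀ w' ∈ st.P, st.endv p.1 p.2 ≠ st.root w'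
  hTend : ∀ p ∈ st.L, st.endv p.1 p.2 ∈ st.T p.1 p.2
  hTS : ∀ p ∈ st.L, ∀ v ∈ st.T p.1 p.2, v ∈ st.S
  hC1 : ∀ p ∈ st.L, ∀ v ∈ st.T p.1 p.2, ∃ v' ∈ st.T p.1 p.2, s(v, v') ∈ Mc p.2
  hC2 : ∀ p ∈ st.L, ∀ v ∈ st.T p.1 p.2, ∀ z, s(v, z) ∈ (↑st.M : Set (Sym2 V)) →
        z ∈ st.T p.1 p.2
  hU : ∀ p ∈ st.L, ∀ v ∈ st.T p.1 p.2, v ∉ covered (↑st.M : Set (Sym2 V)) →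
        v = st.root p.1 ∨ v = st.endv p.1 p.2
  hR : ∀ p ∈ st.L, (fromEdgeSet (↑st.M ∪ Mc p.2)).Reachable (st.root p.1) (st.endv p.1 p.2)
  hDone : ∀ w ∈ st.P, ∀ i, (w, i) ∉ st.L →
        (fromEdgeSet (↑st.M ∪ Mc i)).Reachable (st.root w) (st.root (pmPartner (hA i) w))
  hCard : st.S.card + (k+2) * pot st ≤ SB k (Fintype.card W)

section Steps

variable {Mc : Fin k → Set (Sym2 V)} {A : Fin k → Set (Sym2 W)}
variable {hMc : IsConfig Mc} {hA : IsConfig A}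

/-- basic facts about inserting an available edge on uncovered vertices -/
lemma mem_covered_insert {e : Sym2 V} {Ms : Set (Sym2 V)} {v : V} :
    v ∈ covered (insert e Ms) ↔ v ∈ e ∨ v ∈ covered Ms := by
  constructor
  · rintro ⟨f, hf, hvf⟩
    rcases Set.mem_insert_iff.1 hf with rfl | hf
    · exact Or.inl hvf
    · exact Or.inr ⟨f, hf, hvf⟩
  · rintro (hv | ⟨f, hf, hvf⟩)
    · exact ⟨e, Set.mem_insert _ _, hv⟩
    · exact ⟨f, Set.mem_insert_iff.2 (Or.inr hf), hvf⟩

lemma matching_insert {e : Sym2 V} {Ms : Set (Sym2 V)} (hM : IsMatchingE Ms)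
    (he : ¬ e.IsDiag) (hecov : ∀ v ∈ e, v ∉ covered Ms) :
    IsMatchingE (insert e Ms) := by
  constructor
  · rintro f hf
    rcases Set.mem_insert_iff.1 hf with rfl | hf
    · exact he
    · exact hM.1 f hf
  · rintro f hf g hg hfg v hvf
    rcases Set.mem_insert_iff.1 hf with rfl | hf'
    · rcases Set.mem_insert_iff.1 hg with rfl | hg'
      · exact absurd rfl hfg
      · intro hvg; exact hecov v hvf ⟨g, hg', hvg⟩
    · rcases Set.mem_insert_iff.1 hg with rfl | hg'
      · intro hvg; exact hecov v hvg ⟨f, hf', hvf⟩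
      · exact hM.2 f hf' g hg' hfg v hvf

/-- no reachability into a fresh pendant pair -/
lemma not_reach_fresh {Ms : Set (Sym2 V)} {l : Fin k} {x u : V}
    (hx : x ∉ covered Ms) (hx2 : pmPartner (hMc l) x ∉ covered Ms)
    (hu1 : u ≠ x) (hu2 : u ≠ pmPartner (hMc l) x) :
    ¬ (fromEdgeSet (Ms ∪ Mc l)).Reachable x u := by
  intro hre
  have hconf : u ∈ ({x, pmPartner (hMc l) x} : Set V) := by
    refine reach_confined ?_ (by simp) hre
    rintro a ha b hab
    rw [fromEdgeSet_adj] at hab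
    obtain ⟨hmem, hne⟩ := hab
    rcases ha with rfl | ha
    · rcases hmem with hmem | hmem
      · exact absurd ⟨_, hmem, Sym2.mem_mk_left _ _⟩ hx
      · right; rw [Set.mem_singleton_iff]; exact pmPartner_eq (hMc l) hmem
    · rw [Set.mem_singleton_iff] at ha; subst ha
      rcases hmem with hmem | hmem
      · exact absurd ⟨_, hmem, Sym2.mem_mk_left _ _⟩ hx2
      · left
        have := pmPartner_eq (hMc l) hmem
        rw [this, pmPartner_invol]
    -- done
  rcases hconf with h | h
  · exact hu1 h
  · exact hu2 h

end Steps

section Steps2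

variable {Mc : Fin k → Set (Sym2 V)} {A : Fin k → Set (Sym2 W)}
variable {hMc : IsConfig Mc} {hA : IsConfig A}

lemma reach_mono_ins {Ms : Set (Sym2 V)} {e : Sym2 V} {l : Fin k} {a b : V}
    (h : (fromEdgeSet (Ms ∪ Mc l)).Reachable a b) :
    (fromEdgeSet (insert e Ms ∪ Mc l)).Reachable a b :=
  h.mono (fromEdgeSet_mono (Set.union_subset_union_left _ (Set.subset_insert _ _)))

/-- adding a red edge from a covered-set vertex to a globally fresh vertex is always safe -/
lemma extend_M {S : Finset V} {M : Finset (Sym2 V)}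
    (hM : IsMatchingE (↑M : Set (Sym2 V)))
    (hAvail : ∀ e ∈ (↑M : Set (Sym2 V)), Available Mc e)
    (hAcy : ∀ l, (fromEdgeSet (↑M ∪ Mc l)).IsAcyclic)
    (hCov : covered (↑M : Set (Sym2 V)) ⊆ ↑S)
    {u x : V} (hu : u ∈ S) (hucov : u ∉ covered (↑M : Set (Sym2 V)))
    (hxS : x ∉ S) (hxnp : ∀ j, pmPartner (hMc j) x ∉ S) :
    IsMatchingE (insert s(u,x) (↑M : Set (Sym2 V))) ∧
    (∀ e ∈ (insert s(u,x) (↑M : Set (Sym2 V))), Available Mc e) ∧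
    (∀ l, (fromEdgeSet (insert s(u,x) (↑M : Set (Sym2 V)) ∪ Mc l)).IsAcyclic) := by
  have hux : u ≠ x := fun h => hxS (h ▸ hu)
  have hxcov : x ∉ covered (↑M : Set (Sym2 V)) := fun h => hxS (hCov h)
  have havail : Available Mc s(u, x) := by
    refine ⟨by simp [Sym2.mk_isDiag_iff, hux], ?_⟩
    intro j hmem
    have : u = pmPartner (hMc j) x := pmPartner_eq (hMc j) (by rwa [Sym2.eq_swap] at hmem)
    exact hxnp j (this ▸ hu)
  refine ⟨?_, ?_, ?_⟩
  · refine matching_insert hM havail.1 ?_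
    intro v hv
    rcases Sym2.mem_iff.1 hv with rfl | rfl
    · exact hucov
    · exact hxcov
  · intro e he
    rcases Set.mem_insert_iff.1 he with rfl | he
    · exact havail
    · exact hAvail e he
  · intro l
    rw [Set.insert_union]
    refine acyclic_insert (hAcy l) hux ?_
    intro hre
    refine not_reach_fresh (hMc := hMc) hxcov ?_ hux ?_ hre.symm
    · intro hcon; exact hxnp l (hCov hcon)
    · intro hcon; exact hxnp l (hcon ▸ hu)

/-- the junction step : connect the colour-`i` strands of a matched pair of `A` -/
lemma step_junction
    (hEx : ∀ i : Fin k, (k+1) * SB k (Fintype.card W) + 1 ≤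
      {e ∈ Mc i | ∀ j : Fin k, j ≠ i → e ∉ Mc j}.ncard)
    {st : St k W V} (inv : Inv Mc A hMc hA st)
    (hSing : ∀ p ∈ st.L, ∀ q ∈ st.L, p.1 = q.1 →
      st.endv p.1 p.2 = st.endv q.1 q.2 → p.2 = q.2)
    (hLsym : ∀ p ∈ st.L, ((pmPartner (hA p.2) p.1, p.2) : W × Fin k) ∈ st.L)
    (hPuniv : st.P = Finset.univ)
    {w : W} {i : Fin k} (hwi : (w, i) ∈ st.L) :
    ∃ st' : St k W V, Inv Mc A hMc hA st' ∧ st'.P = st.P ∧ st'.root = st.root ∧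
      st'.endv = st.endv ∧
      st'.L = (st.L.erase (w,i)).erase (pmPartner (hA i) w, i) := by
  classical
  set w' : W := pmPartner (hA i) w with hw'
  have hw'L : ((w', i) : W × Fin k) ∈ st.L := hLsym (w, i) hwi
  have hww' : w ≠ w' := (pmPartner_ne (hA i) w).symm
  set a : V := st.endv w i with ha
  set a' : V := st.endv w' i with ha'
  have haa' : a ≠ a' := inv.hD (w,i) hwi (w',i) hw'L hww'
  -- greedy choice of a fresh exclusive edge of colour i
  have hScard : st.S.card ≤ SB k (Fintype.card W) := le_trans (Nat.le_add_right _ _) inv.hCard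
  obtain ⟨x2, y2, hxyMc, hxyExcl, hx2S, hy2S, hx2np, hy2np⟩ :=
    exists_fresh hMc i (hEx i) st.S (by
      calc (k+1) * st.S.card ≤ (k+1) * SB k (Fintype.card W) :=
            Nat.mul_le_mul_left _ hScard
        _ < (k+1) * SB k (Fintype.card W) + 1 := Nat.lt_succ_self _)
  have hx2y2 : x2 ≠ y2 := by
    intro h
    exact (hMc i).1.1 _ hxyMc (by simp [h, Sym2.mk_isDiag_iff])
  have hy2part : pmPartner (hMc i) x2 = y2 := (pmPartner_eq (hMc i) hxyMc).symm
  have hx2part : pmPartner (hMc i) y2 = x2 := by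
    rw [← hy2part, pmPartner_invol]
  -- vertices a, a' are in S and uncovered
  have haS : a ∈ st.S := inv.hEndS (w,i) hwi
  have ha'S : a' ∈ st.S := inv.hEndS (w',i) hw'L
  have hacov : a ∉ covered (↑st.M : Set (Sym2 V)) := inv.hEndCov (w,i) hwi
  have ha'cov : a' ∉ covered (↑st.M : Set (Sym2 V)) := inv.hEndCov (w',i) hw'L
  -- first new edge
  obtain ⟨hM1, hAvail1, hAcy1⟩ := extend_M (hMc := hMc) inv.hM inv.hAvail inv.hAcy inv.hCov
    haS hacov hx2S hx2np
  set M1 : Set (Sym2 V) := insert s(a, x2) (↑st.M : Set (Sym2 V)) with hM1def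
  have hcovM1 : ∀ v, v ∈ covered M1 → v ∈ covered (↑st.M : Set (Sym2 V)) ∨ v = a ∨ v = x2 := by
    intro v hv
    rcases mem_covered_insert.1 hv with hv | hv
    · rcases Sym2.mem_iff.1 hv with rfl | rfl
      · exact Or.inr (Or.inl rfl)
      · exact Or.inr (Or.inr rfl)
    · exact Or.inl hv
  have hy2covM1 : y2 ∉ covered M1 := by
    intro h
    rcases hcovM1 y2 h with h | rfl | rfl
    · exact hy2S (inv.hCov h)
    · exact hy2S haS
    · exact hx2y2 rfl
  have ha'covM1 : a' ∉ covered M1 := by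
    intro h
    rcases hcovM1 a' h with h | h | h
    · exact ha'cov h
    · exact haa' h.symm
    · exact hx2S (h ▸ ha'S)
  have hy2a' : y2 ≠ a' := fun h => hy2S (h ▸ ha'S)
  -- availability of the second edge
  have havail2 : Available Mc s(y2, a') := by
    refine ⟨by simp [Sym2.mk_isDiag_iff, hy2a'], ?_⟩
    intro j hmem
    exact hy2np j ((pmPartner_eq (hMc j) hmem) ▸ ha'S)
  -- matching of M2
  set M2 : Set (Sym2 V) := insert s(y2, a') M1 with hM2def
  have hM2 : IsMatchingE M2 := by
    refine matching_insert hM1 havail2.1 ?_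
    intro v hv
    rcases Sym2.mem_iff.1 hv with rfl | rfl
    · exact hy2covM1
    · exact ha'covM1
  have hAvail2 : ∀ e ∈ M2, Available Mc e := by
    intro e he
    rcases Set.mem_insert_iff.1 he with rfl | he
    · exact havail2
    · exact hAvail1 e he
  -- acyclicity of M2
  have hAcy2 : ∀ l, (fromEdgeSet (M2 ∪ Mc l)).IsAcyclic := by
    intro l
    rw [hM2def, Set.insert_union]
    refine acyclic_insert (hAcy1 l) hy2a' ?_
    by_cases hl : l = i
    · -- the closure argument along the (w,i)-strand
      subst hl
      intro hre
      have hTstar : ∀ b ∈ (↑(st.T w l) ∪ {x2, y2} : Set V), ∀ c,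
          (fromEdgeSet (M1 ∪ Mc l)).Adj b c → c ∈ (↑(st.T w l) ∪ {x2, y2} : Set V) := by
        intro b hb c hbc
        rw [fromEdgeSet_adj] at hbc
        obtain ⟨hmem, hne⟩ := hbc
        rcases hb with hb | hb
        · -- b in the strand record
          rcases hmem with hmem | hmem
          · rcases Set.mem_insert_iff.1 hmem with heq | hmem
            · -- the edge a-x2
              rcases Sym2.eq_iff.1 heq with ⟨rfl, rfl⟩ | ⟨rfl, rfl⟩
              · exact Or.inr (by simp)
              · exact absurd (inv.hTS (w,l) hwi _ hb) hx2S
            · exact Or.inl (inv.hC2 (w,l) hwi b hb c hmem)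
          · -- a colour-l edge: use hC1
            obtain ⟨v', hv'T, hv'⟩ := inv.hC1 (w,l) hwi b hb
            have h1 : v' = pmPartner (hMc l) b := pmPartner_eq (hMc l) hv'
            have h2 : c = pmPartner (hMc l) b := pmPartner_eq (hMc l) hmem
            exact Or.inl (by rw [h2, ← h1]; exact hv'T)
        · rcases hb with rfl | hb
          · -- b = x2
            rcases hmem with hmem | hmem
            · rcases Set.mem_insert_iff.1 hmem with heq | hmem
              · rcases Sym2.eq_iff.1 heq with ⟨h1, rfl⟩ | ⟨-, rfl⟩
                · exact absurd h1.symm (fun h => hx2S (h ▸ haS))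
                · exact Or.inl (inv.hTend (w,l) hwi)
              · exact absurd (inv.hCov ⟨_, hmem, Sym2.mem_mk_left _ _⟩) hx2S
            · have : c = pmPartner (hMc l) b := pmPartner_eq (hMc l) hmem
              rw [this, hy2part]
              exact Or.inr (by simp)
          · -- b = y2
            rw [Set.mem_singleton_iff] at hb
            subst hb
            rcases hmem with hmem | hmem
            · rcases Set.mem_insert_iff.1 hmem with heq | hmem
              · rcases Sym2.eq_iff.1 heq with ⟨h1, h2⟩ | ⟨h1, h2⟩
                · exact absurd h1.symm (fun h => hy2S (h ▸ haS))
                · exact absurd h1 hx2y2.symm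
              · exact absurd (inv.hCov ⟨_, hmem, Sym2.mem_mk_left _ _⟩) hy2S
            · have : c = pmPartner (hMc l) b := pmPartner_eq (hMc l) hmem
              rw [this, hx2part]
              exact Or.inr (by simp)
      have hy2in : y2 ∈ (↑(st.T w l) ∪ {x2, y2} : Set V) := Or.inr (by simp)
      have ha'in := reach_confined hTstar hy2in hre
      rcases ha'in with h | h
      · -- a' in the strand record: contradiction via hU
        rcases inv.hU (w,l) hwi a' h ha'cov with h2 | h2
        · exact inv.hD2 (w',l) hw'L w (by rw [hPuniv]; exact Finset.mem_univ _) h2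
        · exact haa' h2.symm
      · rcases h with h | h
        · exact hx2S (h ▸ ha'S)
        · rw [Set.mem_singleton_iff] at h
          exact hy2a' h.symm
    · -- other colours : fresh pendant argument
      intro hre
      have hnp : pmPartner (hMc l) y2 ≠ x2 := by
        intro h
        have : y2 = pmPartner (hMc l) x2 := by rw [← h, pmPartner_invol]
        have hmem : s(x2, y2) ∈ Mc l := this ▸ pmPartner_mem (hMc l) x2
        exact hl (by by_contra hc; exact hxyExcl l hc hmem)
      refine not_reach_fresh (hMc := hMc) hy2covM1 ?_ hy2a'.symm ?_ hre
      · intro hcon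
        rcases hcovM1 _ hcon with h | h | h
        · exact hy2np l (inv.hCov h)
        · exact hy2np l (h ▸ haS)
        · exact hnp h
      · intro hcon
        exact hy2np l (hcon ▸ ha'S)
  -- the new reachability fact
  have hadj1 : (fromEdgeSet (M2 ∪ Mc i)).Adj a x2 := by
    rw [fromEdgeSet_adj]
    exact ⟨Or.inl (Set.mem_insert_iff.2 (Or.inr (Set.mem_insert _ _))),
      fun h => hx2S (h ▸ haS)⟩
  have hadj2 : (fromEdgeSet (M2 ∪ Mc i)).Adj x2 y2 := by
    rw [fromEdgeSet_adj]
    exact ⟨Or.inr hxyMc, hx2y2⟩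
  have hadj3 : (fromEdgeSet (M2 ∪ Mc i)).Adj y2 a' := by
    rw [fromEdgeSet_adj]
    exact ⟨Or.inl (Set.mem_insert _ _), hy2a'⟩
  have hreach_ww' : (fromEdgeSet (M2 ∪ Mc i)).Reachable (st.root w) (st.root w') := by
    have h1 : (fromEdgeSet (M2 ∪ Mc i)).Reachable (st.root w) a := by
      have := inv.hR (w,i) hwi
      exact reach_mono_ins (reach_mono_ins this)
    have h2 : (fromEdgeSet (M2 ∪ Mc i)).Reachable (st.root w') a' := by
      have := inv.hR (w',i) hw'L
      exact reach_mono_ins (reach_mono_ins this)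
    exact ((h1.trans hadj1.reachable).trans (hadj2.reachable.trans hadj3.reachable)).trans h2.symm
  -- assemble the new state
  refine ⟨⟨st.P, st.S ∪ {x2, y2}, insert s(y2,a') (insert s(a,x2) st.M), st.root, st.endv,
    st.T, (st.L.erase (w,i)).erase (w', i)⟩, ?_, rfl, rfl, rfl, rfl⟩
  set stN : St k W V := ⟨st.P, st.S ∪ {x2, y2}, insert s(y2,a') (insert s(a,x2) st.M),
    st.root, st.endv, st.T, (st.L.erase (w,i)).erase (w', i)⟩ with hstN
  have hM2coe : (↑(insert s(y2,a') (insert s(a,x2) st.M)) : Set (Sym2 V)) = M2 := by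
    simp [hM2def, hM1def]
  have hLsub : ∀ p : W × Fin k, p ∈ (st.L.erase (w,i)).erase (w', i) → p ∈ st.L := by
    intro p hp
    exact Finset.mem_of_mem_erase (Finset.mem_of_mem_erase hp)
  have hLne : ∀ p : W × Fin k, p ∈ (st.L.erase (w,i)).erase (w', i) →
      p ≠ (w, i) ∧ p ≠ (w', i) := by
    intro p hp
    exact ⟨Finset.ne_of_mem_erase (Finset.mem_of_mem_erase hp), Finset.ne_of_mem_erase hp⟩
  -- the key disjointness fact: live ends differ from a, a', x2, y2
  have hEndNe : ∀ p : W × Fin k, p ∈ (st.L.erase (w,i)).erase (w', i) →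
      st.endv p.1 p.2 ≠ a ∧ st.endv p.1 p.2 ≠ a' := by
    intro p hp
    obtain ⟨hne1, hne2⟩ := hLne p hp
    have hpL := hLsub p hp
    constructor
    · intro hcon
      by_cases hpw : p.1 = w
      · have := hSing p hpL (w,i) hwi hpw (by rw [hpw] at hcon ⊢; exact hcon)
        exact hne1 (Prod.ext hpw this)
      · exact inv.hD p hpL (w,i) hwi hpw hcon
    · intro hcon
      by_cases hpw : p.1 = w'
      · have := hSing p hpL (w',i) hw'L hpw (by rw [hpw] at hcon ⊢; exact hcon)
        exact hne2 (Prod.ext hpw this)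
      · exact inv.hD p hpL (w',i) hw'L hpw hcon
  -- a, a', x2, y2 are not in live records of other pairs
  have hTnotin : ∀ p : W × Fin k, p ∈ (st.L.erase (w,i)).erase (w', i) →
      a ∉ st.T p.1 p.2 ∧ a' ∉ st.T p.1 p.2 ∧ x2 ∉ st.T p.1 p.2 ∧ y2 ∉ st.T p.1 p.2 := by
    intro p hp
    have hpL := hLsub p hp
    obtain ⟨hnea, hnea'⟩ := hEndNe p hp
    refine ⟨?_, ?_, ?_, ?_⟩
    · intro hcon
      rcases inv.hU p hpL a hcon hacov with h | h
      · exact inv.hD2 (w,i) hwi p.1 (by rw [hPuniv]; exact Finset.mem_univ _) h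
      · exact hnea h.symm
    · intro hcon
      rcases inv.hU p hpL a' hcon ha'cov with h | h
      · exact inv.hD2 (w',i) hw'L p.1 (by rw [hPuniv]; exact Finset.mem_univ _) h
      · exact hnea' h.symm
    · intro hcon; exact hx2S (inv.hTS p hpL _ hcon)
    · intro hcon; exact hy2S (inv.hTS p hpL _ hcon)
  constructor
  case hM => rw [hM2coe]; exact hM2
  case hAvail => rw [hM2coe]; exact hAvail2
  case hAcy => intro l; rw [hM2coe]; exact hAcy2 l
  case hCov =>
    rw [hM2coe]
    intro v hv
    rcases mem_covered_insert.1 hv with hv | hv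
    · rcases Sym2.mem_iff.1 hv with rfl | rfl
      · simp [hstN]
      · simp [hstN, ha'S]
    · rcases mem_covered_insert.1 hv with hv | hv
      · rcases Sym2.mem_iff.1 hv with rfl | rfl
        · simp [hstN, haS]
        · simp [hstN]
      · simp [hstN, inv.hCov hv]
  case hRootCov =>
    rw [hM2coe]
    intro w'' hw'' hcon
    rcases mem_covered_insert.1 hcon with hv | hv
    · rcases Sym2.mem_iff.1 hv with h | h
      · exact hy2S (h ▸ inv.hRootS w'' hw'')
      · exact inv.hD2 (w',i) hw'L w'' hw'' h.symm
    · rcases mem_covered_insert.1 hv with hv | hv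
      · rcases Sym2.mem_iff.1 hv with h | h
        · exact inv.hD2 (w,i) hwi w'' hw'' h.symm
        · exact hx2S (h ▸ inv.hRootS w'' hw'')
      · exact inv.hRootCov w'' hw'' hv
  case hRootS => intro w'' hw''; exact Finset.mem_union_left _ (inv.hRootS w'' hw'')
  case hRootInj => exact inv.hRootInj
  case hLP => intro p hp; exact inv.hLP p (hLsub p hp)
  case hEndS => intro p hp; exact Finset.mem_union_left _ (inv.hEndS p (hLsub p hp))
  case hEndCov =>
    rw [hM2coe]
    intro p hp hcon
    obtain ⟨hnea, hnea'⟩ := hEndNe p hp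
    rcases mem_covered_insert.1 hcon with hv | hv
    · rcases Sym2.mem_iff.1 hv with h | h
      · exact hy2S (h ▸ inv.hEndS p (hLsub p hp))
      · exact hnea' h
    · rcases mem_covered_insert.1 hv with hv | hv
      · rcases Sym2.mem_iff.1 hv with h | h
        · exact hnea h
        · exact hx2S (h ▸ inv.hEndS p (hLsub p hp))
      · exact inv.hEndCov p (hLsub p hp) hv
  case hD => intro p hp q hq; exact inv.hD p (hLsub p hp) q (hLsub q hq)
  case hD2 => intro p hp; exact inv.hD2 p (hLsub p hp)
  case hTend => intro p hp; exact inv.hTend p (hLsub p hp)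
  case hTS => intro p hp v hv; exact Finset.mem_union_left _ (inv.hTS p (hLsub p hp) v hv)
  case hC1 => intro p hp; exact inv.hC1 p (hLsub p hp)
  case hC2 =>
    rw [hM2coe]
    intro p hp v hv z hz
    obtain ⟨hTa, hTa', hTx2, hTy2⟩ := hTnotin p hp
    rcases Set.mem_insert_iff.1 hz with heq | hz
    · rcases Sym2.eq_iff.1 heq with ⟨rfl, rfl⟩ | ⟨rfl, rfl⟩
      · exact absurd hv hTy2
      · exact absurd hv hTa'
    · rcases Set.mem_insert_iff.1 hz with heq | hz
      · rcases Sym2.eq_iff.1 heq with ⟨rfl, rfl⟩ | ⟨rfl, rfl⟩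
        · exact absurd hv hTa
        · exact absurd hv hTx2
      · exact inv.hC2 p (hLsub p hp) v hv z hz
  case hU =>
    rw [hM2coe]
    intro p hp v hv hvcov
    refine inv.hU p (hLsub p hp) v hv ?_
    intro hcon
    refine hvcov ?_
    rcases hcon with ⟨e, he, hve⟩
    exact ⟨e, Set.mem_insert_iff.2 (Or.inr (Set.mem_insert_iff.2 (Or.inr he))), hve⟩
  case hR =>
    intro p hp
    rw [hM2coe, hM2def, hM1def]
    exact reach_mono_ins (reach_mono_ins (inv.hR p (hLsub p hp)))
  case hDone =>
    intro w'' hw'' i'' hni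
    rw [hM2coe]
    by_cases hL : ((w'', i'') : W × Fin k) ∈ st.L
    · -- must be one of the two junctioned pairs
      by_cases h1 : ((w'', i'') : W × Fin k) = (w, i)
      · have h1a : w'' = w := congrArg Prod.fst h1
        have h1b : i'' = i := congrArg Prod.snd h1
        subst h1a
        rw [h1b, ← hw']
        exact hreach_ww'
      · have h2 : ((w'', i'') : W × Fin k) = (w', i) := by
          by_contra h2
          exact hni (Finset.mem_erase.2 ⟨h2, Finset.mem_erase.2 ⟨h1, hL⟩⟩)
        have h2a : w'' = w' := congrArg Prod.fst h2
        have h2b : i'' = i := congrArg Prod.snd h2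
        subst h2a
        rw [h2b]
        have hinvol : pmPartner (hA i) w' = w := by
          rw [hw']; exact pmPartner_invol (hA i) w
        rw [hinvol]
        exact hreach_ww'.symm
    · have := inv.hDone w'' hw'' i'' hL
      rw [hM2def, hM1def]
      exact reach_mono_ins (reach_mono_ins this)
  case hCard =>
    have hcard1 : (st.S ∪ {x2, y2}).card ≤ st.S.card + 2 := by
      refine le_trans (Finset.card_union_le _ _) ?_
      have h1 := Finset.card_insert_le x2 ({y2} : Finset V)
      have h2 : ({y2} : Finset V).card = 1 := Finset.card_singleton _
      omega
    have hw'mem : ((w', i) : W × Fin k) ∈ st.L.erase (w, i) :=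
      Finset.mem_erase.2 ⟨by simp [Prod.ext_iff, hww'.symm], hw'L⟩
    have hmeq : meas st = (block st w i).card +
        ((block st w' i).card + ∑ p ∈ (st.L.erase (w,i)).erase (w', i),
          (block st p.1 p.2).card) := by
      rw [meas, ← Finset.add_sum_erase _ _ hwi, ← Finset.add_sum_erase _ _ hw'mem]
    have hLeq : st.L.card = ((st.L.erase (w,i)).erase (w', i)).card + 2 := by
      rw [Finset.card_erase_of_mem hw'mem, Finset.card_erase_of_mem hwi]
      have h1 : 0 < st.L.card := Finset.card_pos.2 ⟨_, hwi⟩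
      have h2 : 0 < (st.L.erase (w,i)).card := Finset.card_pos.2 ⟨_, hw'mem⟩
      rw [Finset.card_erase_of_mem hwi] at h2
      omega
    have hf1 : 1 ≤ (block st w i).card := Finset.card_pos.2 ⟨i, by simp [block]⟩
    have hf2 : 1 ≤ (block st w' i).card := Finset.card_pos.2 ⟨i, by simp [block]⟩
    have hpot : pot st = (k*k + 2*k + 1) * (Fintype.card W - st.P.card) +
        ((block st w i).card + ((block st w' i).card +
          ∑ p ∈ (st.L.erase (w,i)).erase (w', i), (block st p.1 p.2).card)) +
        2 * (((st.L.erase (w,i)).erase (w', i)).card + 2) := by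
      rw [pot, ← hmeq, ← hLeq]
    have hcardle := inv.hCard
    rw [hpot] at hcardle
    have hpotN : pot stN = (k+2) * 0 + ((k*k + 2*k + 1) * (Fintype.card W - st.P.card) +
        (∑ p ∈ (st.L.erase (w,i)).erase (w', i), (block st p.1 p.2).card) +
        2 * ((st.L.erase (w,i)).erase (w', i)).card) := by
      rw [Nat.mul_zero, Nat.zero_add]
      rfl
    have hSN : stN.S.card = (st.S ∪ {x2, y2}).card := rfl
    rw [hpotN, Nat.mul_zero, Nat.zero_add, hSN]
    have hexpand : (k+2) * ((k*k + 2*k + 1) * (Fintype.card W - st.P.card) +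
        ((block st w i).card + ((block st w' i).card +
          ∑ p ∈ (st.L.erase (w,i)).erase (w', i), (block st p.1 p.2).card)) +
        2 * (((st.L.erase (w,i)).erase (w', i)).card + 2)) =
        (k+2) * ((k*k + 2*k + 1) * (Fintype.card W - st.P.card) +
          (∑ p ∈ (st.L.erase (w,i)).erase (w', i), (block st p.1 p.2).card) +
          2 * ((st.L.erase (w,i)).erase (w', i)).card) +
        (k+2) * ((block st w i).card + (block st w' i).card + 4) := by ring
    rw [hexpand] at hcardle
    have hge : 2 ≤ (k+2) * ((block st w i).card + (block st w' i).card + 4) := by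
      have : 2 ≤ (block st w i).card + (block st w' i).card + 4 := by omega
      calc 2 = 1 * 2 := by ring
        _ ≤ (k+2) * ((block st w i).card + (block st w' i).card + 4) :=
            Nat.mul_le_mul (by omega) this
    omega

end Steps2

section Steps3

variable {Mc : Fin k → Set (Sym2 V)} {A : Fin k → Set (Sym2 W)}
variable {hMc : IsConfig Mc} {hA : IsConfig A}

/-- the processing step : split a live block of size ≥ 2 -/
lemma step_process
    (hEx : ∀ i : Fin k, (k+1) * SB k (Fintype.card W) + 1 ≤
      {e ∈ Mc i | ∀ j : Fin k, j ≠ i → e ∉ Mc j}.ncard)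
    {st : St k W V} (inv : Inv Mc A hMc hA st)
    (hFull : st.L = st.P ×ˢ Finset.univ)
    {w : W} {i : Fin k} (hwi : (w, i) ∈ st.L)
    (hblock : 2 ≤ (block st w i).card) :
    ∃ st' : St k W V, Inv Mc A hMc hA st' ∧ st'.P = st.P ∧ st'.root = st.root ∧
      st'.L = st.L ∧ meas st' < meas st := by
  classical
  set u : V := st.endv w i with hu
  have hwP : w ∈ st.P := inv.hLP (w, i) hwi
  have hallL : ∀ j : Fin k, ((w, j) : W × Fin k) ∈ st.L := by
    intro j
    rw [hFull]
    exact Finset.mem_product.2 ⟨hwP, Finset.mem_univ _⟩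
  have hScard : st.S.card ≤ SB k (Fintype.card W) := le_trans (Nat.le_add_right _ _) inv.hCard
  obtain ⟨x, y, hxyMc, hxyExcl, hxS, hyS, hxnp, hynp⟩ :=
    exists_fresh hMc i (hEx i) st.S (by
      calc (k+1) * st.S.card ≤ (k+1) * SB k (Fintype.card W) :=
            Nat.mul_le_mul_left _ hScard
        _ < (k+1) * SB k (Fintype.card W) + 1 := Nat.lt_succ_self _)
  have hypart : pmPartner (hMc i) x = y := (pmPartner_eq (hMc i) hxyMc).symm
  have huS : u ∈ st.S := inv.hEndS (w,i) hwi
  have hucov : u ∉ covered (↑st.M : Set (Sym2 V)) := inv.hEndCov (w,i) hwi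
  have hune : u ≠ x := fun h => hxS (h ▸ huS)
  obtain ⟨hM1, hAvail1, hAcy1⟩ := extend_M (hMc := hMc) inv.hM inv.hAvail inv.hAcy inv.hCov
    huS hucov hxS hxnp
  have hsplit : ∀ j : Fin k, pmPartner (hMc j) x = pmPartner (hMc i) x → j = i := by
    intro j hj
    by_contra hji
    refine hxyExcl j hji ?_
    rw [← hypart, ← hj]
    exact pmPartner_mem (hMc j) x
  set endv' : W → Fin k → V := fun w'' j =>
    if w'' = w ∧ st.endv w'' j = u then pmPartner (hMc j) x else st.endv w'' j with hendv'
  set T' : W → Fin k → Finset V := fun w'' j =>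
    if w'' = w ∧ st.endv w'' j = u then st.T w'' j ∪ {x, pmPartner (hMc j) x}
    else st.T w'' j with hT'
  set S' : Finset V := st.S ∪ insert x (Finset.image (fun j => pmPartner (hMc j) x)
    Finset.univ) with hS'
  have heup : ∀ j, st.endv w j = u → endv' w j = pmPartner (hMc j) x := by
    intro j hj
    show (if w = w ∧ st.endv w j = u then pmPartner (hMc j) x else st.endv w j) =
      pmPartner (hMc j) x
    exact if_pos ⟨rfl, hj⟩
  have heold : ∀ w'' j, ¬ (w'' = w ∧ st.endv w'' j = u) → endv' w'' j = st.endv w'' j := by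
    intro w'' j hcon
    show (if w'' = w ∧ st.endv w'' j = u then pmPartner (hMc j) x else st.endv w'' j) =
      st.endv w'' j
    exact if_neg hcon
  have hTup : ∀ j, st.endv w j = u → T' w j = st.T w j ∪ {x, pmPartner (hMc j) x} := by
    intro j hj
    show (if w = w ∧ st.endv w j = u then st.T w j ∪ {x, pmPartner (hMc j) x} else st.T w j) =
      st.T w j ∪ {x, pmPartner (hMc j) x}
    exact if_pos ⟨rfl, hj⟩
  have hTold : ∀ w'' j, ¬ (w'' = w ∧ st.endv w'' j = u) → T' w'' j = st.T w'' j := by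
    intro w'' j hcon
    show (if w'' = w ∧ st.endv w'' j = u then st.T w'' j ∪ {x, pmPartner (hMc j) x}
      else st.T w'' j) = st.T w'' j
    exact if_neg hcon
  have hpS' : ∀ j, pmPartner (hMc j) x ∈ S' := by
    intro j
    refine Finset.mem_union_right _ (Finset.mem_insert_of_mem ?_)
    exact Finset.mem_image.2 ⟨j, Finset.mem_univ _, rfl⟩
  have hxS' : x ∈ S' := Finset.mem_union_right _ (Finset.mem_insert_self _ _)
  have hpnotS : ∀ j, pmPartner (hMc j) x ∉ st.S := hxnp
  have hpne_x : ∀ j, pmPartner (hMc j) x ≠ x := fun j => pmPartner_ne (hMc j) x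
  have hpne_u : ∀ j, pmPartner (hMc j) x ≠ u := fun j h => hpnotS j (h ▸ huS)
  have hMcoe : (↑(insert s(u,x) st.M) : Set (Sym2 V)) = insert s(u,x) (↑st.M : Set (Sym2 V)) := by
    simp
  have hcovM1 : ∀ v, v ∈ covered (insert s(u,x) (↑st.M : Set (Sym2 V))) →
      v ∈ covered (↑st.M : Set (Sym2 V)) ∨ v = u ∨ v = x := by
    intro v hv
    rcases mem_covered_insert.1 hv with hv | hv
    · rcases Sym2.mem_iff.1 hv with rfl | rfl
      · exact Or.inr (Or.inl rfl)
      · exact Or.inr (Or.inr rfl)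
    · exact Or.inl hv
  have hucov' : u ∈ covered (insert s(u,x) (↑st.M : Set (Sym2 V))) :=
    ⟨s(u,x), Set.mem_insert _ _, Sym2.mem_mk_left _ _⟩
  have hxcov' : x ∈ covered (insert s(u,x) (↑st.M : Set (Sym2 V))) :=
    ⟨s(u,x), Set.mem_insert _ _, Sym2.mem_mk_right _ _⟩
  have hEndNotu : ∀ p : W × Fin k, p ∈ st.L → ¬ (p.1 = w ∧ st.endv p.1 p.2 = u) →
      st.endv p.1 p.2 ≠ u := by
    intro p hp hcon h
    by_cases hpw : p.1 = w
    · exact hcon ⟨hpw, h⟩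
    · exact inv.hD p hp (w,i) hwi hpw h
  have hUnot : ∀ p : W × Fin k, p ∈ st.L → ¬ (p.1 = w ∧ st.endv p.1 p.2 = u) →
      u ∉ st.T p.1 p.2 := by
    intro p hp hcon hmem
    rcases inv.hU p hp u hmem hucov with h | h
    · exact inv.hD2 (w,i) hwi p.1 (inv.hLP p hp) h
    · exact hEndNotu p hp hcon h.symm
  set stN : St k W V := ⟨st.P, S', insert s(u,x) st.M, st.root, endv', T', st.L⟩ with hstN
  have heN : stN.endv = endv' := rfl
  have hTN : stN.T = T' := rfl
  have hmeaslt : meas stN < meas st := by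
    have hBeqv : ∀ j, st.endv w j = u → block st w j = block st w i := by
      intro j hj
      rw [block, block]
      refine Finset.filter_congr ?_
      intro j' _
      rw [hj, ← hu]
    have hupdsub : ∀ j, st.endv w j = u → block stN w j ⊆ block st w i := by
      intro j hj j' hj'
      rw [block, Finset.mem_filter] at hj'
      have hj'2 : endv' w j' = endv' w j := hj'.2
      rw [heup j hj] at hj'2
      show j' ∈ block st w i
      rw [block, Finset.mem_filter]
      refine ⟨Finset.mem_univ _, ?_⟩
      by_cases hj'u : st.endv w j' = u
      · exact hj'u.trans hu
      · exfalso
        rw [heold w j' (fun hc => hj'u hc.2)] at hj'2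
        exact hpnotS j (hj'2 ▸ inv.hEndS (w, j') (hallL j'))
    have hstrict : block stN w i ⊆ {i} := by
      intro j' hj'
      rw [block, Finset.mem_filter] at hj'
      have hj'2 : endv' w j' = endv' w i := hj'.2
      rw [heup i hu.symm] at hj'2
      by_cases hj'u : st.endv w j' = u
      · rw [heup j' hj'u] at hj'2
        simp [hsplit j' hj'2]
      · exfalso
        rw [heold w j' (fun hc => hj'u hc.2)] at hj'2
        exact hpnotS i (hj'2 ▸ inv.hEndS (w, j') (hallL j'))
    have hble : ∀ p ∈ st.L, (block stN p.1 p.2).card ≤ (block st p.1 p.2).card := by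
      rintro ⟨pw, pj⟩ hp
      by_cases hcase : pw = w ∧ st.endv pw pj = u
      · obtain ⟨hp1, hp2⟩ := hcase
        subst hp1
        have h1 : (block stN pw pj).card ≤ (block st pw i).card :=
          Finset.card_le_card (hupdsub pj hp2)
        have h2 : block st pw pj = block st pw i := hBeqv pj hp2
        show (block stN pw pj).card ≤ (block st pw pj).card
        rw [h2]
        exact h1
      · have hbeq2 : block stN pw pj = block st pw pj := by
          rw [block, block]
          refine Finset.filter_congr ?_
          intro j' _
          show endv' pw j' = endv' pw pj ↔ st.endv pw j' = st.endv pw pj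
          rw [heold pw pj hcase]
          by_cases hj'c : pw = w ∧ st.endv pw j' = u
          · obtain ⟨hc1, hc2⟩ := hj'c
            subst hc1
            rw [heup j' hc2]
            constructor
            · intro h
              exact absurd (h ▸ inv.hEndS (pw, pj) hp) (hpnotS j')
            · intro h
              exact absurd ⟨rfl, h ▸ hc2⟩ hcase
          · rw [heold pw j' hj'c]
        show (block stN pw pj).card ≤ (block st pw pj).card
        rw [hbeq2]
    have hblt : (block stN w i).card < (block st w i).card := by
      have h1 : (block stN w i).card ≤ 1 := by
        calc (block stN w i).card ≤ ({i} : Finset (Fin k)).card := Finset.card_le_card hstrict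
          _ = 1 := Finset.card_singleton _
      omega
    have hmeasN : meas stN = ∑ p ∈ st.L, (block stN p.1 p.2).card := rfl
    have hmeasS : meas st = ∑ p ∈ st.L, (block st p.1 p.2).card := rfl
    rw [hmeasN, hmeasS]
    exact Finset.sum_lt_sum hble ⟨(w,i), hwi, hblt⟩
  refine ⟨stN, ?_, rfl, rfl, rfl, hmeaslt⟩
  constructor
  case hM => rw [show (↑stN.M : Set (Sym2 V)) = insert s(u,x) (↑st.M : Set (Sym2 V)) from hMcoe]
             exact hM1
  case hAvail =>
    rw [show (↑stN.M : Set (Sym2 V)) = insert s(u,x) (↑st.M : Set (Sym2 V)) from hMcoe]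
    exact hAvail1
  case hAcy =>
    intro l
    rw [show (↑stN.M : Set (Sym2 V)) = insert s(u,x) (↑st.M : Set (Sym2 V)) from hMcoe]
    exact hAcy1 l
  case hCov =>
    rw [show (↑stN.M : Set (Sym2 V)) = insert s(u,x) (↑st.M : Set (Sym2 V)) from hMcoe]
    intro v hv
    rcases hcovM1 v hv with h | rfl | rfl
    · exact Finset.mem_union_left _ (inv.hCov h)
    · exact Finset.mem_union_left _ huS
    · exact hxS'
  case hRootCov =>
    rw [show (↑stN.M : Set (Sym2 V)) = insert s(u,x) (↑st.M : Set (Sym2 V)) from hMcoe]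
    intro w'' hw'' hcon
    rcases hcovM1 _ hcon with h | h | h
    · exact inv.hRootCov w'' hw'' h
    · exact inv.hD2 (w,i) hwi w'' hw'' h.symm
    · exact hxS (h ▸ inv.hRootS w'' hw'')
  case hRootS => intro w'' hw''; exact Finset.mem_union_left _ (inv.hRootS w'' hw'')
  case hRootInj => exact inv.hRootInj
  case hLP => exact inv.hLP
  case hEndS =>
    rintro ⟨pw, pj⟩ hp
    show endv' pw pj ∈ S'
    by_cases hcase : pw = w ∧ st.endv pw pj = u
    · obtain ⟨hc1, hc2⟩ := hcase
      subst hc1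
      rw [heup pj hc2]
      exact hpS' pj
    · rw [heold pw pj hcase]
      exact Finset.mem_union_left _ (inv.hEndS (pw, pj) hp)
  case hEndCov =>
    rintro ⟨pw, pj⟩ hp hcon
    have hcon2 : endv' pw pj ∈ covered (↑(insert s(u,x) st.M) : Set (Sym2 V)) := hcon
    rw [hMcoe] at hcon2
    by_cases hcase : pw = w ∧ st.endv pw pj = u
    · obtain ⟨hc1, hc2⟩ := hcase
      subst hc1
      rw [heup pj hc2] at hcon2
      rcases hcovM1 _ hcon2 with h | h | h
      · exact hpnotS pj (inv.hCov h)
      · exact hpne_u pj h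
      · exact hpne_x pj h
    · rw [heold pw pj hcase] at hcon2
      rcases hcovM1 _ hcon2 with h | h | h
      · exact inv.hEndCov (pw, pj) hp h
      · exact hEndNotu (pw, pj) hp hcase h
      · exact hxS (h ▸ inv.hEndS (pw, pj) hp)
  case hD =>
    rintro ⟨pw, pj⟩ hp ⟨qw, qj⟩ hq hpq
    show endv' pw pj ≠ endv' qw qj
    by_cases hcp : pw = w ∧ st.endv pw pj = u
    · obtain ⟨hc1, hc2⟩ := hcp
      subst hc1
      rw [heup pj hc2]
      have hcq : ¬ (qw = pw ∧ st.endv qw qj = u) := by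
        rintro ⟨h1, -⟩
        exact hpq (by simp [h1])
      rw [heold qw qj hcq]
      intro h
      exact hpnotS pj (h ▸ inv.hEndS (qw, qj) hq)
    · rw [heold pw pj hcp]
      by_cases hcq : qw = w ∧ st.endv qw qj = u
      · obtain ⟨hc1, hc2⟩ := hcq
        subst hc1
        rw [heup qj hc2]
        intro h
        exact hpnotS qj (h.symm ▸ inv.hEndS (pw, pj) hp)
      · rw [heold qw qj hcq]
        exact inv.hD (pw, pj) hp (qw, qj) hq hpq
  case hD2 =>
    rintro ⟨pw, pj⟩ hp w'' hw''
    show endv' pw pj ≠ st.root w''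
    by_cases hcase : pw = w ∧ st.endv pw pj = u
    · obtain ⟨hc1, hc2⟩ := hcase
      subst hc1
      rw [heup pj hc2]
      intro h
      exact hpnotS pj (h ▸ inv.hRootS w'' hw'')
    · rw [heold pw pj hcase]
      exact inv.hD2 (pw, pj) hp w'' hw''
  case hTend =>
    rintro ⟨pw, pj⟩ hp
    show endv' pw pj ∈ T' pw pj
    by_cases hcase : pw = w ∧ st.endv pw pj = u
    · obtain ⟨hc1, hc2⟩ := hcase
      subst hc1
      rw [heup pj hc2, hTup pj hc2]
      exact Finset.mem_union_right _ (by simp)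
    · rw [heold pw pj hcase, hTold pw pj hcase]
      exact inv.hTend (pw, pj) hp
  case hTS =>
    rintro ⟨pw, pj⟩ hp v hv
    have hv2 : v ∈ T' pw pj := hv
    by_cases hcase : pw = w ∧ st.endv pw pj = u
    · obtain ⟨hc1, hc2⟩ := hcase
      subst hc1
      rw [hTup pj hc2] at hv2
      rcases Finset.mem_union.1 hv2 with hv3 | hv3
      · exact Finset.mem_union_left _ (inv.hTS (pw, pj) hp v hv3)
      · rcases Finset.mem_insert.1 hv3 with hvx | hv4
        · subst hvx; exact hxS'
        · rw [Finset.mem_singleton] at hv4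
          rw [hv4]
          exact hpS' pj
    · rw [hTold pw pj hcase] at hv2
      exact Finset.mem_union_left _ (inv.hTS (pw, pj) hp v hv2)
  case hC1 =>
    rintro ⟨pw, pj⟩ hp v hv
    have hv2 : v ∈ T' pw pj := hv
    show ∃ v' ∈ T' pw pj, s(v, v') ∈ Mc pj
    by_cases hcase : pw = w ∧ st.endv pw pj = u
    · obtain ⟨hc1, hc2⟩ := hcase
      subst hc1
      rw [hTup pj hc2] at hv2 ⊢
      rcases Finset.mem_union.1 hv2 with hv3 | hv3
      · obtain ⟨v', hv'T, hv'⟩ := inv.hC1 (pw, pj) hp v hv3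
        exact ⟨v', Finset.mem_union_left _ hv'T, hv'⟩
      · rcases Finset.mem_insert.1 hv3 with hvx | hv4
        · subst hvx
          exact ⟨pmPartner (hMc pj) v, Finset.mem_union_right _ (by simp),
            pmPartner_mem (hMc pj) v⟩
        · rw [Finset.mem_singleton] at hv4
          subst hv4
          refine ⟨x, Finset.mem_union_right _ (by simp), ?_⟩
          rw [Sym2.eq_swap]
          exact pmPartner_mem (hMc pj) x
    · rw [hTold pw pj hcase] at hv2 ⊢
      exact inv.hC1 (pw, pj) hp v hv2
  case hC2 =>
    rintro ⟨pw, pj⟩ hp v hv z hz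
    have hz1 : s(v, z) ∈ (↑(insert s(u,x) st.M) : Set (Sym2 V)) := hz
    have hz2 : s(v, z) ∈ insert s(u,x) (↑st.M : Set (Sym2 V)) := by
      rw [← hMcoe]; exact hz1
    have hv2 : v ∈ T' pw pj := hv
    show z ∈ T' pw pj
    by_cases hcase : pw = w ∧ st.endv pw pj = u
    · obtain ⟨hc1, hc2⟩ := hcase
      subst hc1
      rw [hTup pj hc2] at hv2 ⊢
      rcases Set.mem_insert_iff.1 hz2 with heq | hz3
      · rcases Sym2.eq_iff.1 heq with ⟨h1, h2⟩ | ⟨h1, h2⟩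
        · rw [h2]
          exact Finset.mem_union_right _ (by simp)
        · rw [h2]
          have huT : u ∈ st.T pw pj := by
            have h3 := inv.hTend (pw, pj) hp
            have h4 : st.endv pw pj ∈ st.T pw pj := h3
            rwa [hc2] at h4
          exact Finset.mem_union_left _ huT
      · rcases Finset.mem_union.1 hv2 with hv3 | hv3
        · exact Finset.mem_union_left _ (inv.hC2 (pw, pj) hp v hv3 z hz3)
        · exfalso
          have hvS : v ∉ st.S := by
            rcases Finset.mem_insert.1 hv3 with hvx | hv4
            · subst hvx; exact hxS
            · rw [Finset.mem_singleton] at hv4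
              rw [hv4]
              exact hpnotS pj
          exact hvS (inv.hCov ⟨_, hz3, Sym2.mem_mk_left _ _⟩)
    · rw [hTold pw pj hcase] at hv2 ⊢
      rcases Set.mem_insert_iff.1 hz2 with heq | hz3
      · exfalso
        rcases Sym2.eq_iff.1 heq with ⟨h1, h2⟩ | ⟨h1, h2⟩
        · exact hUnot (pw, pj) hp hcase (h1 ▸ hv2)
        · exact hxS (inv.hTS (pw, pj) hp _ (h1 ▸ hv2))
      · exact inv.hC2 (pw, pj) hp v hv2 z hz3
  case hU =>
    rintro ⟨pw, pj⟩ hp v hv hvcov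
    have hv2 : v ∈ T' pw pj := hv
    have hvcov1 : v ∉ covered (↑(insert s(u,x) st.M) : Set (Sym2 V)) := hvcov
    have hvcov2 : v ∉ covered (insert s(u,x) (↑st.M : Set (Sym2 V))) := by
      rw [← hMcoe]; exact hvcov1
    show v = st.root pw ∨ v = endv' pw pj
    by_cases hcase : pw = w ∧ st.endv pw pj = u
    · obtain ⟨hc1, hc2⟩ := hcase
      subst hc1
      rw [hTup pj hc2] at hv2
      rw [heup pj hc2]
      rcases Finset.mem_union.1 hv2 with hv3 | hv3
      · have hvold : v ∉ covered (↑st.M : Set (Sym2 V)) := by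
          intro hcon
          exact hvcov2 (mem_covered_insert.2 (Or.inr hcon))
        rcases inv.hU (pw, pj) hp v hv3 hvold with h | h
        · exact Or.inl h
        · exfalso
          have h2 : v = u := by
            have h3 : v = st.endv pw pj := h
            rwa [hc2] at h3
          exact hvcov2 (h2 ▸ hucov')
      · rcases Finset.mem_insert.1 hv3 with hvx | hv4
        · subst hvx
          exact absurd hxcov' hvcov2
        · rw [Finset.mem_singleton] at hv4
          exact Or.inr hv4
    · rw [hTold pw pj hcase] at hv2
      rw [heold pw pj hcase]
      refine inv.hU (pw, pj) hp v hv2 ?_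
      intro hcon
      exact hvcov2 (mem_covered_insert.2 (Or.inr hcon))
  case hR =>
    rintro ⟨pw, pj⟩ hp
    show (fromEdgeSet (↑stN.M ∪ Mc pj)).Reachable (st.root pw) (endv' pw pj)
    rw [show (↑stN.M : Set (Sym2 V)) = insert s(u,x) (↑st.M : Set (Sym2 V)) from hMcoe]
    by_cases hcase : pw = w ∧ st.endv pw pj = u
    · obtain ⟨hc1, hc2⟩ := hcase
      subst hc1
      rw [heup pj hc2]
      have h1 : (fromEdgeSet (insert s(u,x) (↑st.M : Set (Sym2 V)) ∪ Mc pj)).Reachable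
          (st.root pw) u := by
        have h0 := inv.hR (pw, pj) hp
        have h0' : (fromEdgeSet (↑st.M ∪ Mc pj)).Reachable (st.root pw) u := by
          rw [← hc2]; exact h0
        exact reach_mono_ins h0'
      have h2 : (fromEdgeSet (insert s(u,x) (↑st.M : Set (Sym2 V)) ∪ Mc pj)).Adj u x := by
        rw [fromEdgeSet_adj]
        exact ⟨Or.inl (Set.mem_insert _ _), hune⟩
      have h3 : (fromEdgeSet (insert s(u,x) (↑st.M : Set (Sym2 V)) ∪ Mc pj)).Adj x
          (pmPartner (hMc pj) x) := by
        rw [fromEdgeSet_adj]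
        exact ⟨Or.inr (pmPartner_mem (hMc pj) x), (hpne_x pj).symm⟩
      exact (h1.trans h2.reachable).trans h3.reachable
    · rw [heold pw pj hcase]
      exact reach_mono_ins (inv.hR (pw, pj) hp)
  case hDone =>
    intro w'' hw'' i'' hni
    show (fromEdgeSet (↑stN.M ∪ Mc i'')).Reachable (st.root w'')
      (st.root (pmPartner (hA i'') w''))
    rw [show (↑stN.M : Set (Sym2 V)) = insert s(u,x) (↑st.M : Set (Sym2 V)) from hMcoe]
    exact reach_mono_ins (inv.hDone w'' hw'' i'' hni)
  case hCard =>
    have hpotN : pot stN = (k*k + 2*k + 1) * (Fintype.card W - st.P.card) + meas stN +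
        2 * st.L.card := rfl
    have hpotS : pot st = (k*k + 2*k + 1) * (Fintype.card W - st.P.card) + meas st +
        2 * st.L.card := rfl
    have hS'card : S'.card ≤ st.S.card + (k+1) := by
      calc S'.card ≤ st.S.card + (insert x (Finset.image (fun j => pmPartner (hMc j) x)
            Finset.univ)).card := Finset.card_union_le _ _
        _ ≤ st.S.card + ((Finset.image (fun j => pmPartner (hMc j) x) Finset.univ).card + 1) :=
            Nat.add_le_add_left (Finset.card_insert_le _ _) _
        _ ≤ st.S.card + (Finset.univ.card + 1) :=
            Nat.add_le_add_left (Nat.add_le_add_right Finset.card_image_le _) _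
        _ = st.S.card + (k+1) := by rw [Finset.card_univ, Fintype.card_fin]
    have hSN : stN.S.card = S'.card := rfl
    have hple : pot stN + 1 ≤ pot st := by
      rw [hpotN, hpotS]
      omega
    have hmul : (k+2) * pot stN + (k+2) ≤ (k+2) * pot st := by
      have h := Nat.mul_le_mul_left (k+2) hple
      rw [Nat.mul_add, Nat.mul_one] at h
      exact h
    have hcardle := inv.hCard
    rw [hSN]
    omega

end Steps3

section Steps4

variable {Mc : Fin k → Set (Sym2 V)} {A : Fin k → Set (Sym2 W)}
variable {hMc : IsConfig Mc} {hA : IsConfig A}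

/-- the initialisation step : add a new root -/
lemma step_init
    (hEx : ∀ i : Fin k, (k+1) * SB k (Fintype.card W) + 1 ≤
      {e ∈ Mc i | ∀ j : Fin k, j ≠ i → e ∉ Mc j}.ncard)
    (hk : 0 < k)
    {st : St k W V} (inv : Inv Mc A hMc hA st)
    (hFull : st.L = st.P ×ˢ Finset.univ)
    {w : W} (hw : w ∉ st.P) :
    ∃ st' : St k W V, Inv Mc A hMc hA st' ∧ st'.P = insert w st.P ∧
      st'.L = st'.P ×ˢ Finset.univ := by
  classical
  set i0 : Fin k := ⟨0, hk⟩ with hi0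
  have hScard : st.S.card ≤ SB k (Fintype.card W) := le_trans (Nat.le_add_right _ _) inv.hCard
  obtain ⟨x, y, hxyMc, hxyExcl, hxS, hyS, hxnp, hynp⟩ :=
    exists_fresh hMc i0 (hEx i0) st.S (by
      calc (k+1) * st.S.card ≤ (k+1) * SB k (Fintype.card W) :=
            Nat.mul_le_mul_left _ hScard
        _ < (k+1) * SB k (Fintype.card W) + 1 := Nat.lt_succ_self _)
  set root' : W → V := fun w'' => if w'' = w then x else st.root w'' with hroot'
  set endv' : W → Fin k → V := fun w'' j =>
    if w'' = w then pmPartner (hMc j) x else st.endv w'' j with hendv'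
  set T' : W → Fin k → Finset V := fun w'' j =>
    if w'' = w then {x, pmPartner (hMc j) x} else st.T w'' j with hT'
  set S' : Finset V := st.S ∪ insert x (Finset.image (fun j => pmPartner (hMc j) x)
    Finset.univ) with hS'
  set L' : Finset (W × Fin k) := st.L ∪ ({w} ×ˢ Finset.univ) with hL'
  have hrup : root' w = x := if_pos rfl
  have hrold : ∀ w'', w'' ≠ w → root' w'' = st.root w'' := fun w'' h => if_neg h
  have heup : ∀ j, endv' w j = pmPartner (hMc j) x := fun j => if_pos rfl
  have heold : ∀ w'' j, w'' ≠ w → endv' w'' j = st.endv w'' j := fun w'' j h => if_neg h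
  have hTup : ∀ j, T' w j = {x, pmPartner (hMc j) x} := fun j => if_pos rfl
  have hTold : ∀ w'' j, w'' ≠ w → T' w'' j = st.T w'' j := fun w'' j h => if_neg h
  have hpS' : ∀ j, pmPartner (hMc j) x ∈ S' := by
    intro j
    refine Finset.mem_union_right _ (Finset.mem_insert_of_mem ?_)
    exact Finset.mem_image.2 ⟨j, Finset.mem_univ _, rfl⟩
  have hxS' : x ∈ S' := Finset.mem_union_right _ (Finset.mem_insert_self _ _)
  have hpnotS : ∀ j, pmPartner (hMc j) x ∉ st.S := hxnp
  have hpne_x : ∀ j, pmPartner (hMc j) x ≠ x := fun j => pmPartner_ne (hMc j) x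
  have hPne : ∀ w'', w'' ∈ st.P → w'' ≠ w := fun w'' h hc => hw (hc ▸ h)
  have hLP' : ∀ p : W × Fin k, p ∈ L' → (p.1 = w ∨ (p ∈ st.L ∧ p.1 ≠ w)) := by
    intro p hp
    rcases Finset.mem_union.1 hp with hp | hp
    · exact Or.inr ⟨hp, hPne p.1 (inv.hLP p hp)⟩
    · exact Or.inl (Finset.mem_singleton.1 (Finset.mem_product.1 hp).1)
  have hwL' : ∀ j : Fin k, ((w, j) : W × Fin k) ∈ L' := by
    intro j
    exact Finset.mem_union_right _ (Finset.mem_product.2 ⟨Finset.mem_singleton_self _,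
      Finset.mem_univ _⟩)
  set stN : St k W V := ⟨insert w st.P, S', st.M, root', endv', T', L'⟩ with hstN
  have hLeq : L' = (insert w st.P) ×ˢ Finset.univ := by
    rw [hL', hFull, Finset.insert_eq, Finset.union_comm {w} st.P, Finset.union_product]
  refine ⟨stN, ?_, rfl, hLeq⟩
  constructor
  case hM => exact inv.hM
  case hAvail => exact inv.hAvail
  case hAcy => exact inv.hAcy
  case hCov => intro v hv; exact Finset.mem_union_left _ (inv.hCov hv)
  case hRootCov =>
    intro w'' hw'' hcon
    have hcon2 : root' w'' ∈ covered (↑st.M : Set (Sym2 V)) := hcon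
    by_cases hc : w'' = w
    · subst hc
      rw [hrup] at hcon2
      exact hxS (inv.hCov hcon2)
    · rw [hrold w'' hc] at hcon2
      exact inv.hRootCov w'' (Finset.mem_of_mem_insert_of_ne hw'' hc) hcon2
  case hRootS =>
    intro w'' hw''
    show root' w'' ∈ S'
    by_cases hc : w'' = w
    · subst hc; rw [hrup]; exact hxS'
    · rw [hrold w'' hc]
      exact Finset.mem_union_left _ (inv.hRootS w'' (Finset.mem_of_mem_insert_of_ne hw'' hc))
  case hRootInj =>
    intro w1 hw1 w2 hw2 heq
    have heq2 : root' w1 = root' w2 := heq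
    by_cases hc1 : w1 = w <;> by_cases hc2 : w2 = w
    · rw [hc1, hc2]
    · exfalso
      rw [hc1, hrup, hrold w2 hc2] at heq2
      exact hxS (heq2 ▸ inv.hRootS w2 (Finset.mem_of_mem_insert_of_ne hw2 hc2))
    · exfalso
      rw [hc2, hrup, hrold w1 hc1] at heq2
      exact hxS (heq2.symm ▸ inv.hRootS w1 (Finset.mem_of_mem_insert_of_ne hw1 hc1))
    · rw [hrold w1 hc1, hrold w2 hc2] at heq2
      exact inv.hRootInj w1 (Finset.mem_of_mem_insert_of_ne hw1 hc1) w2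
        (Finset.mem_of_mem_insert_of_ne hw2 hc2) heq2
  case hLP =>
    intro p hp
    rcases hLP' p hp with h | ⟨h, -⟩
    · rw [h]; exact Finset.mem_insert_self _ _
    · exact Finset.mem_insert_of_mem (inv.hLP p h)
  case hEndS =>
    rintro ⟨pw, pj⟩ hp
    show endv' pw pj ∈ S'
    rcases hLP' (pw, pj) hp with h | ⟨h, hne⟩
    · rw [show pw = w from h, heup pj]
      exact hpS' pj
    · rw [heold pw pj hne]
      exact Finset.mem_union_left _ (inv.hEndS (pw, pj) h)
  case hEndCov =>
    rintro ⟨pw, pj⟩ hp hcon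
    have hcon2 : endv' pw pj ∈ covered (↑st.M : Set (Sym2 V)) := hcon
    rcases hLP' (pw, pj) hp with h | ⟨h, hne⟩
    · rw [show pw = w from h, heup pj] at hcon2
      exact hpnotS pj (inv.hCov hcon2)
    · rw [heold pw pj hne] at hcon2
      exact inv.hEndCov (pw, pj) h hcon2
  case hD =>
    rintro ⟨pw, pj⟩ hp ⟨qw, qj⟩ hq hpq
    show endv' pw pj ≠ endv' qw qj
    rcases hLP' (pw, pj) hp with h1 | ⟨h1, hne1⟩ <;> rcases hLP' (qw, qj) hq with h2 | ⟨h2, hne2⟩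
    · exact absurd (h1.trans h2.symm) hpq
    · rw [show pw = w from h1, heup pj, heold qw qj hne2]
      intro hcon
      exact hpnotS pj (hcon ▸ inv.hEndS (qw, qj) h2)
    · rw [show qw = w from h2, heup qj, heold pw pj hne1]
      intro hcon
      exact hpnotS qj (hcon.symm ▸ inv.hEndS (pw, pj) h1)
    · rw [heold pw pj hne1, heold qw qj hne2]
      exact inv.hD (pw, pj) h1 (qw, qj) h2 hpq
  case hD2 =>
    rintro ⟨pw, pj⟩ hp w'' hw''
    show endv' pw pj ≠ root' w''
    rcases hLP' (pw, pj) hp with h1 | ⟨h1, hne1⟩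
    · rw [show pw = w from h1, heup pj]
      by_cases hc : w'' = w
      · subst hc; rw [hrup]; exact hpne_x pj
      · rw [hrold w'' hc]
        intro hcon
        exact hpnotS pj (hcon ▸ inv.hRootS w'' (Finset.mem_of_mem_insert_of_ne hw'' hc))
    · rw [heold pw pj hne1]
      by_cases hc : w'' = w
      · subst hc; rw [hrup]
        intro hcon
        exact hxS (hcon ▸ inv.hEndS (pw, pj) h1)
      · rw [hrold w'' hc]
        exact inv.hD2 (pw, pj) h1 w'' (Finset.mem_of_mem_insert_of_ne hw'' hc)
  case hTend =>
    rintro ⟨pw, pj⟩ hp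
    show endv' pw pj ∈ T' pw pj
    rcases hLP' (pw, pj) hp with h1 | ⟨h1, hne1⟩
    · rw [show pw = w from h1, heup pj, hTup pj]
      exact Finset.mem_insert_of_mem (Finset.mem_singleton_self _)
    · rw [heold pw pj hne1, hTold pw pj hne1]
      exact inv.hTend (pw, pj) h1
  case hTS =>
    rintro ⟨pw, pj⟩ hp v hv
    have hv2 : v ∈ T' pw pj := hv
    rcases hLP' (pw, pj) hp with h1 | ⟨h1, hne1⟩
    · rw [show pw = w from h1, hTup pj] at hv2
      rcases Finset.mem_insert.1 hv2 with hvx | hv3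
      · subst hvx; exact hxS'
      · rw [Finset.mem_singleton] at hv3
        rw [hv3]; exact hpS' pj
    · rw [hTold pw pj hne1] at hv2
      exact Finset.mem_union_left _ (inv.hTS (pw, pj) h1 v hv2)
  case hC1 =>
    rintro ⟨pw, pj⟩ hp v hv
    have hv2 : v ∈ T' pw pj := hv
    show ∃ v' ∈ T' pw pj, s(v, v') ∈ Mc pj
    rcases hLP' (pw, pj) hp with h1 | ⟨h1, hne1⟩
    · rw [show pw = w from h1] at hv2 ⊢
      rw [hTup pj] at hv2 ⊢
      rcases Finset.mem_insert.1 hv2 with hvx | hv3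
      · subst hvx
        exact ⟨pmPartner (hMc pj) v, Finset.mem_insert_of_mem (Finset.mem_singleton_self _),
          pmPartner_mem (hMc pj) v⟩
      · rw [Finset.mem_singleton] at hv3
        subst hv3
        refine ⟨x, Finset.mem_insert_self _ _, ?_⟩
        rw [Sym2.eq_swap]
        exact pmPartner_mem (hMc pj) x
    · rw [hTold pw pj hne1] at hv2 ⊢
      exact inv.hC1 (pw, pj) h1 v hv2
  case hC2 =>
    rintro ⟨pw, pj⟩ hp v hv z hz
    have hz2 : s(v, z) ∈ (↑st.M : Set (Sym2 V)) := hz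
    have hv2 : v ∈ T' pw pj := hv
    show z ∈ T' pw pj
    rcases hLP' (pw, pj) hp with h1 | ⟨h1, hne1⟩
    · exfalso
      rw [show pw = w from h1, hTup pj] at hv2
      have hvS : v ∉ st.S := by
        rcases Finset.mem_insert.1 hv2 with hvx | hv3
        · subst hvx; exact hxS
        · rw [Finset.mem_singleton] at hv3
          rw [hv3]; exact hpnotS pj
      exact hvS (inv.hCov ⟨_, hz2, Sym2.mem_mk_left _ _⟩)
    · rw [hTold pw pj hne1] at hv2 ⊢
      exact inv.hC2 (pw, pj) h1 v hv2 z hz2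
  case hU =>
    rintro ⟨pw, pj⟩ hp v hv hvcov
    have hv2 : v ∈ T' pw pj := hv
    have hvcov2 : v ∉ covered (↑st.M : Set (Sym2 V)) := hvcov
    show v = root' pw ∨ v = endv' pw pj
    rcases hLP' (pw, pj) hp with h1 | ⟨h1, hne1⟩
    · rw [show pw = w from h1] at hv2 ⊢
      rw [hTup pj] at hv2
      rw [hrup, heup pj]
      rcases Finset.mem_insert.1 hv2 with hvx | hv3
      · exact Or.inl hvx
      · rw [Finset.mem_singleton] at hv3
        exact Or.inr hv3
    · rw [hTold pw pj hne1] at hv2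
      rw [hrold pw hne1, heold pw pj hne1]
      exact inv.hU (pw, pj) h1 v hv2 hvcov2
  case hR =>
    rintro ⟨pw, pj⟩ hp
    show (fromEdgeSet (↑st.M ∪ Mc pj)).Reachable (root' pw) (endv' pw pj)
    rcases hLP' (pw, pj) hp with h1 | ⟨h1, hne1⟩
    · rw [show pw = w from h1, hrup, heup pj]
      refine SimpleGraph.Adj.reachable ?_
      rw [fromEdgeSet_adj]
      exact ⟨Or.inr (pmPartner_mem (hMc pj) x), (hpne_x pj).symm⟩
    · rw [hrold pw hne1, heold pw pj hne1]
      exact inv.hR (pw, pj) h1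
  case hDone =>
    intro w'' hw'' i'' hni
    exfalso
    by_cases hc : w'' = w
    · exact hni (hc ▸ hwL' i'')
    · refine hni (Finset.mem_union_left _ ?_)
      rw [hFull]
      exact Finset.mem_product.2 ⟨Finset.mem_of_mem_insert_of_ne hw'' hc, Finset.mem_univ _⟩
  case hCard =>
    have hPc : stN.P.card = st.P.card + 1 := Finset.card_insert_of_notMem hw
    have hdisj : Disjoint st.L ({w} ×ˢ (Finset.univ : Finset (Fin k))) := by
      rw [Finset.disjoint_left]
      intro p hp hp2
      exact hPne p.1 (inv.hLP p hp) (Finset.mem_singleton.1 (Finset.mem_product.1 hp2).1)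
    have hLc : stN.L.card = st.L.card + k := by
      have h1 : stN.L.card = st.L.card + ({w} ×ˢ (Finset.univ : Finset (Fin k))).card :=
        Finset.card_union_of_disjoint hdisj
      rw [h1, Finset.card_product, Finset.card_singleton, Finset.card_univ, Fintype.card_fin,
        one_mul]
    have hmeasN : meas stN ≤ meas st + k * k := by
      have h1 : meas stN = ∑ p ∈ st.L, (block stN p.1 p.2).card +
          ∑ p ∈ ({w} ×ˢ (Finset.univ : Finset (Fin k))), (block stN p.1 p.2).card := by
        have : meas stN = ∑ p ∈ L', (block stN p.1 p.2).card := rfl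
        rw [this, hL', Finset.sum_union hdisj]
      have h2 : ∑ p ∈ st.L, (block stN p.1 p.2).card = meas st := by
        refine Finset.sum_congr rfl ?_
        rintro ⟨pw, pj⟩ hp
        have hne1 : pw ≠ w := hPne pw (inv.hLP (pw, pj) hp)
        have hbeq : block stN pw pj = block st pw pj := by
          rw [block, block]
          refine Finset.filter_congr ?_
          intro j' _
          show endv' pw j' = endv' pw pj ↔ st.endv pw j' = st.endv pw pj
          rw [heold pw j' hne1, heold pw pj hne1]
        rw [hbeq]
      have h3 : ∑ p ∈ ({w} ×ˢ (Finset.univ : Finset (Fin k))), (block stN p.1 p.2).card ≤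
          k * k := by
        calc ∑ p ∈ ({w} ×ˢ (Finset.univ : Finset (Fin k))), (block stN p.1 p.2).card
            ≤ ∑ _p ∈ ({w} ×ˢ (Finset.univ : Finset (Fin k))), k := by
              refine Finset.sum_le_sum ?_
              intro p _
              calc (block stN p.1 p.2).card ≤ (Finset.univ : Finset (Fin k)).card :=
                    Finset.card_le_card (Finset.filter_subset _ _)
                _ = k := by rw [Finset.card_univ, Fintype.card_fin]
          _ = k * k := by
              rw [Finset.sum_const, Finset.card_product, Finset.card_singleton,
                Finset.card_univ, Fintype.card_fin, one_mul, smul_eq_mul]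
        
      omega
    have hS'card : stN.S.card ≤ st.S.card + (k+1) := by
      calc S'.card ≤ st.S.card + (insert x (Finset.image (fun j => pmPartner (hMc j) x)
            Finset.univ)).card := Finset.card_union_le _ _
        _ ≤ st.S.card + ((Finset.image (fun j => pmPartner (hMc j) x) Finset.univ).card + 1) :=
            Nat.add_le_add_left (Finset.card_insert_le _ _) _
        _ ≤ st.S.card + (Finset.univ.card + 1) :=
            Nat.add_le_add_left (Nat.add_le_add_right Finset.card_image_le _) _
        _ = st.S.card + (k+1) := by rw [Finset.card_univ, Fintype.card_fin]
    have hPlt : st.P.card < Fintype.card W := by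
      have h1 : st.P ⊂ Finset.univ := Finset.ssubset_univ_iff.2 (by
        intro hcon
        exact hw (hcon ▸ Finset.mem_univ w))
      have := Finset.card_lt_card h1
      rwa [Finset.card_univ] at this
    have hXY : (k*k+2*k+1) * (Fintype.card W - (st.P.card + 1)) + (k*k+2*k+1) =
        (k*k+2*k+1) * (Fintype.card W - st.P.card) := by
      have h1 : Fintype.card W - (st.P.card+1) + 1 = Fintype.card W - st.P.card := by omega
      calc (k*k+2*k+1) * (Fintype.card W - (st.P.card + 1)) + (k*k+2*k+1)
          = (k*k+2*k+1) * ((Fintype.card W - (st.P.card + 1)) + 1) := by ring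
        _ = (k*k+2*k+1) * (Fintype.card W - st.P.card) := by rw [h1]
    have hpotN : pot stN = (k*k+2*k+1) * (Fintype.card W - (st.P.card + 1)) + meas stN +
        2 * (st.L.card + k) := by
      have h0 : pot stN = (k*k+2*k+1) * (Fintype.card W - stN.P.card) + meas stN +
          2 * stN.L.card := rfl
      rw [h0, hPc, hLc]
    have hpotS : pot st = (k*k+2*k+1) * (Fintype.card W - st.P.card) + meas st +
        2 * st.L.card := rfl
    have hple : pot stN + 1 ≤ pot st := by
      rw [hpotN, hpotS]
      omega
    have hmul : (k+2) * pot stN + (k+2) ≤ (k+2) * pot st := by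
      have h := Nat.mul_le_mul_left (k+2) hple
      rw [Nat.mul_add, Nat.mul_one] at h
      exact h
    have hcardle := inv.hCard
    omega

end Steps4

section Phases

variable {Mc : Fin k → Set (Sym2 V)} {A : Fin k → Set (Sym2 W)}
variable {hMc : IsConfig Mc} {hA : IsConfig A}

lemma phase_init
    (hEx : ∀ i : Fin k, (k+1) * SB k (Fintype.card W) + 1 ≤
      {e ∈ Mc i | ∀ j : Fin k, j ≠ i → e ∉ Mc j}.ncard)
    (hk : 0 < k) (v0 : V) (Q : Finset W) :
    ∃ st : St k W V, Inv Mc A hMc hA st ∧ st.P = Q ∧ st.L = st.P ×ˢ Finset.univ := by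
  classical
  induction Q using Finset.induction_on with
  | empty =>
    refine ⟨⟨∅, ∅, ∅, fun _ => v0, fun _ _ => v0, fun _ _ => ∅, ∅⟩, ?_, rfl, by simp⟩
    have hval : ∀ P : Prop, (∀ p : W × Fin k, p ∈ (∅ : Finset (W × Fin k)) → P) := by
      intro P p hp
      exact absurd hp (Finset.notMem_empty _)
    constructor
    case hM =>
      constructor
      · intro e he; simp at he
      · intro e he; simp at he
    case hAvail => intro e he; simp at he
    case hAcy =>
      intro l
      have h1 : (↑(∅ : Finset (Sym2 V)) : Set (Sym2 V)) ∪ Mc l = Mc l := by simp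
      rw [h1]
      exact matching_acyclic_s11 (hMc l).1.2
    case hCov =>
      rintro v ⟨e, he, -⟩
      simp at he
    case hRootCov => intro w hw; exact absurd hw (Finset.notMem_empty _)
    case hRootS => intro w hw; exact absurd hw (Finset.notMem_empty _)
    case hRootInj => intro w hw; exact absurd hw (Finset.notMem_empty _)
    case hLP => intro p hp; exact absurd hp (Finset.notMem_empty _)
    case hEndS => intro p hp; exact absurd hp (Finset.notMem_empty _)
    case hEndCov => intro p hp; exact absurd hp (Finset.notMem_empty _)
    case hD => intro p hp; exact absurd hp (Finset.notMem_empty _)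
    case hD2 => intro p hp; exact absurd hp (Finset.notMem_empty _)
    case hTend => intro p hp; exact absurd hp (Finset.notMem_empty _)
    case hTS => intro p hp; exact absurd hp (Finset.notMem_empty _)
    case hC1 => intro p hp; exact absurd hp (Finset.notMem_empty _)
    case hC2 => intro p hp; exact absurd hp (Finset.notMem_empty _)
    case hU => intro p hp; exact absurd hp (Finset.notMem_empty _)
    case hR => intro p hp; exact absurd hp (Finset.notMem_empty _)
    case hDone => intro w hw; exact absurd hw (Finset.notMem_empty _)
    case hCard =>
      have h1 : meas (⟨∅, ∅, ∅, fun _ => v0, fun _ _ => v0, fun _ _ => ∅, ∅⟩ : St k W V)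
          = 0 := rfl
      have h2 : pot (⟨∅, ∅, ∅, fun _ => v0, fun _ _ => v0, fun _ _ => ∅, ∅⟩ : St k W V)
          = (k*k+2*k+1) * (Fintype.card W - 0) + 0 + 2 * 0 := by
        rw [← h1]
        rfl
      rw [h2]
      have h3 : (∅ : Finset V).card = 0 := Finset.card_empty
      rw [h3]
      have h4 : (k*k+2*k+1) * (Fintype.card W - 0) + 0 + 2 * 0 =
          (k*k+2*k+1) * Fintype.card W := by
        rw [Nat.sub_zero]
        omega
      rw [h4, SB]
      calc 0 + (k+2) * ((k*k+2*k+1) * Fintype.card W)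
          = (k+2) * ((k*k+2*k+1) * Fintype.card W) := by omega
        _ ≤ (k+2) * ((k*k+2*k+1) * Fintype.card W + 1) :=
            Nat.mul_le_mul_left _ (Nat.le_succ _)
  | @insert a s ha ih =>
    obtain ⟨st, inv, hP, hFull⟩ := ih
    have hna : a ∉ st.P := by rw [hP]; exact ha
    obtain ⟨st', inv', hP', hFull'⟩ := step_init hEx hk inv hFull hna
    exact ⟨st', inv', by rw [hP', hP], hFull'⟩

lemma phase_A
    (hEx : ∀ i : Fin k, (k+1) * SB k (Fintype.card W) + 1 ≤
      {e ∈ Mc i | ∀ j : Fin k, j ≠ i → e ∉ Mc j}.ncard) :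
    ∀ n (st : St k W V), Inv Mc A hMc hA st → st.L = st.P ×ˢ Finset.univ → meas st ≤ n →
    ∃ st', Inv Mc A hMc hA st' ∧ st'.P = st.P ∧ st'.L = st.L ∧
      (∀ p ∈ st'.L, ∀ q ∈ st'.L, p.1 = q.1 →
        st'.endv p.1 p.2 = st'.endv q.1 q.2 → p.2 = q.2) := by
  intro n
  induction n with
  | zero =>
    intro st inv hFull hm
    by_cases hex : ∃ p ∈ st.L, 2 ≤ (block st p.1 p.2).card
    · obtain ⟨⟨w, i⟩, hpL, hb⟩ := hex
      obtain ⟨st1, inv1, hP1, hroot1, hL1, hlt⟩ := step_process hEx inv hFull hpL hb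
      omega
    · push_neg at hex
      refine ⟨st, inv, rfl, rfl, ?_⟩
      intro p hp q hq h1 h2
      by_contra hne
      have hq2 : q.2 ∈ block st p.1 p.2 := by
        rw [block, Finset.mem_filter]
        refine ⟨Finset.mem_univ _, ?_⟩
        rw [← h1] at h2
        exact h2.symm
      have hp2 : p.2 ∈ block st p.1 p.2 := by
        rw [block, Finset.mem_filter]
        exact ⟨Finset.mem_univ _, rfl⟩
      have hsub : ({p.2, q.2} : Finset (Fin k)) ⊆ block st p.1 p.2 := by
        intro j hj
        rcases Finset.mem_insert.1 hj with rfl | hj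
        · exact hp2
        · rw [Finset.mem_singleton] at hj
          rw [hj]
          exact hq2
      have hcard2 : ({p.2, q.2} : Finset (Fin k)).card = 2 := by
        rw [Finset.card_insert_of_notMem (by simp [hne]), Finset.card_singleton]
      have := Finset.card_le_card hsub
      have := hex p hp
      omega
  | succ n ih =>
    intro st inv hFull hm
    by_cases hex : ∃ p ∈ st.L, 2 ≤ (block st p.1 p.2).card
    · obtain ⟨⟨w, i⟩, hpL, hb⟩ := hex
      obtain ⟨st1, inv1, hP1, hroot1, hL1, hlt⟩ := step_process hEx inv hFull hpL hb
      have hFull1 : st1.L = st1.P ×ˢ Finset.univ := by rw [hL1, hP1, hFull]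
      obtain ⟨st', inv', hP', hL', hSing⟩ := ih st1 inv1 hFull1 (by omega)
      exact ⟨st', inv', by rw [hP', hP1], by rw [hL', hL1], hSing⟩
    · push_neg at hex
      refine ⟨st, inv, rfl, rfl, ?_⟩
      intro p hp q hq h1 h2
      by_contra hne
      have hq2 : q.2 ∈ block st p.1 p.2 := by
        rw [block, Finset.mem_filter]
        refine ⟨Finset.mem_univ _, ?_⟩
        rw [← h1] at h2
        exact h2.symm
      have hp2 : p.2 ∈ block st p.1 p.2 := by
        rw [block, Finset.mem_filter]
        exact ⟨Finset.mem_univ _, rfl⟩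
      have hsub : ({p.2, q.2} : Finset (Fin k)) ⊆ block st p.1 p.2 := by
        intro j hj
        rcases Finset.mem_insert.1 hj with rfl | hj
        · exact hp2
        · rw [Finset.mem_singleton] at hj
          rw [hj]
          exact hq2
      have hcard2 : ({p.2, q.2} : Finset (Fin k)).card = 2 := by
        rw [Finset.card_insert_of_notMem (by simp [hne]), Finset.card_singleton]
      have := Finset.card_le_card hsub
      have := hex p hp
      omega

lemma phase_B
    (hEx : ∀ i : Fin k, (k+1) * SB k (Fintype.card W) + 1 ≤
      {e ∈ Mc i | ∀ j : Fin k, j ≠ i → e ∉ Mc j}.ncard) :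
    ∀ n (st : St k W V), Inv Mc A hMc hA st → st.P = Finset.univ →
    (∀ p ∈ st.L, ∀ q ∈ st.L, p.1 = q.1 →
      st.endv p.1 p.2 = st.endv q.1 q.2 → p.2 = q.2) →
    (∀ p ∈ st.L, ((pmPartner (hA p.2) p.1, p.2) : W × Fin k) ∈ st.L) →
    st.L.card ≤ n →
    ∃ st', Inv Mc A hMc hA st' ∧ st'.P = Finset.univ ∧ st'.L = ∅ := by
  intro n
  induction n with
  | zero =>
    intro st inv hPu hSing hLsym hcard
    refine ⟨st, inv, hPu, ?_⟩
    rw [← Finset.card_eq_zero]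
    omega
  | succ n ih =>
    intro st inv hPu hSing hLsym hcard
    by_cases hL : st.L = ∅
    · exact ⟨st, inv, hPu, hL⟩
    · obtain ⟨⟨w, i⟩, hwi⟩ := Finset.nonempty_of_ne_empty hL
      obtain ⟨st1, inv1, hP1, hroot1, hendv1, hL1⟩ :=
        step_junction hEx inv hSing hLsym hPu hwi
      have hw'L : ((pmPartner (hA i) w, i) : W × Fin k) ∈ st.L := hLsym (w, i) hwi
      have hww' : ((w, i) : W × Fin k) ≠ (pmPartner (hA i) w, i) := by
        intro h
        exact pmPartner_ne (hA i) w (congrArg Prod.fst h).symm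
      have hw'm : ((pmPartner (hA i) w, i) : W × Fin k) ∈ st.L.erase (w, i) :=
        Finset.mem_erase.2 ⟨hww'.symm, hw'L⟩
      have hc1 : st1.L.card ≤ n := by
        rw [hL1]
        have h1 : ((st.L.erase (w, i)).erase (pmPartner (hA i) w, i)).card ≤
            (st.L.erase (w, i)).card := Finset.card_erase_le
        have h2 : (st.L.erase (w, i)).card = st.L.card - 1 := Finset.card_erase_of_mem hwi
        have h3 : 0 < st.L.card := Finset.card_pos.2 ⟨_, hwi⟩
        omega
      have hsub1 : ∀ p : W × Fin k, p ∈ st1.L → p ∈ st.L := by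
        intro p hp
        rw [hL1] at hp
        exact Finset.mem_of_mem_erase (Finset.mem_of_mem_erase hp)
      have hSing1 : ∀ p ∈ st1.L, ∀ q ∈ st1.L, p.1 = q.1 →
          st1.endv p.1 p.2 = st1.endv q.1 q.2 → p.2 = q.2 := by
        intro p hp q hq h1 h2
        rw [hendv1] at h2
        exact hSing p (hsub1 p hp) q (hsub1 q hq) h1 h2
      have hLsym1 : ∀ p ∈ st1.L, ((pmPartner (hA p.2) p.1, p.2) : W × Fin k) ∈ st1.L := by
        intro p hp
        have hpL := hsub1 p hp
        have hmem := hLsym p hpL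
        rw [hL1] at hp ⊢
        have hne1 : p ≠ (w, i) := Finset.ne_of_mem_erase (Finset.mem_of_mem_erase hp)
        have hne2 : p ≠ (pmPartner (hA i) w, i) := Finset.ne_of_mem_erase hp
        refine Finset.mem_erase.2 ⟨?_, Finset.mem_erase.2 ⟨?_, hmem⟩⟩
        · intro hcon
          have ha : pmPartner (hA p.2) p.1 = pmPartner (hA i) w := congrArg Prod.fst hcon
          have hb : p.2 = i := congrArg Prod.snd hcon
          refine hne1 ?_
          have hc : p.1 = w := by
            have h5 : pmPartner (hA p.2) (pmPartner (hA p.2) p.1) = p.1 :=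
              pmPartner_invol (hA p.2) p.1
            rw [ha, hb] at h5
            rw [← h5, pmPartner_invol]
          rw [Prod.ext_iff]
          exact ⟨hc, hb⟩
        · intro hcon
          have ha : pmPartner (hA p.2) p.1 = w := congrArg Prod.fst hcon
          have hb : p.2 = i := congrArg Prod.snd hcon
          refine hne2 ?_
          have hc : p.1 = pmPartner (hA i) w := by
            have h5 : pmPartner (hA p.2) (pmPartner (hA p.2) p.1) = p.1 :=
              pmPartner_invol (hA p.2) p.1
            rw [ha, hb] at h5
            exact h5.symm
          rw [Prod.ext_iff]
          exact ⟨hc, hb⟩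
      exact ih st1 inv1 (by rw [hP1, hPu]) hSing1 hLsym1 hc1

end Phases

/-- For all `k, m ≥ 2` there is `C = C(k,m)` such that: for every
`k`-configuration `A` of order `m` and every `k`-configuration `M` having, for each colour,
at least `C` edges of that colour only, there is a red matching of `M` whose reduced
configuration contains (a copy of) `A`. -/
theorem find_absorber (k m : ℕ) (hk : 2 ≤ k) (hm : 2 ≤ m) :
    ∃ C : ℕ, ∀ (W : Type), Nat.card W = m →
      ∀ A : Fin k → Set (Sym2 W), IsConfig A →
      ∀ (V : Type) [Fintype V], ∀ Mc : Fin k → Set (Sym2 V), IsConfig Mc →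
        (∀ i : Fin k, C ≤ {e ∈ Mc i | ∀ j : Fin k, j ≠ i → e ∉ Mc j}.ncard) →
        ∃ M : Set (Sym2 V), IsRedMatching Mc M ∧
          ∃ φ : W → V, Function.Injective φ ∧ (∀ w : W, φ w ∉ covered M) ∧
            ∀ (i : Fin k) (u v : W), s(u, v) ∈ A i →
              s(φ u, φ v) ∈ reducedColour (Mc i) M := by
  classical
  refine ⟨(k+1) * SB k m + 1, ?_⟩
  intro W hW A hA V _inst Mc hMc hEx0
  haveI : Finite W := Nat.finite_of_card_ne_zero (by omega)
  haveI : Fintype W := Fintype.ofFinite W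
  have hcW : Fintype.card W = m := by rw [← Nat.card_eq_fintype_card, hW]
  have hEx : ∀ i : Fin k, (k+1) * SB k (Fintype.card W) + 1 ≤
      {e ∈ Mc i | ∀ j : Fin k, j ≠ i → e ∉ Mc j}.ncard := by
    intro i
    rw [hcW]
    exact hEx0 i
  have hk0 : 0 < k := by omega
  have hVne : Nonempty V := by
    have h1 := hEx ⟨0, hk0⟩
    have h2 : {e ∈ Mc ⟨0, hk0⟩ | ∀ j : Fin k, j ≠ ⟨0, hk0⟩ → e ∉ Mc j}.Nonempty := by
      apply Set.nonempty_of_ncard_ne_zero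
      omega
    obtain ⟨e, -⟩ := h2
    induction e with
    | _ a b => exact ⟨a⟩
  obtain ⟨v0⟩ := hVne
  obtain ⟨st0, inv0, hP0, hL0⟩ := phase_init (hMc := hMc) (hA := hA) hEx hk0 v0 Finset.univ
  obtain ⟨st1, inv1, hP1, hL1, hSing⟩ := phase_A hEx (meas st0) st0 inv0 hL0 le_rfl
  have hP1u : st1.P = Finset.univ := by rw [hP1, hP0]
  have hLsym : ∀ p ∈ st1.L, ((pmPartner (hA p.2) p.1, p.2) : W × Fin k) ∈ st1.L := by
    intro p hp
    rw [hL1, hL0, hP0]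
    exact Finset.mem_product.2 ⟨Finset.mem_univ _, Finset.mem_univ _⟩
  obtain ⟨stF, invF, hPF, hLF⟩ := phase_B hEx st1.L.card st1 inv1 hP1u hSing hLsym le_rfl
  have hmemP : ∀ w : W, w ∈ stF.P := by
    intro w
    rw [hPF]
    exact Finset.mem_univ w
  refine ⟨(↑stF.M : Set (Sym2 V)), ⟨invF.hM, invF.hAvail, invF.hAcy⟩, stF.root, ?_, ?_, ?_⟩
  · intro a b h
    exact invF.hRootInj a (hmemP a) b (hmemP b) h
  · intro w
    exact invF.hRootCov w (hmemP w)
  · intro i u v huv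
    have hv : v = pmPartner (hA i) u := pmPartner_eq (hA i) huv
    have hreach := invF.hDone u (hmemP u) i (by rw [hLF]; exact Finset.notMem_empty _)
    have huvne : u ≠ v := by
      intro h
      exact (hA i).1.1 _ huv (by rw [h]; exact Sym2.mk_isDiag_iff.2 rfl)
    refine ⟨stF.root u, stF.root v, rfl, ?_, invF.hRootCov u (hmemP u),
      invF.hRootCov v (hmemP v), ?_⟩
    · intro h
      exact huvne (invF.hRootInj u (hmemP u) v (hmemP v) h)
    · rw [Set.union_comm, hv]
      exact hreach

end Kotzig
end
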